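/- arXiv:2011.03865 — 7 statements merged into one kernel-verified Lean document; each statement's English description precedes it below -/
import Mathlib

section
/- Let n ≥ 1 and let A be an n×n real matrix such that every row sum of A is zero and every column sum of A is zero. Then all cofactors of A are equal: for all i, j, i', j' ∈ [n], (−1)^{i+j} det A^{(i,j)} = (−1)^{i'+j'} det A^{(i',j')}. -/
/-! A matrix all of whose rows sum to zero is singular, since adding up its columns gives a zero
column. By multilinearity, if the rows of `A` sum to zero then `det (A.updateRow i u)` depends
only on `∑ j, u j`; for `u = Pi.single j 1` this says that every column of the adjugate is
constant. Transposing, so is every row, and the cofactors are the entries of the adjugate. -/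

open Matrix

namespace Matrix

variable {n R : Type*} [Fintype n] [DecidableEq n] [CommRing R]

theorem det_eq_zero_of_forall_row_sum_eq_zero [Nonempty n] {A : Matrix n n R}
    (hA : ∀ i, ∑ j, A i j = 0) : A.det = 0 := by
  obtain ⟨j⟩ := ‹Nonempty n›
  calc A.det = (1 : n → R) j • A.det := by simp
    _ = (A.updateCol j fun k ↦ ∑ i, (1 : n → R) i • A k i).det := (det_updateCol_sum A j 1).symm
    _ = 0 := det_eq_zero_of_column_eq_zero j (by simp [hA])

theorem det_updateRow_eq_of_sum_eq {A : Matrix n n R} (hA : ∀ i, ∑ j, A i j = 0) (i : n)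
    {u v : n → R} (huv : ∑ j, u j = ∑ j, v j) :
    (A.updateRow i u).det = (A.updateRow i v).det := by
  have : Nonempty n := ⟨i⟩
  have hsub : (A.updateRow i (u - v)).det = 0 := by
    refine det_eq_zero_of_forall_row_sum_eq_zero fun k ↦ ?_
    rcases eq_or_ne k i with rfl | hk
    · simp [Finset.sum_sub_distrib, huv]
    · simp [updateRow_ne hk, hA k]
  simpa [hsub] using det_updateRow_add A i (u - v) v

theorem adjugate_apply_eq_of_forall_row_sum_eq_zero {A : Matrix n n R}
    (hA : ∀ i, ∑ j, A i j = 0) (j j' i : n) : A.adjugate j i = A.adjugate j' i := by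
  rw [adjugate_apply, adjugate_apply]
  exact det_updateRow_eq_of_sum_eq hA i (by simp)

theorem adjugate_apply_eq_of_forall_col_sum_eq_zero {A : Matrix n n R}
    (hA : ∀ j, ∑ i, A i j = 0) (j i i' : n) : A.adjugate j i = A.adjugate j i' := by
  simpa [← adjugate_transpose] using
    adjugate_apply_eq_of_forall_row_sum_eq_zero (A := Aᵀ) hA i i' j

end Matrix

/-- **Zero-line-sum matrices have equal cofactors.**
If every row sum and every column sum of an `(n+1) × (n+1)` real matrix `A` is zero,
then all cofactors of `A` agree:
`(-1)^(i+j) det A^{(i,j)} = (-1)^(i'+j') det A^{(i',j')}`,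
where `A^{(i,j)}` is obtained from `A` by deleting row `i` and column `j`. -/
theorem zls_equal_cofactors (n : ℕ) (A : Matrix (Fin (n + 1)) (Fin (n + 1)) ℝ)
    (hrow : ∀ i, ∑ j, A i j = 0) (hcol : ∀ j, ∑ i, A i j = 0)
    (i j i' j' : Fin (n + 1)) :
    (-1 : ℝ) ^ ((i : ℕ) + (j : ℕ)) * (A.submatrix i.succAbove j.succAbove).det
      = (-1 : ℝ) ^ ((i' : ℕ) + (j' : ℕ)) * (A.submatrix i'.succAbove j'.succAbove).det := by
  rw [← adjugate_fin_succ_eq_det_submatrix, ← adjugate_fin_succ_eq_det_submatrix]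
  calc A.adjugate j i = A.adjugate j' i := adjugate_apply_eq_of_forall_row_sum_eq_zero hrow j j' i
    _ = A.adjugate j' i' := adjugate_apply_eq_of_forall_col_sum_eq_zero hcol j' i i'
end

section
/- Let n ≥ 2 and let [x_{i,j}] be an n×n matrix of real numbers. Define the n×n matrix L by L_{i,i} = ∑_{k≠i} x_{i,k} and L_{i,j} = −x_{i,j} for i ≠ j, and for r ∈ [n] let L^{(r)} be the submatrix of L obtained by deleting the row and column indexed by r. Then for every r ∈ [n], det L^{(r)} = ∑_{T ∈ 𝒯_r(n)} ∏_{(u,v)∈T} x_{u,v} (Tutte's directed matrix-tree theorem). -/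
open Finset
open scoped Classical

/-- `T` is an arborescence on vertex set `Fin n` rooted at `r`: a set of directed
edges such that the root has no outgoing edge, every vertex `u ≠ r` has exactly one
outgoing edge in `T`, and from every vertex there is a directed path in `T` to `r`
(equivalently, `T` is a spanning tree with every edge oriented toward `r`). -/
def IsArborescence (n : ℕ) (r : Fin n) (T : Finset (Fin n × Fin n)) : Prop :=
  (∀ e ∈ T, e.1 ≠ r) ∧
  (∀ u : Fin n, u ≠ r → ∃! v : Fin n, (u, v) ∈ T) ∧
  (∀ u : Fin n, Relation.ReflTransGen (fun a b => (a, b) ∈ T) u r)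

section TutteAux
open Polynomial Matrix

lemma det_one_sub_of_nilpotent {ι : Type*} [Fintype ι] [DecidableEq ι]
    (P : Matrix ι ι ℝ) (hP : IsNilpotent P) : (1 - P).det = 1 := by
  have h := Matrix.isNilpotent_charpoly_sub_pow_of_isNilpotent hP
  have hc : P.charpoly = X ^ (Fintype.card ι) := sub_eq_zero.mp h.eq_zero
  have hmap : (charmatrix P).map (evalRingHom (1:ℝ)) = 1 - P := by
    ext i j
    by_cases hij : i = j
    · subst hij; simp [charmatrix_apply_eq]
    · simp [charmatrix_apply_ne _ _ _ hij, Matrix.one_apply_ne hij, Matrix.sub_apply]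
  calc (1 - P).det = ((charmatrix P).map (evalRingHom (1:ℝ))).det := by rw [hmap]
    _ = evalRingHom (1:ℝ) (charmatrix P).det :=
        (RingHom.map_det (evalRingHom (1:ℝ)) (charmatrix P)).symm
    _ = eval 1 P.charpoly := rfl
    _ = 1 := by rw [hc]; simp

/-- extension of `f` to all of `Fin n`, fixing `r`. -/
def fext (n : ℕ) (r : Fin n) (f : {i : Fin n // i ≠ r} → Fin n) : Fin n → Fin n :=
  fun a => if h : a = r then r else f ⟨a, h⟩

/-- the 0/1 matrix of `f`. -/
def Pmat (n : ℕ) (r : Fin n) (f : {i : Fin n // i ≠ r} → Fin n) :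
    Matrix {i : Fin n // i ≠ r} {i : Fin n // i ≠ r} ℝ :=
  Matrix.of fun i j => if (j : Fin n) = f i then 1 else 0

/-- `I - P f`. -/
def Mmat (n : ℕ) (r : Fin n) (f : {i : Fin n // i ≠ r} → Fin n) :
    Matrix {i : Fin n // i ≠ r} {i : Fin n // i ≠ r} ℝ :=
  Matrix.of fun i j => (if (j : Fin n) = (i : Fin n) then (1:ℝ) else 0) -
    (if (j : Fin n) = f i then 1 else 0)

/-- every vertex reaches `r` under iteration of `f`. -/
def Good (n : ℕ) (r : Fin n) (f : {i : Fin n // i ≠ r} → Fin n) : Prop :=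
  ∀ i : {i : Fin n // i ≠ r}, ∃ k, (fext n r f)^[k] (i : Fin n) = r

lemma Mmat_eq (n : ℕ) (r : Fin n) (f : {i : Fin n // i ≠ r} → Fin n) :
    Mmat n r f = 1 - Pmat n r f := by
  ext i j
  simp only [Mmat, Pmat, Matrix.sub_apply, Matrix.of_apply]
  congr 1
  rw [Matrix.one_apply]
  by_cases h : i = j
  · subst h; simp
  · rw [if_neg h, if_neg (fun hc => h (Subtype.ext hc.symm))]

lemma fext_apply (n : ℕ) (r : Fin n) (f : {i : Fin n // i ≠ r} → Fin n)
    (i : {i : Fin n // i ≠ r}) : fext n r f i = f i := dif_neg i.2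

lemma fext_fixed (n : ℕ) (r : Fin n) (f : {i : Fin n // i ≠ r} → Fin n) :
    fext n r f r = r := dif_pos rfl

lemma fext_iter_r (n : ℕ) (r : Fin n) (f : {i : Fin n // i ≠ r} → Fin n)
    {a : Fin n} {k m : ℕ} (h : (fext n r f)^[k] a = r) (hkm : k ≤ m) :
    (fext n r f)^[m] a = r := by
  obtain ⟨d, rfl⟩ := Nat.exists_eq_add_of_le hkm
  rw [Nat.add_comm, Function.iterate_add_apply, h,
    Function.iterate_fixed (fext_fixed n r f)]

lemma Pmat_row_zero (n : ℕ) (r : Fin n) (f : {i : Fin n // i ≠ r} → Fin n) :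
    ∀ (k : ℕ) (i : {i : Fin n // i ≠ r}), (fext n r f)^[k] (i : Fin n) = r →
      ∀ j, ((Pmat n r f) ^ k) i j = 0 := by
  intro k
  induction k with
  | zero => intro i hi; exact absurd hi i.2
  | succ k ih =>
    intro i hi j
    rw [pow_succ']
    rw [Matrix.mul_apply]
    by_cases h1 : f i = r
    · apply Finset.sum_eq_zero
      intro l _
      have : (l : Fin n) ≠ f i := fun hc => l.2 (hc.trans h1)
      simp [Pmat, this]
    · have hfi : (fext n r f)^[k] (f i) = r := by
        rw [← fext_apply n r f i, ← Function.iterate_succ_apply]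
        exact hi
      rw [Finset.sum_eq_single (⟨f i, h1⟩ : {i : Fin n // i ≠ r})]
      · have h2 : Pmat n r f i ⟨f i, h1⟩ = 1 := by simp [Pmat]
        rw [h2, one_mul]
        exact ih ⟨f i, h1⟩ hfi j
      · intro l _ hl
        have : (l : Fin n) ≠ f i := fun hc => hl (Subtype.ext hc)
        simp [Pmat, this]
      · intro h; exact absurd (Finset.mem_univ _) h

lemma Pmat_nilpotent (n : ℕ) (r : Fin n) (f : {i : Fin n // i ≠ r} → Fin n)
    (hg : Good n r f) : IsNilpotent (Pmat n r f) := by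
  refine ⟨Finset.univ.sup (fun i : {i : Fin n // i ≠ r} => Nat.find (hg i)), ?_⟩
  ext i j
  refine (Pmat_row_zero n r f _ i ?_ j).trans (by simp)
  exact fext_iter_r n r f (Nat.find_spec (hg i))
    (Finset.le_sup (f := fun i : {i : Fin n // i ≠ r} => Nat.find (hg i)) (Finset.mem_univ i))

lemma det_Mmat_good (n : ℕ) (r : Fin n) (f : {i : Fin n // i ≠ r} → Fin n)
    (hg : Good n r f) : (Mmat n r f).det = 1 := by
  rw [Mmat_eq]
  exact det_one_sub_of_nilpotent _ (Pmat_nilpotent n r f hg)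

lemma det_Mmat_bad (n : ℕ) (r : Fin n) (f : {i : Fin n // i ≠ r} → Fin n)
    (hg : ¬ Good n r f) : (Mmat n r f).det = 0 := by
  unfold Good at hg
  push_neg at hg
  obtain ⟨i₀, hbad⟩ := hg
  set F := fext n r f with hF
  obtain ⟨a, b, hab, heq⟩ := Fintype.exists_ne_map_eq_of_card_lt
    (fun k : Fin (n+1) => F^[(k : ℕ)] (i₀ : Fin n)) (by simp)
  wlog hlt : (a : ℕ) < (b : ℕ) generalizing a b
  · exact this b a hab.symm heq.symm
      (lt_of_le_of_ne (not_lt.mp hlt) (fun hc => hab (Fin.ext hc.symm)))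
  set c : Fin n := F^[(a : ℕ)] (i₀ : Fin n) with hc
  set p : ℕ := (b : ℕ) - (a : ℕ) with hp
  have hppos : 0 < p := Nat.sub_pos_of_lt hlt
  have hcyc : F^[p] c = c := by
    rw [hc, ← Function.iterate_add_apply, hp, Nat.sub_add_cancel hlt.le, ← heq]
  have hcyct : ∀ t, F^[t + p] c = F^[t] c := by
    intro t
    rw [Function.iterate_add_apply, hcyc]
  set C : Finset (Fin n) := (Finset.range p).image (fun t => F^[t] c) with hC
  have hcC : c ∈ C := Finset.mem_image.mpr ⟨0, Finset.mem_range.mpr hppos, rfl⟩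
  have hCr : ∀ u ∈ C, u ≠ r := by
    intro u hu
    obtain ⟨t, _, rfl⟩ := Finset.mem_image.mp hu
    rw [hc, ← Function.iterate_add_apply]
    exact hbad _
  have hmemC : ∀ u ∈ C, F u ∈ C := by
    intro u hu
    obtain ⟨t, ht, rfl⟩ := Finset.mem_image.mp hu
    rw [← Function.iterate_succ_apply' F t c]
    rcases eq_or_lt_of_le (Nat.succ_le_of_lt (Finset.mem_range.mp ht)) with h | h
    · rw [h, hcyc]; exact hcC
    · exact Finset.mem_image.mpr ⟨t + 1, Finset.mem_range.mpr h, rfl⟩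
  have hqmemC : ∀ (q : ℕ), ∀ u ∈ C, F^[q] u ∈ C := by
    intro q
    induction q with
    | zero => intro u hu; exact hu
    | succ q ih =>
      intro u hu
      rw [Function.iterate_succ_apply' F q u]
      exact hmemC _ (ih u hu)
  have hinv : ∀ u ∈ C, F^[p-1] (F u) = u := by
    intro u hu
    obtain ⟨t, _, rfl⟩ := Finset.mem_image.mp hu
    calc F^[p-1] (F (F^[t] c)) = F^[p-1] (F^[t+1] c) := by
          rw [← Function.iterate_succ_apply' F t c]
      _ = F^[(p-1)+(t+1)] c := (Function.iterate_add_apply F (p-1) (t+1) c).symm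
      _ = F^[t + p] c := by congr 1; omega
      _ = F^[t] c := hcyct t
  have hinv' : ∀ u ∈ C, F (F^[p-1] u) = u := by
    intro u hu
    obtain ⟨t, _, rfl⟩ := Finset.mem_image.mp hu
    calc F (F^[p-1] (F^[t] c)) = F (F^[(p-1)+t] c) := by
          rw [← Function.iterate_add_apply]
      _ = F^[((p-1)+t)+1] c := (Function.iterate_succ_apply' F ((p-1)+t) c).symm
      _ = F^[t + p] c := by congr 1; omega
      _ = F^[t] c := hcyct t
  set w : {i : Fin n // i ≠ r} → ℝ := fun i => if (i : Fin n) ∈ C then -1 else 0 with hw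
  have hsum : ∑ k, w k • (Mmat n r f) k = 0 := by
    funext j
    simp only [Finset.sum_apply, Pi.zero_apply, Pi.smul_apply, smul_eq_mul, hw]
    have step1 : ∀ k : {i : Fin n // i ≠ r},
        (if (k : Fin n) ∈ C then (-1:ℝ) else 0) * Mmat n r f k j
        = -(if (k : Fin n) ∈ C then Mmat n r f k j else 0) := by
      intro k; split <;> ring
    rw [Finset.sum_congr rfl (fun k _ => step1 k), Finset.sum_neg_distrib,
      ← Finset.sum_filter, neg_eq_zero]
    have hsplit : ∀ k ∈ Finset.univ.filter (fun k : {i : Fin n // i ≠ r} => (k : Fin n) ∈ C),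
        Mmat n r f k j = (if ((j : Fin n) = (k : Fin n)) then (1:ℝ) else 0)
          - (if ((j : Fin n) = f k) then (1:ℝ) else 0) := fun k _ => rfl
    rw [Finset.sum_congr rfl hsplit, Finset.sum_sub_distrib]
    have hS1 : ∑ k ∈ Finset.univ.filter (fun k : {i : Fin n // i ≠ r} => (k : Fin n) ∈ C),
        (if ((j : Fin n) = (k : Fin n)) then (1:ℝ) else 0)
        = if (j : Fin n) ∈ C then 1 else 0 := by
      simp only [Subtype.coe_inj, Finset.sum_ite_eq, Finset.mem_filter,
        Finset.mem_univ, true_and]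
    have hS2 : ∑ k ∈ Finset.univ.filter (fun k : {i : Fin n // i ≠ r} => (k : Fin n) ∈ C),
        (if ((j : Fin n) = f k) then (1:ℝ) else 0)
        = if (j : Fin n) ∈ C then 1 else 0 := by
      have t1 : ∑ k ∈ Finset.univ.filter (fun k : {i : Fin n // i ≠ r} => (k : Fin n) ∈ C),
          (if ((j : Fin n) = f k) then (1:ℝ) else 0)
          = ∑ u ∈ C, (if ((j : Fin n) = F u) then (1:ℝ) else 0) := by
        refine Finset.sum_nbij' (fun k => (k : Fin n))
          (fun u => if h : u ≠ r then ⟨u, h⟩ else i₀) ?_ ?_ ?_ ?_ ?_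
        · intro k hk; exact (Finset.mem_filter.mp hk).2
        · intro u hu
          rw [dif_pos (hCr u hu)]
          exact Finset.mem_filter.mpr ⟨Finset.mem_univ _, hu⟩
        · intro k hk; rw [dif_pos k.2]
        · intro u hu; rw [dif_pos (hCr u hu)]
        · intro k hk
          have : F (k : Fin n) = f k := dif_neg k.2
          rw [this]
      have t2 : ∑ u ∈ C, (if ((j : Fin n) = F u) then (1:ℝ) else 0)
          = ∑ u ∈ C, (if ((j : Fin n) = u) then (1:ℝ) else 0) := by
        refine Finset.sum_nbij' F (F^[p-1]) hmemC (hqmemC (p-1)) hinv ?_ ?_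
        · intro u hu; exact hinv' u hu
        · intro u hu; rfl
      rw [t1, t2, Finset.sum_ite_eq]
    rw [hS1, hS2, sub_self]
  set c' : {i : Fin n // i ≠ r} := ⟨c, hCr c hcC⟩ with hc'
  have hdet := Matrix.det_updateRow_sum (Mmat n r f) c' w
  rw [hsum] at hdet
  have h0 : ((Mmat n r f).updateRow c' 0).det = 0 := by
    refine Matrix.det_eq_zero_of_row_eq_zero c' (fun x => ?_)
    rw [Matrix.updateRow_self]
    rfl
  rw [h0] at hdet
  have hwc : w c' = -1 := if_pos hcC
  rw [hwc] at hdet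
  have := hdet.symm
  rw [smul_eq_mul] at this
  linarith

lemma det_expand (n : ℕ) (r : Fin n) (x : Matrix (Fin n) (Fin n) ℝ)
    (L : Matrix (Fin n) (Fin n) ℝ)
    (hL : ∀ i j, L i j =
      if i = j then ∑ k ∈ univ.filter (fun k => k ≠ i), x i k else - x i j) :
    (L.submatrix (fun i : {i : Fin n // i ≠ r} => (i : Fin n))
        (fun j : {j : Fin n // j ≠ r} => (j : Fin n))).det
      = ∑ f ∈ Fintype.piFinset
          (fun i : {i : Fin n // i ≠ r} => univ.filter (fun k => k ≠ (i : Fin n))),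
          (∏ i : {i : Fin n // i ≠ r}, x i.1 (f i)) * (Mmat n r f).det := by
  set A : {i : Fin n // i ≠ r} → Finset (Fin n) :=
    fun i => univ.filter (fun k => k ≠ (i : Fin n)) with hA
  set g : ∀ _ : {i : Fin n // i ≠ r}, Fin n → ({j : Fin n // j ≠ r} → ℝ) :=
    fun i k => (fun j => x (i : Fin n) k *
      ((if (j : Fin n) = (i : Fin n) then (1:ℝ) else 0) -
       (if (j : Fin n) = k then (1:ℝ) else 0))) with hg
  have hM : (L.submatrix (fun i : {i : Fin n // i ≠ r} => (i : Fin n))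
      (fun j : {j : Fin n // j ≠ r} => (j : Fin n)))
      = fun i => ∑ k ∈ A i, g i k := by
    funext i j
    rw [Matrix.submatrix_apply, hL, Finset.sum_apply]
    by_cases h : (i : Fin n) = (j : Fin n)
    · rw [if_pos h]
      refine Finset.sum_congr rfl (fun k hk => ?_)
      have hk' : k ≠ (i : Fin n) := (Finset.mem_filter.mp hk).2
      have h1 : ((j : Fin n) = (i : Fin n)) := h.symm
      rw [hg]
      dsimp only
      rw [if_pos h1, if_neg (fun hc => hk' (hc.symm.trans h1))]
      ring
    · rw [if_neg h]
      rw [Finset.sum_eq_single (j : Fin n)]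
      · rw [hg]; dsimp only
        rw [if_neg (fun hc => h hc.symm), if_pos rfl]; ring
      · intro k hk hkj
        rw [hg]; dsimp only
        rw [if_neg (fun hc => h hc.symm), if_neg (fun hc => hkj hc.symm)]
        ring
      · intro hj
        exact absurd (Finset.mem_filter.mpr ⟨Finset.mem_univ _,
          (fun hc => h hc.symm : (j : Fin n) ≠ (i : Fin n))⟩) hj
  calc (L.submatrix (fun i : {i : Fin n // i ≠ r} => (i : Fin n))
        (fun j : {j : Fin n // j ≠ r} => (j : Fin n))).det
      = Matrix.detRowAlternating (fun i => ∑ k ∈ A i, g i k) := by rw [← hM]; rfl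
    _ = ∑ f ∈ Fintype.piFinset A,
          Matrix.detRowAlternating (fun i => g i (f i)) :=
        (Matrix.detRowAlternating.toMultilinearMap.map_sum_finset g A)
    _ = ∑ f ∈ Fintype.piFinset A, (∏ i : {i : Fin n // i ≠ r}, x i.1 (f i)) * (Mmat n r f).det := by
        refine Finset.sum_congr rfl (fun f _ => ?_)
        exact Matrix.det_mul_column (fun i : {i : Fin n // i ≠ r} => x i.1 (f i)) (Mmat n r f)

end TutteAux

/-- **Tutte's directed matrix-tree theorem.** Let `L` be the weighted directed
Laplacian of the weights `x`, i.e. `L i i = ∑_{k ≠ i} x i k` and `L i j = - x i j`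
for `i ≠ j`. Then for every root `r`, the principal minor of `L` obtained by
deleting the row and column indexed by `r` equals the generating sum
`∑_{T ∈ 𝒯_r(n)} ∏_{(u,v) ∈ T} x u v` over arborescences rooted at `r`. -/
theorem tutte_matrix_tree (n : ℕ) (hn : 2 ≤ n) (x : Matrix (Fin n) (Fin n) ℝ)
    (L : Matrix (Fin n) (Fin n) ℝ)
    (hL : ∀ i j, L i j =
      if i = j then ∑ k ∈ univ.filter (fun k => k ≠ i), x i k else - x i j)
    (r : Fin n) :
    (L.submatrix (fun i : {i : Fin n // i ≠ r} => (i : Fin n))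
        (fun j : {j : Fin n // j ≠ r} => (j : Fin n))).det
      = ∑ T ∈ univ.filter (fun T => IsArborescence n r T), ∏ e ∈ T, x e.1 e.2 := by
  classical
  rw [det_expand n r x L hL]
  set A : {i : Fin n // i ≠ r} → Finset (Fin n) :=
    fun i => univ.filter (fun k => k ≠ (i : Fin n)) with hA
  have split : ∀ f ∈ Fintype.piFinset A,
      (∏ i : {i : Fin n // i ≠ r}, x i.1 (f i)) * (Mmat n r f).det
      = if Good n r f then (∏ i : {i : Fin n // i ≠ r}, x i.1 (f i)) else 0 := by
    intro f _
    by_cases hg : Good n r f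
    · rw [det_Mmat_good n r f hg, if_pos hg, mul_one]
    · rw [det_Mmat_bad n r f hg, if_neg hg, mul_zero]
  rw [Finset.sum_congr rfl split, ← Finset.sum_filter]
  refine Finset.sum_bij
    (fun f _ => Finset.image
      (fun i : {i : Fin n // i ≠ r} => ((i : Fin n), f i)) Finset.univ)
    ?_ ?_ ?_ ?_
  · -- maps to arborescences
    intro f hf
    obtain ⟨hf1, hf2⟩ := Finset.mem_filter.mp hf
    refine Finset.mem_filter.mpr ⟨Finset.mem_univ _, ?_, ?_, ?_⟩
    · intro e he
      obtain ⟨i, _, rfl⟩ := Finset.mem_image.mp he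
      exact i.2
    · intro u hu
      refine ⟨f ⟨u, hu⟩, Finset.mem_image.mpr ⟨⟨u, hu⟩, Finset.mem_univ _, rfl⟩, ?_⟩
      intro v hv
      obtain ⟨i, _, hi⟩ := Finset.mem_image.mp hv
      have hi1 : (i : Fin n) = u := congrArg Prod.fst hi
      have hi2 : f i = v := congrArg Prod.snd hi
      rw [← hi2]
      exact congrArg f (Subtype.ext hi1)
    · -- reachability
      have key : ∀ (k : ℕ) (u : Fin n), (fext n r f)^[k] u = r →
          Relation.ReflTransGen (fun a b => (a, b) ∈ Finset.image
            (fun i : {i : Fin n // i ≠ r} => ((i : Fin n), f i)) Finset.univ) u r := by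
        intro k
        induction k with
        | zero => intro u hu; rw [Function.iterate_zero_apply] at hu; rw [hu]
        | succ k ih =>
          intro u hu
          by_cases h : u = r
          · rw [h]
          · refine Relation.ReflTransGen.head
              (Finset.mem_image.mpr ⟨⟨u, h⟩, Finset.mem_univ _, rfl⟩) (ih _ ?_)
            have h5 : (fext n r f)^[k] (fext n r f u) = r := by
              rw [← Function.iterate_succ_apply]; exact hu
            rwa [show fext n r f u = f ⟨u, h⟩ from dif_neg h] at h5
      intro u
      by_cases h : u = r
      · rw [h]
      · obtain ⟨k, hk⟩ := hf2 ⟨u, h⟩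
        exact key k u hk
  · -- injectivity
    intro f hf g hg heq
    funext i
    have heq' : Finset.image (fun i : {i : Fin n // i ≠ r} => ((i : Fin n), f i)) Finset.univ
        = Finset.image (fun i : {i : Fin n // i ≠ r} => ((i : Fin n), g i)) Finset.univ := heq
    have : ((i : Fin n), f i) ∈ Finset.image
        (fun i : {i : Fin n // i ≠ r} => ((i : Fin n), g i)) Finset.univ := by
      rw [← heq']
      exact Finset.mem_image.mpr ⟨i, Finset.mem_univ _, rfl⟩
    obtain ⟨i', _, hi⟩ := Finset.mem_image.mp this
    have h1 : (i' : Fin n) = (i : Fin n) := congrArg Prod.fst hi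
    have h2 : g i' = f i := congrArg Prod.snd hi
    rw [← h2, Subtype.ext h1]
  · -- surjectivity
    intro T hT
    obtain ⟨-, h1, h2, h3⟩ := Finset.mem_filter.mp hT
    set f : {i : Fin n // i ≠ r} → Fin n := fun i => (h2 (i : Fin n) i.2).choose with hfdef
    have hspec : ∀ i : {i : Fin n // i ≠ r}, ((i : Fin n), f i) ∈ T :=
      fun i => (h2 (i : Fin n) i.2).choose_spec.1
    have huniq : ∀ (u : Fin n) (hu : u ≠ r) (v : Fin n), (u, v) ∈ T → v = f ⟨u, hu⟩ :=
      fun u hu v hv => (h2 u hu).choose_spec.2 v hv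
    -- no self-loops
    have hnoloop : ∀ u : Fin n, u ≠ r → (u, u) ∈ T → False := by
      intro u hur huu
      refine Relation.ReflTransGen.head_induction_on (h3 u)
        (fun h _ => h rfl) ?_ hur huu
      intro a c hac hcr ih ha hloop
      have : c = a := by
        have e1 := huniq a ha c hac
        have e2 := huniq a ha a hloop
        exact e1.trans e2.symm
      subst this
      exact ih ha hloop
    have hfa : ∀ i : {i : Fin n // i ≠ r}, f i ∈ A i := by
      intro i
      refine Finset.mem_filter.mpr ⟨Finset.mem_univ _, fun hc => ?_⟩
      exact hnoloop (i : Fin n) i.2 (hc ▸ hspec i)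
    have hgood : Good n r f := by
      intro i
      have key : ∀ u : Fin n, Relation.ReflTransGen (fun a b => (a, b) ∈ T) u r →
          ∃ k, (fext n r f)^[k] u = r := by
        intro u hu
        refine Relation.ReflTransGen.head_induction_on hu ⟨0, rfl⟩ ?_
        intro a c hac hcr ih
        obtain ⟨k, hk⟩ := ih
        by_cases ha : a = r
        · exact ⟨0, ha⟩
        · refine ⟨k + 1, ?_⟩
          rw [Function.iterate_succ_apply, show fext n r f a = f ⟨a, ha⟩ from dif_neg ha,
            ← huniq a ha c hac, hk]
      exact key (i : Fin n) (h3 (i : Fin n))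
    refine ⟨f, Finset.mem_filter.mpr ⟨Fintype.mem_piFinset.mpr hfa, hgood⟩, ?_⟩
    ext e
    constructor
    · intro he
      obtain ⟨i, _, rfl⟩ := Finset.mem_image.mp he
      exact hspec i
    · intro he
      have her : e.1 ≠ r := h1 e he
      have : e.2 = f ⟨e.1, her⟩ := huniq e.1 her e.2 he
      refine Finset.mem_image.mpr ⟨⟨e.1, her⟩, Finset.mem_univ _, ?_⟩
      rw [← this]
  · -- products
    intro f hf
    rw [Finset.prod_image]
    intro i _ i' _ hii
    exact Subtype.ext (congrArg Prod.fst hii)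
end

section
/- Let n ≥ 2. For every doubly stochastic matrix x ∈ ℬ_n and every pair of roots r, r' ∈ [n], the arborescence generating sums agree: ∑_{T ∈ 𝒯_r(n)} ∏_{(u,v)∈T} x_{u,v} = ∑_{T ∈ 𝒯_{r'}(n)} ∏_{(u,v)∈T} x_{u,v}. -/
open Finset
open scoped Classical

open Matrix Equiv

lemma sum_fn_linear {n : ℕ} : ∃ φ : (Fin n → ℝ) →ₗ[ℝ] ℝ, ∀ v, φ v = ∑ i, v i := by
  refine ⟨∑ i, LinearMap.proj i, fun v => ?_⟩
  simp [LinearMap.sum_apply]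

lemma det_zero_of_rowsum {n : ℕ} (hn : 2 ≤ n) (L : Matrix (Fin n) (Fin n) ℝ)
    (h1 : ∀ i, ∑ j, L i j = 0) : L.det = 0 := by
  rw [← Matrix.exists_mulVec_eq_zero_iff]
  refine ⟨fun _ => 1, ?_, ?_⟩
  · intro h
    have : (1 : ℝ) = 0 := congrFun h ⟨0, by omega⟩
    norm_num at this
  · funext i
    simpa [Matrix.mulVec, dotProduct] using h1 i

lemma adj_mul_vec_zero {n : ℕ} (hn : 2 ≤ n) (L : Matrix (Fin n) (Fin n) ℝ)
    (h1 : ∀ i, ∑ j, L i j = 0) (h2 : ∀ j, ∑ i, L i j = 0)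
    (hrk : n - 1 ≤ L.rank) (v : Fin n → ℝ) (hv : ∑ i, v i = 0) :
    L.adjugate *ᵥ v = 0 := by
  obtain ⟨φ, hφ⟩ := sum_fn_linear (n := n)
  have hφsurj : Function.Surjective φ := by
    intro c
    refine ⟨fun i => if i = (⟨0, by omega⟩ : Fin n) then c else 0, ?_⟩
    rw [hφ]; simp
  have hWrank : Module.finrank ℝ (LinearMap.ker φ) = n - 1 := by
    have := LinearMap.finrank_range_add_finrank_ker φ
    rw [LinearMap.range_eq_top.2 hφsurj] at this
    simp [Module.finrank_pi] at this
    omega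
  have hle : LinearMap.range L.mulVecLin ≤ LinearMap.ker φ := by
    rintro - ⟨u, rfl⟩
    rw [LinearMap.mem_ker, hφ]
    simp only [Matrix.mulVecLin_apply, Matrix.mulVec, dotProduct]
    rw [Finset.sum_comm]
    simp_rw [← Finset.sum_mul]
    simp [h2]
  have heq : LinearMap.range L.mulVecLin = LinearMap.ker φ := by
    apply Submodule.eq_of_le_of_finrank_le hle
    rw [hWrank]; exact hrk
  have hvmem : v ∈ LinearMap.range L.mulVecLin := by
    rw [heq, LinearMap.mem_ker, hφ]; exact hv
  obtain ⟨u, hu⟩ := hvmem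
  rw [← hu]
  have : L.adjugate *ᵥ (L.mulVecLin u) = (L.adjugate * L) *ᵥ u := by
    simp [Matrix.mulVecLin_apply, Matrix.mulVec_mulVec]
  rw [this, Matrix.adjugate_mul, det_zero_of_rowsum hn L h1]
  simp

lemma adj_col_const {n : ℕ} (hn : 2 ≤ n) (L : Matrix (Fin n) (Fin n) ℝ)
    (h1 : ∀ i, ∑ j, L i j = 0) (h2 : ∀ j, ∑ i, L i j = 0)
    (hrk : n - 1 ≤ L.rank) (a b k : Fin n) :
    L.adjugate k a = L.adjugate k b := by
  have h := adj_mul_vec_zero hn L h1 h2 hrk (Pi.single a 1 - Pi.single b 1) (by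
    rcases eq_or_ne a b with rfl | hab
    · simp
    · simp [Pi.single_apply, Finset.sum_sub_distrib])
  have := congrFun h k
  rw [Matrix.mulVec_sub] at this
  simp only [Matrix.mulVec_single_one] at this
  have h2' : L.adjugate k a - L.adjugate k b = 0 := by
    simpa [Matrix.mulVec_single] using this
  linarith

lemma adj_diag_zero_of_lowrank {n : ℕ} (hn : 2 ≤ n) (L : Matrix (Fin n) (Fin n) ℝ)
    (hrk : L.rank ≤ n - 2) (r : Fin n) : L.adjugate r r = 0 := by
  -- columns of L excluding column r are linearly dependent
  set p := LinearMap.range L.mulVecLin with hp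
  have hcolmem : ∀ k : Fin n, (fun i => L i k) ∈ p := by
    intro k
    refine ⟨Pi.single k 1, ?_⟩
    simp [Matrix.mulVecLin_apply, Matrix.mulVec_single_one]; rfl
  have hnli : ¬ LinearIndependent ℝ (fun k : {k : Fin n // k ≠ r} => (fun i => L i k.1)) := by
    intro hli
    have hw : LinearIndependent ℝ (fun k : {k : Fin n // k ≠ r} =>
        (⟨(fun i => L i k.1), hcolmem k.1⟩ : p)) := by
      apply LinearIndependent.of_comp p.subtype
      exact hli
    have hcard := LinearIndependent.fintype_card_le_finrank hw
    have : Fintype.card {k : Fin n // k ≠ r} = n - 1 := by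
      simp [Fintype.card_subtype_compl]
    rw [this] at hcard
    have : L.rank = Module.finrank ℝ p := rfl
    omega
  rw [Fintype.not_linearIndependent_iff] at hnli
  obtain ⟨g, hg0, k0, hk0⟩ := hnli
  classical
  set c : Fin n → ℝ := fun i => if h : i = r then 0 else g ⟨i, h⟩ with hc
  rw [Matrix.adjugate_apply, ← Matrix.exists_mulVec_eq_zero_iff]
  refine ⟨c, ?_, ?_⟩
  · intro h
    apply hk0
    have := congrFun h k0.1
    simp only [hc, Pi.zero_apply] at this
    rw [dif_neg k0.2] at this
    simpa using this
  · funext i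
    rcases eq_or_ne i r with rfl | hir
    · simp only [Matrix.mulVec, dotProduct, Matrix.updateRow_self, Pi.single_apply, hc,
        Pi.zero_apply]
      apply Finset.sum_eq_zero
      intro j _
      split_ifs <;> simp
    · have hrow : (L.updateRow r (Pi.single r 1)) i = L i := Matrix.updateRow_ne hir
      have key : ∑ j, L i j * c j = ∑ k : {k : Fin n // k ≠ r}, g k * L i k.1 := by
        have h1 : ∑ j, L i j * c j = ∑ j ∈ Finset.univ.erase r, L i j * c j := by
          rw [← Finset.sum_erase_add _ _ (Finset.mem_univ r)]
          simp [hc]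
        rw [h1, Finset.sum_subtype (p := fun k => k ≠ r) (Finset.univ.erase r) (fun x => by simp) (fun j => L i j * c j)]
        apply Finset.sum_congr rfl
        intro k _
        simp [hc, k.2, mul_comm]
      have : (∑ k : {k : Fin n // k ≠ r}, g k • (fun i => L i k.1)) i = 0 := by
        rw [hg0]; rfl
      simp only [Finset.sum_apply, Pi.smul_apply, smul_eq_mul] at this
      simp only [Matrix.mulVec, dotProduct, hrow]
      rw [key, this]
      rfl

lemma adj_diag_eq {n : ℕ} (hn : 2 ≤ n) (L : Matrix (Fin n) (Fin n) ℝ)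
    (h1 : ∀ i, ∑ j, L i j = 0) (h2 : ∀ j, ∑ i, L i j = 0) (r r' : Fin n) :
    L.adjugate r r = L.adjugate r' r' := by
  rcases le_or_gt (n - 1) L.rank with hrk | hrk
  · -- full-ish rank case
    have hT1 : ∀ i, ∑ j, Lᵀ i j = 0 := fun i => h2 i
    have hT2 : ∀ j, ∑ i, Lᵀ i j = 0 := fun j => h1 j
    have hTrk : n - 1 ≤ Lᵀ.rank := by rwa [Matrix.rank_transpose]
    have hrowconst : ∀ a b k, L.adjugate a k = L.adjugate b k := by
      intro a b k
      have := adj_col_const hn Lᵀ hT1 hT2 hTrk a b k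
      rwa [← Matrix.adjugate_transpose, Matrix.transpose_apply, Matrix.transpose_apply] at this
    calc L.adjugate r r = L.adjugate r r' := adj_col_const hn L h1 h2 hrk r r' r
      _ = L.adjugate r' r' := hrowconst r r' r'
  · have h : L.rank ≤ n - 2 := by omega
    rw [adj_diag_zero_of_lowrank hn L h r, adj_diag_zero_of_lowrank hn L h r']

section Comb
variable {n : ℕ}

/-- `g` on `U`, identity elsewhere. -/
def extFun (g : Fin n → Fin n) (U : Finset (Fin n)) : Fin n → Fin n :=
  fun i => if i ∈ U then g i else i

lemma extFun_bijective {g : Fin n → Fin n} {U : Finset (Fin n)} (h : U.image g = U) :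
    Function.Bijective (extFun g U) := by
  have hmaps : ∀ i ∈ U, g i ∈ U := by
    intro i hi
    rw [← h]; exact Finset.mem_image_of_mem g hi
  have hinj : Set.InjOn g U := by
    have := Finset.card_image_iff.mp (by rw [h] : (U.image g).card = U.card)
    simpa using this
  rw [Fintype.bijective_iff_injective_and_card]
  refine ⟨?_, rfl⟩
  intro a b hab
  unfold extFun at hab
  by_cases ha : a ∈ U <;> by_cases hb : b ∈ U <;> simp only [ha, hb, if_true, if_false] at hab
  · exact hinj ha hb hab
  · exact absurd (hab ▸ hmaps a ha) hb
  · exact (ha (hab.symm ▸ hmaps b hb)).elim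
  · exact hab

noncomputable def permOn (g : Fin n → Fin n) (U : Finset (Fin n)) : Equiv.Perm (Fin n) :=
  if h : Function.Bijective (extFun g U) then Equiv.ofBijective _ h else 1

lemma permOn_apply {g : Fin n → Fin n} {U : Finset (Fin n)} (h : U.image g = U) (i : Fin n) :
    permOn g U i = if i ∈ U then g i else i := by
  rw [permOn, dif_pos (extFun_bijective h)]
  rfl

lemma permOn_empty (g : Fin n → Fin n) : permOn g ∅ = 1 := by
  ext i
  rw [permOn_apply (by simp)]
  simp

/-- invariant subsets of `univ.erase r` -/
noncomputable def InvSets (r : Fin n) (g : Fin n → Fin n) : Finset (Finset (Fin n)) :=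
  ((univ.erase r).powerset).filter (fun U => U.image g = U)

def Reach (r : Fin n) (g : Fin n → Fin n) : Prop :=
  ∀ u, Relation.ReflTransGen (fun a b => a ≠ r ∧ g a = b) u r

end Comb

section Comb2
variable {n : ℕ}

lemma iter_mem {g : Fin n → Fin n} {C : Finset (Fin n)} (hC : ∀ i ∈ C, g i ∈ C)
    {v : Fin n} (hv : v ∈ C) : ∀ m, g^[m] v ∈ C := by
  intro m
  induction m with
  | zero => simpa
  | succ k ih => rw [Function.iterate_succ_apply']; exact hC _ ih

lemma closed_of_image_eq {g : Fin n → Fin n} {C : Finset (Fin n)} (hC : C.image g = C) :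
    ∀ i ∈ C, g i ∈ C := fun i hi => hC ▸ Finset.mem_image_of_mem g hi

/-- reverse orbit: from any point of the cycle one can iterate back to `v`. -/
lemma cycle_back {g : Fin n → Fin n} {v : Fin n} {p : ℕ} (hp : 1 ≤ p) (hpv : g^[p] v = v) :
    ∀ m, ∃ m', g^[m'] (g^[m] v) = v := by
  intro m
  have hppow : ∀ k, g^[p * k] v = v := by
    intro k
    induction k with
    | zero => simp
    | succ j ih => rw [Nat.mul_succ, Function.iterate_add_apply, hpv, ih]
  refine ⟨p * (m + 1) - m, ?_⟩
  rw [← Function.iterate_add_apply]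
  have hm2 : m ≤ p * (m + 1) := le_trans (Nat.le_succ m) (Nat.le_mul_of_pos_left _ hp)
  have h1 : p * (m + 1) - m + m = p * (m + 1) := by omega
  rw [h1, hppow]

lemma sign_permOn_cycle {g : Fin n → Fin n} {C : Finset (Fin n)} {v : Fin n} {p : ℕ}
    (hC : C.image g = C) (hv : v ∈ C) (horb : ∀ y ∈ C, ∃ m, g^[m] v = y)
    (hp : 1 ≤ p) (hpv : g^[p] v = v) :
    ((Equiv.Perm.sign (permOn g C) : ℤ) : ℝ) * (-1) ^ C.card = -1 := by
  have hclosed := closed_of_image_eq hC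
  rcases eq_or_lt_of_le (Nat.succ_le_of_lt (Finset.card_pos.mpr ⟨v, hv⟩)) with hcard1 | hcard2
  · -- singleton cycle
    obtain ⟨y, hy⟩ := Finset.card_eq_one.mp hcard1.symm
    have hσ : permOn g C = 1 := by
      ext i
      rw [permOn_apply hC]
      rcases eq_or_ne i y with hiy | hi
      · have h3 : g i ∈ C := hclosed i (by rw [hy, hiy]; exact Finset.mem_singleton_self y)
        rw [hy, Finset.mem_singleton] at h3
        subst hiy
        rw [hy]
        simp [h3]
      · rw [hy]; simp [hi]
    rw [hσ, hy]
    simp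
  · -- card ≥ 2 : genuine cycle
    have hne : ∀ y ∈ C, g y ≠ y := by
      intro y hy hgy
      -- all iterates of y are y; v is an iterate of y, so v = y, so C = {y}
      have hit : ∀ m, g^[m] y = y := by
        intro m; induction m with
        | zero => rfl
        | succ k ih => rw [Function.iterate_succ_apply', ih, hgy]
      obtain ⟨m, hm⟩ := horb y hy
      obtain ⟨m', hm'⟩ := cycle_back hp hpv m
      rw [hm, hit m'] at hm'
      -- hm' : y = v
      have hall : ∀ z ∈ C, z = y := by
        intro z hz
        obtain ⟨k, hk⟩ := horb z hz
        rw [← hk, ← hm', hit k]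
      have : C.card ≤ 1 := by
        rw [show C = {y} from Finset.eq_singleton_iff_unique_mem.mpr ⟨hy, hall⟩]
        simp
      omega
    set σ := permOn g C with hσdef
    have hσapp : ∀ i, σ i = if i ∈ C then g i else i := permOn_apply hC
    have hiter : ∀ m, σ^[m] v = g^[m] v := by
      intro m
      induction m with
      | zero => rfl
      | succ k ih =>
        rw [Function.iterate_succ_apply', Function.iterate_succ_apply', ih, hσapp]
        rw [if_pos (iter_mem hclosed hv k)]
    have hcyc : σ.IsCycle := by
      refine ⟨v, ?_, ?_⟩
      · rw [hσapp, if_pos hv]; exact hne v hv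
      · intro y hy
        have hyC : y ∈ C := by
          by_contra hyC
          exact hy (by rw [hσapp, if_neg hyC])
        obtain ⟨m, hm⟩ := horb y hyC
        exact ⟨(m : ℤ), by rw [zpow_natCast, ← Equiv.Perm.iterate_eq_pow, hiter, hm]⟩
    have hsupp : σ.support = C := by
      ext i
      rw [Equiv.Perm.mem_support, hσapp]
      by_cases hi : i ∈ C
      · simp [hi, hne i hi]
      · simp [hi]
    rw [hcyc.sign, hsupp]
    rcases Nat.even_or_odd C.card with he | ho
    · have h1 : ((-1 : ℤˣ) ^ C.card) = 1 := he.neg_one_pow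
      have h2 : ((-1 : ℝ) ^ C.card) = 1 := he.neg_one_pow
      rw [h1, h2]
      norm_num
    · have h1 : ((-1 : ℤˣ) ^ C.card) = -1 := ho.neg_one_pow
      have h2 : ((-1 : ℝ) ^ C.card) = -1 := ho.neg_one_pow
      rw [h1, h2]
      norm_num

end Comb2

section Comb3
variable {n : ℕ}

lemma image_union_eq {g : Fin n → Fin n} {U C : Finset (Fin n)}
    (hU : U.image g = U) (hC : C.image g = C) : (U ∪ C).image g = U ∪ C := by
  rw [Finset.image_union, hU, hC]

lemma injOn_of_image_eq {g : Fin n → Fin n} {U : Finset (Fin n)} (hU : U.image g = U) :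
    Set.InjOn g U := by
  have := Finset.card_image_iff.mp (by rw [hU] : (U.image g).card = U.card)
  simpa using this

lemma image_sdiff_eq {g : Fin n → Fin n} {U C : Finset (Fin n)}
    (hU : U.image g = U) (hC : C.image g = C) (hsub : C ⊆ U) :
    (U \ C).image g = U \ C := by
  have hUc := closed_of_image_eq hU
  have hCc := closed_of_image_eq hC
  have hinj := injOn_of_image_eq hU
  have hmaps : ∀ i ∈ U \ C, g i ∈ U \ C := by
    intro i hi
    rw [Finset.mem_sdiff] at hi ⊢
    refine ⟨hUc i hi.1, ?_⟩
    intro hgi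
    -- g i ∈ C; C = image g C so ∃ c ∈ C, g c = g i; injectivity on U gives i = c ∈ C
    rw [← hC] at hgi
    obtain ⟨c, hc, hgc⟩ := Finset.mem_image.mp hgi
    have : c = i := hinj (hsub hc) hi.1 hgc
    exact hi.2 (this ▸ hc)
  have hsubset : (U \ C).image g ⊆ U \ C := by
    intro y hy
    obtain ⟨i, hi, rfl⟩ := Finset.mem_image.mp hy
    exact hmaps i hi
  apply Finset.eq_of_subset_of_card_le hsubset
  rw [Finset.card_image_of_injOn (hinj.mono (by intro z hz; simp only [Finset.coe_sdiff, Set.mem_diff] at hz; exact hz.1))]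

lemma permOn_union_mul {g : Fin n → Fin n} {U C : Finset (Fin n)}
    (hU : U.image g = U) (hC : C.image g = C) (hdisj : Disjoint U C) :
    permOn g (U ∪ C) = permOn g U * permOn g C := by
  have hUc := closed_of_image_eq hU
  have hCc := closed_of_image_eq hC
  ext i
  rw [permOn_apply (image_union_eq hU hC)]
  simp only [Equiv.Perm.mul_apply]
  rw [permOn_apply hC, permOn_apply hU]
  by_cases hiC : i ∈ C
  · have hgC : g i ∈ C := hCc i hiC
    have hgU : g i ∉ U := fun h => (Finset.disjoint_left.mp hdisj h) hgC
    have hiU : i ∉ U := fun h => (Finset.disjoint_left.mp hdisj h) hiC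
    simp [hiC, hgU, Finset.mem_union, hiU]
  · by_cases hiU : i ∈ U
    · simp [hiC, hiU, Finset.mem_union]
    · simp [hiC, hiU, Finset.mem_union]

lemma mem_InvSets {r : Fin n} {g : Fin n → Fin n} {U : Finset (Fin n)} :
    U ∈ InvSets r g ↔ U ⊆ Finset.univ.erase r ∧ U.image g = U := by
  simp [InvSets]

lemma reach_of_iterate {r : Fin n} {g : Fin n → Fin n} :
    ∀ (m : ℕ) (w : Fin n), g^[m] w = r →
      Relation.ReflTransGen (fun a b => a ≠ r ∧ g a = b) w r := by
  intro m
  induction m with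
  | zero => intro w hw; rw [show w = r from hw]
  | succ k ih =>
    intro w hw
    rcases eq_or_ne w r with rfl | hwr
    · rfl
    · rw [Function.iterate_succ_apply] at hw
      exact Relation.ReflTransGen.head ⟨hwr, rfl⟩ (ih (g w) hw)

lemma exists_cycle {r : Fin n} {g : Fin n → Fin n} (hg : ¬ Reach r g) :
    ∃ C ∈ InvSets r g, ∃ v ∈ C, (∀ y ∈ C, ∃ m, g^[m] v = y) ∧
      (∃ p, 1 ≤ p ∧ g^[p] v = v) ∧ (∀ x ∈ C, ∀ y ∈ C, ∃ m, g^[m] x = y) := by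
  rw [Reach, not_forall] at hg
  obtain ⟨u, hu⟩ := hg
  have hnr : ∀ m, g^[m] u ≠ r := fun m hm => hu (reach_of_iterate m u hm)
  -- pigeonhole: some repetition in the orbit of u
  obtain ⟨a, b, hab, he⟩ := Finite.exists_ne_map_eq_of_infinite (fun m : ℕ => g^[m] u)
  -- normalize to i < j
  obtain ⟨i, j, hij, hije⟩ : ∃ i j : ℕ, i < j ∧ g^[i] u = g^[j] u := by
    rcases lt_or_gt_of_ne hab with h | h
    · exact ⟨a, b, h, he⟩
    · exact ⟨b, a, h, he.symm⟩
  set v := g^[i] u with hvdef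
  set p := j - i with hpdef
  have hp : 1 ≤ p := by omega
  have hpv : g^[p] v = v := by
    rw [hvdef, ← Function.iterate_add_apply]
    have : p + i = j := by omega
    rw [this, ← hije]
  have hvnr : ∀ m, g^[m] v ≠ r := by
    intro m
    rw [hvdef, ← Function.iterate_add_apply]
    exact hnr _
  classical
  set C : Finset (Fin n) := (Finset.range p).image (fun m => g^[m] v) with hCdef
  have hvC : v ∈ C := by
    rw [hCdef]
    exact Finset.mem_image.mpr ⟨0, Finset.mem_range.mpr (by omega), rfl⟩
  have horb : ∀ y ∈ C, ∃ m, g^[m] v = y := by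
    intro y hy
    obtain ⟨m, _, hm⟩ := Finset.mem_image.mp hy
    exact ⟨m, hm⟩
  have hiterC : ∀ m, g^[m] v ∈ C := by
    intro m
    -- reduce mod p : g^[m] v = g^[m % p] v
    have key : ∀ k, g^[k * p] v = v := by
      intro k
      induction k with
      | zero => simp
      | succ t ih => rw [Nat.succ_mul, Function.iterate_add_apply, hpv, ih]
    have hmod : g^[m] v = g^[m % p] v := by
      conv_lhs => rw [show m = m % p + m / p * p by rw [Nat.mod_add_div']  ]
      rw [Function.iterate_add_apply, key]
    rw [hmod, hCdef]
    exact Finset.mem_image.mpr ⟨m % p, Finset.mem_range.mpr (Nat.mod_lt _ (by omega)), rfl⟩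
  have hclosed : ∀ y ∈ C, g y ∈ C := by
    intro y hy
    obtain ⟨m, hm⟩ := horb y hy
    rw [← hm, ← Function.iterate_succ_apply' g m v]
    exact hiterC _
  have himg : C.image g = C := by
    apply Finset.Subset.antisymm
    · intro y hy
      obtain ⟨z, hz, rfl⟩ := Finset.mem_image.mp hy
      exact hclosed z hz
    · intro y hy
      obtain ⟨m, hm⟩ := horb y hy
      rcases Nat.eq_zero_or_pos m with rfl | hm0
      · -- y = v = g^[p] v = g (g^[p-1] v)
        refine Finset.mem_image.mpr ⟨g^[p-1] v, hiterC _, ?_⟩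
        rw [← Function.iterate_succ_apply' g (p-1) v, show (p - 1).succ = p by omega, hpv, ← hm]
        rfl
      · refine Finset.mem_image.mpr ⟨g^[m-1] v, hiterC _, ?_⟩
        rw [← Function.iterate_succ_apply' g (m-1) v, show (m - 1).succ = m by omega, hm]
  have htrans : ∀ x ∈ C, ∀ y ∈ C, ∃ m, g^[m] x = y := by
    intro x hx y hy
    obtain ⟨mx, hmx⟩ := horb x hx
    obtain ⟨my, hmy⟩ := horb y hy
    obtain ⟨m', hm'⟩ := cycle_back hp hpv mx
    rw [hmx] at hm'
    exact ⟨m' + my, by rw [show m' + my = my + m' by omega, Function.iterate_add_apply, hm', hmy]⟩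
  refine ⟨C, mem_InvSets.mpr ⟨?_, himg⟩, v, hvC, horb, ⟨p, hp, hpv⟩, htrans⟩
  intro y hy
  obtain ⟨m, hm⟩ := horb y hy
  rw [Finset.mem_erase]
  exact ⟨hm ▸ hvnr m, Finset.mem_univ y⟩

end Comb3

section Comb4
variable {n : ℕ}

lemma invSets_reach {r : Fin n} {g : Fin n → Fin n} (hreach : Reach r g) :
    InvSets r g = {∅} := by
  apply Finset.Subset.antisymm
  · intro U hU
    rw [mem_InvSets] at hU
    rw [Finset.mem_singleton]
    by_contra hne
    obtain ⟨u, hu⟩ := Finset.nonempty_iff_ne_empty.mpr hne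
    have hclosed := closed_of_image_eq hU.2
    have hnotin : ∀ w, Relation.ReflTransGen (fun a b => a ≠ r ∧ g a = b) w r → w ∉ U := by
      intro w hw
      induction hw using Relation.ReflTransGen.head_induction_on with
      | refl =>
        intro hr
        exact absurd (hU.1 hr) (by simp)
      | head hab _ ih =>
        intro haU
        exact ih (hab.2 ▸ hclosed _ haU)
    exact hnotin u (hreach u) hu
  · intro U hU
    rw [Finset.mem_singleton] at hU
    subst hU
    rw [mem_InvSets]
    simp

lemma sum_signs (r : Fin n) (g : Fin n → Fin n) :
    ∑ U ∈ InvSets r g, ((Equiv.Perm.sign (permOn g U) : ℤ) : ℝ) * (-1) ^ U.card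
      = if Reach r g then 1 else 0 := by
  by_cases hreach : Reach r g
  · rw [if_pos hreach, invSets_reach hreach]
    simp [permOn_empty]
  · rw [if_neg hreach]
    obtain ⟨C, hCmem, v, hvC, horb, ⟨p, hp, hpv⟩, htrans⟩ := exists_cycle hreach
    rw [mem_InvSets] at hCmem
    obtain ⟨hCsub, hCimg⟩ := hCmem
    have htC : ((Equiv.Perm.sign (permOn g C) : ℤ) : ℝ) * (-1) ^ C.card = -1 :=
      sign_permOn_cycle hCimg hvC horb hp hpv
    classical
    -- key: for U ∈ InvSets with C ∩ U ≠ ∅, C ⊆ U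
    have hCU : ∀ U ∈ InvSets r g, ¬ Disjoint U C → C ⊆ U := by
      intro U hU hnd
      rw [Finset.not_disjoint_iff] at hnd
      obtain ⟨a, haU, haC⟩ := hnd
      intro y hyC
      obtain ⟨m, hm⟩ := htrans a haC y hyC
      rw [← hm]
      exact iter_mem (closed_of_image_eq (mem_InvSets.mp hU).2) haU m
    set f : Finset (Fin n) → ℝ :=
      fun U => ((Equiv.Perm.sign (permOn g U) : ℤ) : ℝ) * (-1) ^ U.card with hf
    have hfmul : ∀ U ∈ InvSets r g, Disjoint U C → f (U ∪ C) = f U * -1 := by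
      intro U hU hdisj
      obtain ⟨hUsub, hUimg⟩ := mem_InvSets.mp hU
      rw [hf]
      simp only
      rw [permOn_union_mul hUimg hCimg hdisj, _root_.map_mul, Finset.card_union_of_disjoint hdisj,
        pow_add]
      push_cast
      linear_combination ((Equiv.Perm.sign (permOn g U) : ℤ) : ℝ) * (-1 : ℝ) ^ U.card * htC
    have hCne : C.Nonempty := ⟨v, hvC⟩
    have hdisj_of_nsub : ∀ U ∈ InvSets r g, ¬ C ⊆ U → Disjoint U C := by
      intro U hU hnsub
      by_contra hnd
      exact hnsub (hCU U hU hnd)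
    have hsd_mem : ∀ U ∈ InvSets r g, C ⊆ U → U \ C ∈ InvSets r g := by
      intro U hU hsub
      obtain ⟨hUsub, hUimg⟩ := mem_InvSets.mp hU
      exact mem_InvSets.mpr ⟨Finset.Subset.trans (Finset.sdiff_subset) hUsub,
        image_sdiff_eq hUimg hCimg hsub⟩
    have hun_mem : ∀ U ∈ InvSets r g, U ∪ C ∈ InvSets r g := by
      intro U hU
      obtain ⟨hUsub, hUimg⟩ := mem_InvSets.mp hU
      exact mem_InvSets.mpr ⟨Finset.union_subset hUsub hCsub, image_union_eq hUimg hCimg⟩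
    apply Finset.sum_involution (fun U _ => if C ⊆ U then U \ C else U ∪ C)
    · -- f U + f (i U) = 0
      intro U hU
      by_cases hsub : C ⊆ U
      · rw [if_pos hsub]
        have h1 := hfmul (U \ C) (hsd_mem U hU hsub) Finset.sdiff_disjoint
        rw [Finset.sdiff_union_of_subset hsub] at h1
        rw [hf] at h1
        simp only at h1
        linarith
      · rw [if_neg hsub]
        have h1 := hfmul U hU (hdisj_of_nsub U hU hsub)
        rw [hf] at h1
        simp only at h1
        linarith
    · -- i U ≠ U when f U ≠ 0
      intro U hU _
      by_cases hsub : C ⊆ U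
      · rw [if_pos hsub]
        intro heq
        have : v ∈ U \ C := heq.symm ▸ hsub hvC
        exact (Finset.mem_sdiff.mp this).2 hvC
      · rw [if_neg hsub]
        intro heq
        have hvU : v ∈ U := heq ▸ Finset.mem_union_right U hvC
        exact (Finset.disjoint_left.mp (hdisj_of_nsub U hU hsub) hvU) hvC
    · -- membership
      intro U hU
      by_cases hsub : C ⊆ U
      · rw [if_pos hsub]; exact hsd_mem U hU hsub
      · rw [if_neg hsub]; exact hun_mem U hU
    · -- involution
      intro U hU
      by_cases hsub : C ⊆ U
      · rw [if_pos hsub]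
        rw [if_neg (fun h : C ⊆ U \ C => (Finset.mem_sdiff.mp (h hvC)).2 hvC)]
        exact Finset.sdiff_union_of_subset hsub
      · rw [if_neg hsub, if_pos Finset.subset_union_right]
        have hd := hdisj_of_nsub U hU hsub
        ext a
        simp only [Finset.mem_sdiff, Finset.mem_union]
        constructor
        · rintro ⟨h1 | h1, h2⟩
          · exact h1
          · exact absurd h1 h2
        · intro ha
          exact ⟨Or.inl ha, fun hc => (Finset.disjoint_left.mp hd ha) hc⟩

end Comb4

section Comb5
variable {n : ℕ}

noncomputable def Phi (x : Matrix (Fin n) (Fin n) ℝ) (r : Fin n) : ℝ :=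
  ∑ U ∈ (Finset.univ.erase r).powerset,
    ∑ σ ∈ Finset.univ.filter (fun σ : Equiv.Perm (Fin n) => ∀ i, i ∉ U → σ i = i),
      ((Equiv.Perm.sign σ : ℤ) : ℝ) * (-1) ^ U.card * ∏ i ∈ U, x i (σ i)

lemma perm_fix_image {U : Finset (Fin n)} {σ : Equiv.Perm (Fin n)}
    (hσ : ∀ i, i ∉ U → σ i = i) : U.image σ = U := by
  have hmaps : ∀ i ∈ U, σ i ∈ U := by
    intro i hi
    by_contra h
    have h2 := hσ (σ i) h
    have : σ i = i := σ.injective h2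
    exact h (this.symm ▸ hi)
  have hsubset : U.image σ ⊆ U := by
    intro y hy
    obtain ⟨i, hi, rfl⟩ := Finset.mem_image.mp hy
    exact hmaps i hi
  apply Finset.eq_of_subset_of_card_le hsubset
  rw [Finset.card_image_of_injective _ σ.injective]

lemma permOn_eq_perm {U : Finset (Fin n)} {σ : Equiv.Perm (Fin n)} {g : Fin n → Fin n}
    (hσ : ∀ i, i ∉ U → σ i = i) (hagree : ∀ i ∈ U, g i = σ i) (himg : U.image g = U) :
    permOn g U = σ := by
  ext i
  rw [permOn_apply himg]
  by_cases hi : i ∈ U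
  · rw [if_pos hi, hagree i hi]
  · rw [if_neg hi, hσ i hi]

/-- Function-side identity. -/
lemma funside (x : Matrix (Fin n) (Fin n) ℝ) (hrow : ∀ i, ∑ j, x i j = 1) (r : Fin n) :
    ∑ g ∈ Finset.univ.filter (fun g : Fin n → Fin n => g r = r ∧ Reach r g),
      ∏ u ∈ Finset.univ.erase r, x u (g u) = Phi x r := by
  classical
  set E := Finset.univ.erase r with hE
  set w : (Fin n → Fin n) → ℝ := fun g => ∏ u ∈ E, x u (g u) with hw
  have step1 :
      ∑ g ∈ Finset.univ.filter (fun g : Fin n → Fin n => g r = r ∧ Reach r g), w g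
        = ∑ g ∈ Finset.univ.filter (fun g : Fin n → Fin n => g r = r),
            w g * (if Reach r g then 1 else 0) := by
    rw [Finset.sum_filter, Finset.sum_filter]
    apply Finset.sum_congr rfl
    intro g _
    by_cases h1 : g r = r <;> by_cases h2 : Reach r g <;> simp [h1, h2]
  rw [step1]
  have step2 :
      ∑ g ∈ Finset.univ.filter (fun g : Fin n → Fin n => g r = r),
          w g * (if Reach r g then 1 else 0)
        = ∑ g ∈ Finset.univ.filter (fun g : Fin n → Fin n => g r = r),
            ∑ U ∈ E.powerset, (if U.image g = U then
              w g * (((Equiv.Perm.sign (permOn g U) : ℤ) : ℝ) * (-1) ^ U.card) else 0) := by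
    apply Finset.sum_congr rfl
    intro g _
    rw [← sum_signs r g, Finset.mul_sum]
    rw [InvSets, Finset.sum_filter]
  rw [step2, Finset.sum_comm]
  rw [Phi]
  apply Finset.sum_congr rfl
  intro U hU
  rw [Finset.mem_powerset] at hU
  -- now fix U
  rw [← Finset.sum_filter]
  -- the set of g : {g r = r and U.image g = U}
  set t' : Equiv.Perm (Fin n) → ∀ _ : Fin n, Finset (Fin n) := fun σ i =>
    if i ∈ E \ U then (Finset.univ : Finset (Fin n)) else {if i = r then r else σ i} with ht'
  set P : Finset (Equiv.Perm (Fin n)) :=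
    Finset.univ.filter (fun σ : Equiv.Perm (Fin n) => ∀ i, i ∉ U → σ i = i) with hP
  have hrE : r ∉ E := by simp [hE]
  have hrU : r ∉ U := fun h => hrE (hU h)
  have hsplit : (Finset.univ.filter (fun g : Fin n → Fin n => g r = r)).filter
        (fun g => U.image g = U)
      = P.biUnion (fun σ => Fintype.piFinset (t' σ)) := by
    ext g
    simp only [Finset.mem_filter, Finset.mem_univ, true_and, Finset.mem_biUnion,
      Fintype.mem_piFinset]
    constructor
    · rintro ⟨hgr, himg⟩
      refine ⟨permOn g U, ?_, ?_⟩
      · rw [hP, Finset.mem_filter]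
        refine ⟨Finset.mem_univ _, fun i hi => ?_⟩
        rw [permOn_apply himg, if_neg hi]
      · intro i
        simp only [ht']
        by_cases hi : i ∈ E \ U
        · simp [hi]
        · rw [if_neg hi]
          rcases eq_or_ne i r with rfl | hir
          · simp [hgr]
          · have hiU : i ∈ U := by
              by_contra hiU
              exact hi (Finset.mem_sdiff.mpr ⟨Finset.mem_erase.mpr ⟨hir, Finset.mem_univ i⟩, hiU⟩)
            rw [permOn_apply himg, if_pos hiU]
            simp [hir]
    · rintro ⟨σ, hσP, hg⟩
      rw [hP, Finset.mem_filter] at hσP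
      have hσfix : ∀ i, i ∉ U → σ i = i := hσP.2
      have hgr : g r = r := by
        have := hg r
        simp only [ht'] at this
        simp only [if_neg (by simp [hE] : r ∉ E \ U)] at this
        simpa using this
      have hagree : ∀ i ∈ U, g i = σ i := by
        intro i hi
        have := hg i
        simp only [ht'] at this
        have hiE : i ∉ E \ U := fun h => (Finset.mem_sdiff.mp h).2 hi
        rw [if_neg hiE] at this
        have hir : i ≠ r := fun h => hrU (h ▸ hi)
        simpa [hir] using this
      refine ⟨hgr, ?_⟩
      have : U.image g = U.image σ := Finset.image_congr (fun i hi => hagree i hi)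
      rw [this, perm_fix_image hσfix]
  rw [hsplit]
  rw [Finset.sum_biUnion]
  swap
  · -- pairwise disjoint
    intro σ hσ τ hτ hne
    simp only [Finset.mem_coe, hP, Finset.mem_filter] at hσ hτ
    apply Finset.disjoint_left.mpr
    intro g hgσ hgτ
    apply hne
    ext i
    by_cases hi : i ∈ U
    · have h1 := (Fintype.mem_piFinset.mp hgσ) i
      have h2 := (Fintype.mem_piFinset.mp hgτ) i
      simp only [ht'] at h1 h2
      have hiE : i ∉ E \ U := fun h => (Finset.mem_sdiff.mp h).2 hi
      have hir : i ≠ r := fun h => hrU (h ▸ hi)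
      rw [if_neg hiE] at h1 h2
      simp only [Finset.mem_singleton, hir, if_false] at h1 h2
      rw [← h1, ← h2]
    · rw [hσ.2 i hi, hτ.2 i hi]
  -- per σ
  apply Finset.sum_congr rfl
  intro σ hσ
  rw [hP, Finset.mem_filter] at hσ
  have hσfix := hσ.2
  have hperm : ∀ g ∈ Fintype.piFinset (t' σ), permOn g U = σ := by
    intro g hg
    simp only [Fintype.mem_piFinset] at hg
    have hagree : ∀ i ∈ U, g i = σ i := by
      intro i hi
      have := hg i
      simp only [ht'] at this
      have hiE : i ∉ E \ U := fun h => (Finset.mem_sdiff.mp h).2 hi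
      have hir : i ≠ r := fun h => hrU (h ▸ hi)
      rw [if_neg hiE] at this
      simpa [hir] using this
    have himg : U.image g = U := by
      have : U.image g = U.image σ := Finset.image_congr (fun i hi => hagree i hi)
      rw [this, perm_fix_image hσfix]
    exact permOn_eq_perm hσfix hagree himg
  -- rewrite summand using hperm, then compute the sum
  rw [Finset.sum_congr rfl (fun g hg => by
    rw [hperm g hg]
    : ∀ g ∈ Fintype.piFinset (t' σ), w g * (((Equiv.Perm.sign (permOn g U) : ℤ) : ℝ) * (-1) ^ U.card)
      = w g * (((Equiv.Perm.sign σ : ℤ) : ℝ) * (-1) ^ U.card))]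
  rw [← Finset.sum_mul]
  have hsum : ∑ g ∈ Fintype.piFinset (t' σ), w g = ∏ i ∈ U, x i (σ i) := by
    have hfact : ∀ i, (∑ j ∈ t' σ i, (if i ∈ E \ U then x i j else 1)) = 1 := by
      intro i
      by_cases hi : i ∈ E \ U
      · simp only [ht', if_pos hi]
        exact hrow i
      · simp only [ht', if_neg hi]
        simp
    have key := Finset.prod_univ_sum (t' σ) (fun i j => if i ∈ E \ U then x i j else 1)
    have key1 : ∑ g ∈ Fintype.piFinset (t' σ), ∏ i, (if i ∈ E \ U then x i (g i) else 1) = 1 := by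
      rw [← key]
      exact Finset.prod_eq_one (fun i _ => hfact i)
    have hagree' : ∀ g ∈ Fintype.piFinset (t' σ), ∀ i ∈ U, g i = σ i := by
      intro g hg i hi
      have := (Fintype.mem_piFinset.mp hg) i
      simp only [ht'] at this
      have hiE : i ∉ E \ U := fun h => (Finset.mem_sdiff.mp h).2 hi
      have hir : i ≠ r := fun h => hrU (h ▸ hi)
      rw [if_neg hiE] at this
      simpa [hir] using this
    calc ∑ g ∈ Fintype.piFinset (t' σ), w g
        = ∑ g ∈ Fintype.piFinset (t' σ),
            (∏ u ∈ U, x u (σ u)) * ∏ i, (if i ∈ E \ U then x i (g i) else 1) := by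
          apply Finset.sum_congr rfl
          intro g hg
          rw [hw]
          simp only
          rw [← Finset.prod_sdiff hU, Fintype.prod_ite_mem (E \ U) (fun i => x i (g i))]
          have hUprod : ∏ u ∈ U, x u (g u) = ∏ u ∈ U, x u (σ u) :=
            Finset.prod_congr rfl (fun i hi => by rw [hagree' g hg i hi])
          rw [hUprod]
          ring
      _ = ∏ i ∈ U, x i (σ i) := by
          rw [← Finset.mul_sum, key1, mul_one]
  rw [hsum]
  ring

end Comb5

section Comb6
variable {n : ℕ}

lemma det_row_expansion (M : Matrix (Fin n) (Fin n) ℝ) :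
    M.det = ∑ σ : Equiv.Perm (Fin n), ((Equiv.Perm.sign σ : ℤ) : ℝ) * ∏ i, M i (σ i) := by
  rw [← Matrix.det_transpose, Matrix.det_apply']
  apply Finset.sum_congr rfl
  intro σ _
  congr 1

lemma detside (x : Matrix (Fin n) (Fin n) ℝ) (r : Fin n) :
    ((1 - x).updateRow r (Pi.single r 1)).det = Phi x r := by
  classical
  set E := Finset.univ.erase r with hE
  set M := (1 - x).updateRow r (Pi.single r 1) with hM
  have hrE : r ∉ E := by simp [hE]
  rw [det_row_expansion]
  have hvanish : ∀ σ ∈ (Finset.univ : Finset (Equiv.Perm (Fin n))), σ ∉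
      Finset.univ.filter (fun σ : Equiv.Perm (Fin n) => σ r = r) →
      ((Equiv.Perm.sign σ : ℤ) : ℝ) * ∏ i, M i (σ i) = 0 := by
    intro σ _ hσ
    simp only [Finset.mem_filter, Finset.mem_univ, true_and] at hσ
    have : M r (σ r) = 0 := by
      rw [hM, Matrix.updateRow_self, Pi.single_eq_of_ne hσ]
    rw [Finset.prod_eq_zero (Finset.mem_univ r) this, mul_zero]
  rw [← Finset.sum_subset (Finset.filter_subset _ _) hvanish]
  have hterm : ∀ σ ∈ Finset.univ.filter (fun σ : Equiv.Perm (Fin n) => σ r = r),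
      ((Equiv.Perm.sign σ : ℤ) : ℝ) * ∏ i, M i (σ i)
        = ∑ U ∈ E.powerset, ((Equiv.Perm.sign σ : ℤ) : ℝ) *
            ((∏ i ∈ U, (-x i (σ i))) * ∏ i ∈ E \ U, (1 : Matrix (Fin n) (Fin n) ℝ) i (σ i)) := by
    intro σ hσ
    simp only [Finset.mem_filter, Finset.mem_univ, true_and] at hσ
    have h1 : ∏ i, M i (σ i) = M r (σ r) * ∏ i ∈ E, M i (σ i) :=
      (Finset.mul_prod_erase Finset.univ (fun i => M i (σ i)) (Finset.mem_univ r)).symm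
    have h2 : M r (σ r) = 1 := by
      rw [hM, Matrix.updateRow_self, hσ, Pi.single_eq_same]
    have h3 : ∀ i ∈ E, M i (σ i) = (-x i (σ i)) + (1 : Matrix (Fin n) (Fin n) ℝ) i (σ i) := by
      intro i hi
      have hir : i ≠ r := (Finset.mem_erase.mp hi).1
      rw [hM, Matrix.updateRow_ne hir, Matrix.sub_apply]
      ring
    rw [h1, h2, one_mul, Finset.prod_congr rfl h3, Finset.prod_add, Finset.mul_sum]
  rw [Finset.sum_congr rfl hterm, Finset.sum_comm, Phi]
  apply Finset.sum_congr rfl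
  intro U hU
  rw [Finset.mem_powerset] at hU
  have hrU : r ∉ U := fun h => hrE (hU h)
  set F := Finset.univ.filter (fun σ : Equiv.Perm (Fin n) => σ r = r) with hF
  set cond : Equiv.Perm (Fin n) → Prop := fun σ => ∀ i ∈ E \ U, σ i = i with hcond
  rw [← Finset.sum_filter_add_sum_filter_not F cond]
  have hzero : ∑ σ ∈ F.filter (fun σ => ¬ cond σ),
      ((Equiv.Perm.sign σ : ℤ) : ℝ) *
        ((∏ i ∈ U, (-x i (σ i))) * ∏ i ∈ E \ U, (1 : Matrix (Fin n) (Fin n) ℝ) i (σ i)) = 0 := by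
    apply Finset.sum_eq_zero
    intro σ hσ
    simp only [Finset.mem_filter, hcond, not_forall] at hσ
    obtain ⟨i, hi, hne⟩ := hσ.2
    have hz : (1 : Matrix (Fin n) (Fin n) ℝ) i (σ i) = 0 :=
      Matrix.one_apply_ne (fun h => hne h.symm)
    rw [Finset.prod_eq_zero hi hz]
    ring
  rw [hzero, add_zero]
  have hFP : F.filter cond
      = Finset.univ.filter (fun σ : Equiv.Perm (Fin n) => ∀ i, i ∉ U → σ i = i) := by
    ext σ
    simp only [Finset.mem_filter, Finset.mem_univ, true_and, hF, hcond]
    constructor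
    · rintro ⟨hr, hc⟩ i hiU
      rcases eq_or_ne i r with rfl | hir
      · exact hr
      · exact hc i (Finset.mem_sdiff.mpr ⟨Finset.mem_erase.mpr ⟨hir, Finset.mem_univ i⟩, hiU⟩)
    · intro h
      exact ⟨h r hrU, fun i hi => h i (Finset.mem_sdiff.mp hi).2⟩
  rw [hFP]
  apply Finset.sum_congr rfl
  intro σ hσ
  simp only [Finset.mem_filter, Finset.mem_univ, true_and] at hσ
  have hone : ∏ i ∈ E \ U, (1 : Matrix (Fin n) (Fin n) ℝ) i (σ i) = 1 := by
    apply Finset.prod_eq_one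
    intro i hi
    rw [hσ i (Finset.mem_sdiff.mp hi).2, Matrix.one_apply_eq]
  have hneg : ∏ i ∈ U, (-x i (σ i)) = (-1 : ℝ) ^ U.card * ∏ i ∈ U, x i (σ i) := by
    rw [← Finset.prod_const, ← Finset.prod_mul_distrib]
    apply Finset.prod_congr rfl
    intros
    ring
  rw [hone, hneg]
  ring

end Comb6

section Part0
variable {n : ℕ}

noncomputable def funOf (r : Fin n) (T : Finset (Fin n × Fin n)) : Fin n → Fin n :=
  fun u => if h : ∃ v, (u, v) ∈ T then h.choose else r

lemma funOf_spec {r : Fin n} {T : Finset (Fin n × Fin n)} (hT : IsArborescence n r T)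
    {u : Fin n} (hu : u ≠ r) : (u, funOf r T u) ∈ T := by
  have hex : ∃ v, (u, v) ∈ T := (hT.2.1 u hu).exists
  rw [funOf, dif_pos hex]
  exact hex.choose_spec

lemma funOf_eq {r : Fin n} {T : Finset (Fin n × Fin n)} (hT : IsArborescence n r T)
    {a b : Fin n} (hab : (a, b) ∈ T) : funOf r T a = b := by
  have ha : a ≠ r := hT.1 (a, b) hab
  exact ((hT.2.1 a ha).unique (funOf_spec hT ha) hab)

lemma funOf_root {r : Fin n} {T : Finset (Fin n × Fin n)} (hT : IsArborescence n r T) :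
    funOf r T r = r := by
  rw [funOf]
  split_ifs with h
  · exact absurd (hT.1 (r, h.choose) h.choose_spec) (by simp)
  · rfl

noncomputable def treeOf (r : Fin n) (g : Fin n → Fin n) : Finset (Fin n × Fin n) :=
  (Finset.univ.erase r).image (fun u => (u, g u))

lemma mem_treeOf {r : Fin n} {g : Fin n → Fin n} {a b : Fin n} :
    (a, b) ∈ treeOf r g ↔ a ≠ r ∧ g a = b := by
  rw [treeOf, Finset.mem_image]
  constructor
  · rintro ⟨u, hu, he⟩
    rw [Prod.mk.injEq] at he
    obtain ⟨rfl, rfl⟩ := he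
    exact ⟨(Finset.mem_erase.mp hu).1, rfl⟩
  · rintro ⟨ha, rfl⟩
    exact ⟨a, Finset.mem_erase.mpr ⟨ha, Finset.mem_univ a⟩, rfl⟩

lemma treeOf_arb {r : Fin n} {g : Fin n → Fin n} (hreach : Reach r g) :
    IsArborescence n r (treeOf r g) := by
  refine ⟨?_, ?_, ?_⟩
  · rintro ⟨a, b⟩ hab
    exact (mem_treeOf.mp hab).1
  · intro u hu
    exact ⟨g u, mem_treeOf.mpr ⟨hu, rfl⟩, fun v hv => ((mem_treeOf.mp hv).2).symm⟩
  · intro u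
    apply Relation.ReflTransGen.mono ?_ _ _ (hreach u)
    intro a b hab
    exact mem_treeOf.mpr ⟨hab.1, hab.2⟩

lemma treeOf_funOf {r : Fin n} {T : Finset (Fin n × Fin n)} (hT : IsArborescence n r T) :
    treeOf r (funOf r T) = T := by
  ext ⟨a, b⟩
  rw [mem_treeOf]
  constructor
  · rintro ⟨ha, rfl⟩
    exact funOf_spec hT ha
  · intro hab
    exact ⟨hT.1 (a, b) hab, funOf_eq hT hab⟩

lemma arb_sum_eq_fun_sum (x : Matrix (Fin n) (Fin n) ℝ) (r : Fin n) :
    ∑ T ∈ Finset.univ.filter (fun T => IsArborescence n r T), ∏ e ∈ T, x e.1 e.2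
      = ∑ g ∈ Finset.univ.filter (fun g : Fin n → Fin n => g r = r ∧ Reach r g),
          ∏ u ∈ Finset.univ.erase r, x u (g u) := by
  classical
  apply Finset.sum_bij' (i := fun T _ => funOf r T) (j := fun g _ => treeOf r g)
  · -- membership: funOf of arborescence is good
    intro T hT
    rw [Finset.mem_filter] at hT
    obtain ⟨-, hT⟩ := hT
    rw [Finset.mem_filter]
    refine ⟨Finset.mem_univ _, funOf_root hT, ?_⟩
    intro u
    apply Relation.ReflTransGen.mono ?_ _ _ (hT.2.2 u)
    intro a b hab
    exact ⟨hT.1 (a, b) hab, funOf_eq hT hab⟩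
  · -- membership: treeOf of good function is arborescence
    intro g hg
    rw [Finset.mem_filter] at hg
    obtain ⟨-, hgr, hreach⟩ := hg
    rw [Finset.mem_filter]
    exact ⟨Finset.mem_univ _, treeOf_arb hreach⟩
  · -- left inverse
    intro T hT
    rw [Finset.mem_filter] at hT
    exact treeOf_funOf hT.2
  · -- right inverse : funOf (treeOf g) = g
    intro g hg
    rw [Finset.mem_filter] at hg
    obtain ⟨-, hgr, hreach⟩ := hg
    have harb := treeOf_arb hreach
    funext u
    rcases eq_or_ne u r with rfl | hu
    · rw [funOf_root harb, hgr]
    · exact funOf_eq harb (mem_treeOf.mpr ⟨hu, rfl⟩)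
  · -- products equal
    intro T hT
    rw [Finset.mem_filter] at hT
    conv_lhs => rw [← treeOf_funOf hT.2]
    rw [treeOf, Finset.prod_image (fun a _ b _ h => congrArg Prod.fst h)]

end Part0


/-- For a doubly stochastic matrix `x` (entries in `[0,1]`, all row and column sums
equal to `1`), the arborescence generating sums agree for any two roots `r`, `r'`:
`∑_{T ∈ 𝒯_r(n)} ∏_{(u,v)∈T} x u v = ∑_{T ∈ 𝒯_{r'}(n)} ∏_{(u,v)∈T} x u v`. -/
theorem arb_sum_root_invariant (n : ℕ) (hn : 2 ≤ n) (x : Matrix (Fin n) (Fin n) ℝ)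
    (hx01 : ∀ i j, x i j ∈ Set.Icc (0 : ℝ) 1)
    (hrow : ∀ i, ∑ j, x i j = 1) (hcol : ∀ j, ∑ i, x i j = 1)
    (r r' : Fin n) :
    ∑ T ∈ univ.filter (fun T => IsArborescence n r T), ∏ e ∈ T, x e.1 e.2
      = ∑ T ∈ univ.filter (fun T => IsArborescence n r' T), ∏ e ∈ T, x e.1 e.2 := by
  have hL1 : ∀ i, ∑ j, (1 - x) i j = 0 := by
    intro i
    simp [Matrix.sub_apply, Finset.sum_sub_distrib, Matrix.one_apply, hrow i]
  have hL2 : ∀ j, ∑ i, (1 - x) i j = 0 := by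
    intro j
    simp [Matrix.sub_apply, Finset.sum_sub_distrib, Matrix.one_apply, hcol j]
  have key : ∀ s : Fin n,
      ∑ T ∈ univ.filter (fun T => IsArborescence n s T), ∏ e ∈ T, x e.1 e.2
        = (1 - x).adjugate s s := by
    intro s
    rw [arb_sum_eq_fun_sum x s, funside x hrow s, ← detside x s, Matrix.adjugate_apply]
  rw [key r, key r', adj_diag_eq hn (1 - x) hL1 hL2 r r']
end

section
/- Let n ≥ 2 and fix r ∈ [n]. For each permutation π ∈ S_n define the polynomial Q_π = (∏_{i∈[n], i≠r} x_{i,π(i)}) · ∑_{T ∈ 𝒯_r(n)} ∏_{(u,v)∈T} x_{u,π(v)} in the n² variables x_{u,v} (u,v ∈ [n]). Then for all c, i ∈ [n], the polynomial identity ∑_{π ∈ S_n, π(r)=c} Q_π = ∑_{π ∈ S_n, π(r)=i} Q_π holds in ℝ[x_{u,v} : u,v ∈ [n]]. -/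
open Finset
open scoped Classical

namespace QPI

variable {n : ℕ}

theorem perm_inv_apply_self (f : Equiv.Perm (Fin n)) (x : Fin n) : f⁻¹ (f x) = x :=
  Equiv.symm_apply_apply f x

theorem perm_apply_inv_self (f : Equiv.Perm (Fin n)) (x : Fin n) : f (f⁻¹ x) = x :=
  Equiv.apply_symm_apply f x

/-- Parent map of an arborescence: `qpar r T u` is the unique `v` with `(u,v) ∈ T`. -/
noncomputable def qpar (r : Fin n) (T : Finset (Fin n × Fin n)) (u : Fin n) : Fin n :=
  if h : ∃ v, (u, v) ∈ T then h.choose else r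

/-- Distance to the root along parent iterates. -/
noncomputable def qdist (r : Fin n) (T : Finset (Fin n × Fin n)) (s : Fin n) : ℕ :=
  if h : ∃ m, (qpar r T)^[m] s = r then Nat.find h else 0

/-- Path list from `s` to `r`. -/
noncomputable def qlist (r : Fin n) (T : Finset (Fin n × Fin n)) (s : Fin n) : List (Fin n) :=
  (List.range (qdist r T s + 1)).map (fun m => (qpar r T)^[m] s)

/-- New parent map after rerooting. -/
noncomputable def qg (r : Fin n) (T : Finset (Fin n × Fin n)) (s : Fin n) (u : Fin n) : Fin n :=
  if u ∈ qlist r T s ∧ u ≠ r then ((qlist r T s).formPerm)⁻¹ u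
  else ((qlist r T s).formPerm)⁻¹ (qpar r T u)

/-- The transform on pairs (permutation, arborescence). -/
noncomputable def qtr (r i : Fin n) (π : Equiv.Perm (Fin n)) (T : Finset (Fin n × Fin n)) :
    Equiv.Perm (Fin n) × Finset (Fin n × Fin n) :=
  (π * (qlist r T (π⁻¹ i)).formPerm,
   (univ.erase r).image (fun u => (u, qg r T (π⁻¹ i) u)))

section Basic

variable {r : Fin n} {T : Finset (Fin n × Fin n)}

theorem qpar_mem (hT : IsArborescence n r T) {u : Fin n} (hu : u ≠ r) :
    (u, qpar r T u) ∈ T := by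
  obtain ⟨v, hv, -⟩ := hT.2.1 u hu
  have h : ∃ w, (u, w) ∈ T := ⟨v, hv⟩
  rw [qpar, dif_pos h]
  exact h.choose_spec

theorem qpar_eq (hT : IsArborescence n r T) {u v : Fin n} (hv : (u, v) ∈ T) :
    qpar r T u = v := by
  have hu : u ≠ r := hT.1 (u, v) hv
  obtain ⟨w, hw, hwu⟩ := hT.2.1 u hu
  rw [hwu _ (qpar_mem hT hu), hwu _ hv]

theorem qpar_root (hT : IsArborescence n r T) : qpar r T r = r := by
  rw [qpar, dif_neg]
  rintro ⟨v, hv⟩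
  exact hT.1 (r, v) hv rfl

theorem arb_eq_image (hT : IsArborescence n r T) :
    T = (univ.erase r).image (fun u => (u, qpar r T u)) := by
  ext e
  simp only [Finset.mem_image, Finset.mem_erase, Finset.mem_univ, and_true]
  constructor
  · intro he
    refine ⟨e.1, hT.1 e he, ?_⟩
    rw [qpar_eq hT (show (e.1, e.2) ∈ T from he)]
  · rintro ⟨u, hu, rfl⟩
    exact qpar_mem hT hu

theorem qreach (hT : IsArborescence n r T) (u : Fin n) :
    ∃ m, (qpar r T)^[m] u = r := by
  have h := hT.2.2 u
  induction h using Relation.ReflTransGen.head_induction_on with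
  | refl => exact ⟨0, rfl⟩
  | head hab _ ih =>
      obtain ⟨m, hm⟩ := ih
      refine ⟨m + 1, ?_⟩
      rw [Function.iterate_succ_apply, qpar_eq hT hab]
      exact hm

theorem qdist_spec (hT : IsArborescence n r T) (s : Fin n) :
    (qpar r T)^[qdist r T s] s = r := by
  rw [qdist, dif_pos (qreach hT s)]
  exact Nat.find_spec (qreach hT s)

theorem qdist_min (hT : IsArborescence n r T) {s : Fin n} {m : ℕ}
    (hm : m < qdist r T s) : (qpar r T)^[m] s ≠ r := by
  rw [qdist, dif_pos (qreach hT s)] at hm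
  exact Nat.find_min (qreach hT s) hm

theorem qdist_le (hT : IsArborescence n r T) {x : Fin n} {m : ℕ}
    (hm : (qpar r T)^[m] x = r) : qdist r T x ≤ m := by
  rw [qdist, dif_pos ⟨m, hm⟩]
  exact Nat.find_le hm

theorem qlist_length (s : Fin n) : (qlist r T s).length = qdist r T s + 1 := by
  simp [qlist]

theorem qlist_getElem (s : Fin n) (m : ℕ) (hm : m < (qlist r T s).length) :
    (qlist r T s)[m] = (qpar r T)^[m] s := by
  simp only [qlist, List.getElem_map, List.getElem_range]

theorem mem_qlist {s x : Fin n} :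
    x ∈ qlist r T s ↔ ∃ m ≤ qdist r T s, (qpar r T)^[m] s = x := by
  simp only [qlist, List.mem_map, List.mem_range, Nat.lt_succ_iff]

theorem qlist_nodup (hT : IsArborescence n r T) (s : Fin n) : (qlist r T s).Nodup := by
  have key : ∀ a b : ℕ, a ≤ qdist r T s → b ≤ qdist r T s → a < b →
      (qpar r T)^[a] s ≠ (qpar r T)^[b] s := by
    intro a b _ hb hab heq
    have h1 : (qpar r T)^[qdist r T s - b + a] s = r := by
      rw [Function.iterate_add_apply, heq, ← Function.iterate_add_apply,
        Nat.sub_add_cancel hb]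
      exact qdist_spec hT s
    exact qdist_min hT (by omega) h1
  rw [qlist]
  refine List.Nodup.map_on ?_ List.nodup_range
  intro a ha b hb hab
  simp only [List.mem_range, Nat.lt_succ_iff] at ha hb
  rcases lt_trichotomy a b with h | h | h
  · exact absurd hab (key a b ha hb h)
  · exact h
  · exact absurd hab.symm (key b a hb ha h)

theorem qform_step (hT : IsArborescence n r T) {s : Fin n} {m : ℕ}
    (hm : m < qdist r T s) :
    (qlist r T s).formPerm ((qpar r T)^[m] s) = (qpar r T)^[m + 1] s := by
  have hlen : (qlist r T s).length = qdist r T s + 1 := qlist_length s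
  have h := List.formPerm_apply_getElem (qlist r T s) (qlist_nodup hT s) m (by omega)
  rw [qlist_getElem, qlist_getElem] at h
  rwa [hlen, Nat.mod_eq_of_lt (by omega)] at h

theorem qform_last (hT : IsArborescence n r T) (s : Fin n) :
    (qlist r T s).formPerm r = s := by
  have hlen : (qlist r T s).length = qdist r T s + 1 := qlist_length s
  have h := List.formPerm_apply_getElem (qlist r T s) (qlist_nodup hT s)
    (qdist r T s) (by omega)
  rw [qlist_getElem, qlist_getElem] at h
  rw [hlen, Nat.mod_self] at h
  rwa [qdist_spec hT s, Function.iterate_zero_apply] at h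

theorem qform_inv_not_mem {s x : Fin n} (hx : x ∉ qlist r T s) :
    ((qlist r T s).formPerm)⁻¹ x = x := by
  have h := List.formPerm_apply_of_notMem hx
  nth_rewrite 1 [← h]
  exact perm_inv_apply_self _ _

theorem qform_inv_mem {s x : Fin n} (hx : x ∈ qlist r T s) :
    ((qlist r T s).formPerm)⁻¹ x ∈ qlist r T s := by
  by_contra h
  have h2 := List.formPerm_apply_of_notMem h
  rw [perm_apply_inv_self] at h2
  rw [h2] at hx
  exact h hx

theorem qg_mem_eq {s u : Fin n} (h1 : u ∈ qlist r T s) (h2 : u ≠ r) :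
    qg r T s u = ((qlist r T s).formPerm)⁻¹ u := if_pos ⟨h1, h2⟩

theorem qg_not_mem_eq {s u : Fin n} (h : ¬(u ∈ qlist r T s ∧ u ≠ r)) :
    qg r T s u = ((qlist r T s).formPerm)⁻¹ (qpar r T u) := if_neg h

theorem qpar_image (g : Fin n → Fin n) {u : Fin n} (hu : u ≠ r) :
    qpar r ((univ.erase r).image (fun u => (u, g u))) u = g u := by
  have hmem : (u, g u) ∈ (univ.erase r).image (fun u => (u, g u)) :=
    Finset.mem_image_of_mem _ (Finset.mem_erase.mpr ⟨hu, Finset.mem_univ u⟩)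
  have hex : ∃ v, (u, v) ∈ (univ.erase r).image (fun u => (u, g u)) := ⟨g u, hmem⟩
  have hsp : (u, qpar r ((univ.erase r).image (fun u => (u, g u))) u) ∈
      (univ.erase r).image (fun u => (u, g u)) := by
    rw [qpar, dif_pos hex]
    exact hex.choose_spec
  simp only [Finset.mem_image, Finset.mem_erase, Finset.mem_univ, and_true] at hsp
  obtain ⟨w, _, he⟩ := hsp
  obtain ⟨h1, h2⟩ := Prod.mk.injEq .. ▸ he
  rw [h1] at h2
  exact h2.symm

theorem arb_image (g : Fin n → Fin n) (hre : ∀ u, ∃ m, g^[m] u = r) :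
    IsArborescence n r ((univ.erase r).image (fun u => (u, g u))) := by
  refine ⟨?_, ?_, ?_⟩
  · intro e he
    simp only [Finset.mem_image, Finset.mem_erase, Finset.mem_univ, and_true] at he
    obtain ⟨w, hw, rfl⟩ := he
    exact hw
  · intro u hu
    refine ⟨g u, Finset.mem_image_of_mem _ (Finset.mem_erase.mpr ⟨hu, Finset.mem_univ u⟩), ?_⟩
    intro v hv
    simp only [Finset.mem_image, Finset.mem_erase, Finset.mem_univ, and_true] at hv
    obtain ⟨w, _, he⟩ := hv
    obtain ⟨h1, h2⟩ := Prod.mk.injEq .. ▸ he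
    rw [← h2, h1]
  · intro u
    obtain ⟨m, hm⟩ := hre u
    induction m generalizing u with
    | zero => rw [Function.iterate_zero_apply] at hm; exact hm ▸ Relation.ReflTransGen.refl
    | succ m ih =>
        by_cases hur : u = r
        · exact hur ▸ Relation.ReflTransGen.refl
        · refine Relation.ReflTransGen.head
            (Finset.mem_image_of_mem _ (Finset.mem_erase.mpr ⟨hur, Finset.mem_univ u⟩)) ?_
          exact ih (g u) (by rwa [Function.iterate_succ_apply] at hm)

end Basic

section Transform

variable {r : Fin n} {T : Finset (Fin n × Fin n)}

theorem qtr_fst (i : Fin n) (π : Equiv.Perm (Fin n)) :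
    (qtr r i π T).1 = π * (qlist r T (π⁻¹ i)).formPerm := rfl

theorem qtr_snd (i : Fin n) (π : Equiv.Perm (Fin n)) :
    (qtr r i π T).2 = (univ.erase r).image (fun u => (u, qg r T (π⁻¹ i) u)) := rfl

theorem qtr_root (hT : IsArborescence n r T) (i : Fin n) (π : Equiv.Perm (Fin n)) :
    (qtr r i π T).1 r = i := by
  rw [qtr_fst, Equiv.Perm.mul_apply, qform_last hT]
  simp

theorem qg_reach_path (hT : IsArborescence n r T) {s : Fin n} :
    ∀ m, m ≤ qdist r T s → ∃ t, (qg r T s)^[t] ((qpar r T)^[m] s) = r := by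
  intro m
  induction m with
  | zero =>
    intro _
    rw [Function.iterate_zero_apply]
    by_cases hs : s = r
    · exact ⟨0, hs⟩
    · refine ⟨1, ?_⟩
      have hmem : s ∈ qlist r T s := mem_qlist.mpr ⟨0, Nat.zero_le _, rfl⟩
      show qg r T s s = r
      rw [qg_mem_eq hmem hs, Equiv.Perm.inv_def, Equiv.symm_apply_eq, qform_last hT s]
  | succ m ih =>
    intro hm
    by_cases hx : (qpar r T)^[m + 1] s = r
    · exact ⟨0, hx⟩
    · have hmlt : m + 1 < qdist r T s :=
        lt_of_le_of_ne hm (fun h => hx (h ▸ qdist_spec hT s))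
      obtain ⟨t, ht⟩ := ih (by omega)
      refine ⟨t + 1, ?_⟩
      rw [Function.iterate_succ_apply]
      have heq : qg r T s ((qpar r T)^[m + 1] s) = (qpar r T)^[m] s := by
        rw [qg_mem_eq (mem_qlist.mpr ⟨m + 1, by omega, rfl⟩) hx,
          ← qform_step hT (show m < qdist r T s by omega), perm_inv_apply_self]
      rw [heq]
      exact ht

theorem qg_reach_mem (hT : IsArborescence n r T) {s x : Fin n} (hx : x ∈ qlist r T s) :
    ∃ t, (qg r T s)^[t] x = r := by
  rw [mem_qlist] at hx
  obtain ⟨m, hm, rfl⟩ := hx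
  exact qg_reach_path hT m hm

theorem qg_reach (hT : IsArborescence n r T) (s : Fin n) (u : Fin n) :
    ∃ t, (qg r T s)^[t] u = r := by
  have main : ∀ d u, qdist r T u ≤ d → ∃ t, (qg r T s)^[t] u = r := by
    intro d
    induction d with
    | zero =>
      intro u hu
      refine ⟨0, ?_⟩
      have h := qdist_spec hT u
      rw [Nat.le_zero.mp hu, Function.iterate_zero_apply] at h
      exact h
    | succ d ih =>
      intro u hu
      by_cases hur : u = r
      · exact ⟨0, hur⟩
      by_cases hul : u ∈ qlist r T s
      · exact qg_reach_mem hT hul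
      · have hg : qg r T s u = ((qlist r T s).formPerm)⁻¹ (qpar r T u) :=
          qg_not_mem_eq (by tauto)
        by_cases hfl : qpar r T u ∈ qlist r T s
        · obtain ⟨t, ht⟩ := qg_reach_mem hT (qform_inv_mem hfl)
          refine ⟨t + 1, ?_⟩
          rw [Function.iterate_succ_apply, hg]
          exact ht
        · have hgu : qg r T s u = qpar r T u := by rw [hg, qform_inv_not_mem hfl]
          have hku : 0 < qdist r T u := by
            rcases Nat.eq_zero_or_pos (qdist r T u) with h | h
            · exact absurd (by simpa [h] using qdist_spec hT u) hur
            · exact h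
          have hdist : qdist r T (qpar r T u) ≤ d := by
            have h1 : (qpar r T)^[qdist r T u - 1] (qpar r T u) = r := by
              rw [← Function.iterate_succ_apply, Nat.succ_eq_add_one,
                Nat.sub_add_cancel hku]
              exact qdist_spec hT u
            have := qdist_le hT h1
            omega
          obtain ⟨t, ht⟩ := ih (qpar r T u) hdist
          refine ⟨t + 1, ?_⟩
          rw [Function.iterate_succ_apply, hgu]
          exact ht
  exact main (qdist r T u) u le_rfl

theorem qtr_arb (hT : IsArborescence n r T) (i : Fin n) (π : Equiv.Perm (Fin n)) :
    IsArborescence n r (qtr r i π T).2 :=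
  arb_image _ (qg_reach hT (π⁻¹ i))

theorem qtr_factor (hT : IsArborescence n r T) (i : Fin n) (π : Equiv.Perm (Fin n))
    (u : Fin n) (hu : u ≠ r) :
    (MvPolynomial.X (u, π u) * MvPolynomial.X (u, π (qpar r T u))
      : MvPolynomial (Fin n × Fin n) ℝ) =
    MvPolynomial.X (u, (qtr r i π T).1 u) *
      MvPolynomial.X (u, (qtr r i π T).1 (qpar r (qtr r i π T).2 u)) := by
  have hp : qpar r (qtr r i π T).2 u = qg r T (π⁻¹ i) u := qpar_image _ hu
  rw [qtr_fst, hp]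
  by_cases hl : u ∈ qlist r T (π⁻¹ i)
  · rw [qg_mem_eq hl hu]
    obtain ⟨m, hm, rfl⟩ := mem_qlist.mp hl
    have hmk : m < qdist r T (π⁻¹ i) :=
      lt_of_le_of_ne hm (fun h => hu (h ▸ qdist_spec hT (π⁻¹ i)))
    have h1 : (π * (qlist r T (π⁻¹ i)).formPerm) ((qpar r T)^[m] (π⁻¹ i))
        = π (qpar r T ((qpar r T)^[m] (π⁻¹ i))) := by
      rw [Equiv.Perm.mul_apply, qform_step hT hmk, Function.iterate_succ_apply']
    have h2 : (π * (qlist r T (π⁻¹ i)).formPerm)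
        (((qlist r T (π⁻¹ i)).formPerm)⁻¹ ((qpar r T)^[m] (π⁻¹ i)))
        = π ((qpar r T)^[m] (π⁻¹ i)) := by
      rw [Equiv.Perm.mul_apply, perm_apply_inv_self]
    rw [h1, h2, mul_comm]
  · rw [qg_not_mem_eq (by tauto)]
    have h1 : (π * (qlist r T (π⁻¹ i)).formPerm) u = π u := by
      rw [Equiv.Perm.mul_apply, List.formPerm_apply_of_notMem hl]
    have h2 : (π * (qlist r T (π⁻¹ i)).formPerm)
        (((qlist r T (π⁻¹ i)).formPerm)⁻¹ (qpar r T u)) = π (qpar r T u) := by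
      rw [Equiv.Perm.mul_apply, perm_apply_inv_self]
    rw [h1, h2]

theorem qtr_id (hT : IsArborescence n r T) {i : Fin n} {π : Equiv.Perm (Fin n)}
    (h : π⁻¹ i = r) : qtr r i π T = (π, T) := by
  have hk : qdist r T r = 0 :=
    Nat.le_zero.mp (qdist_le hT (by rw [Function.iterate_zero_apply]))
  have hl : qlist r T (π⁻¹ i) = [r] := by
    rw [h, qlist, hk]
    simp
  have hσ : (qlist r T (π⁻¹ i)).formPerm = 1 := by
    rw [hl]
    exact List.formPerm_singleton r
  refine Prod.ext ?_ ?_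
  · show π * (qlist r T (π⁻¹ i)).formPerm = π
    rw [hσ, mul_one]
  · show (univ.erase r).image (fun u => (u, qg r T (π⁻¹ i) u)) = T
    conv_rhs => rw [arb_eq_image hT]
    apply Finset.image_congr
    intro u hu
    simp only [Finset.coe_erase, Set.mem_diff, Set.mem_singleton_iff] at hu
    have hnm : ¬(u ∈ qlist r T (π⁻¹ i) ∧ u ≠ r) := by
      rw [hl]
      simp only [List.mem_singleton]
      tauto
    show (u, qg r T (π⁻¹ i) u) = (u, qpar r T u)
    rw [qg_not_mem_eq hnm, hσ]
    simp

theorem qtr_qtr (hT : IsArborescence n r T) (i : Fin n) (π : Equiv.Perm (Fin n)) :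
    qtr r (π r) (qtr r i π T).1 (qtr r i π T).2 = (π, T) := by
  by_cases h0 : π⁻¹ i = r
  · rw [qtr_id hT h0]
    exact qtr_id hT (by simp)
  · have hsne : π⁻¹ i ≠ r := h0
    have hk : 0 < qdist r T (π⁻¹ i) := by
      rcases Nat.eq_zero_or_pos (qdist r T (π⁻¹ i)) with h | h
      · exact absurd (by have h' := qdist_spec hT (π⁻¹ i); rw [h, Function.iterate_zero_apply] at h'; exact h') hsne
      · exact h
    have hT' : IsArborescence n r (qtr r i π T).2 := qtr_arb hT i π
    have hf2 : ∀ u : Fin n, u ≠ r →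
        qpar r (qtr r i π T).2 u = qg r T (π⁻¹ i) u := fun u hu => qpar_image _ hu
    have hstep1 : ((qlist r T (π⁻¹ i)).formPerm)
        ((qpar r T)^[qdist r T (π⁻¹ i) - 1] (π⁻¹ i)) = r := by
      rw [qform_step hT (by omega)]
      have he : qdist r T (π⁻¹ i) - 1 + 1 = qdist r T (π⁻¹ i) := by omega
      rw [he]
      exact qdist_spec hT (π⁻¹ i)
    have hs' : ((qlist r T (π⁻¹ i)).formPerm)⁻¹ r
        = (qpar r T)^[qdist r T (π⁻¹ i) - 1] (π⁻¹ i) := by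
      rw [Equiv.Perm.inv_def, Equiv.symm_apply_eq]
      exact hstep1.symm
    have hinvs : ((qlist r T (π⁻¹ i)).formPerm)⁻¹ (π⁻¹ i) = r := by
      rw [Equiv.Perm.inv_def, Equiv.symm_apply_eq, qform_last hT (π⁻¹ i)]
    have hmem0 : π⁻¹ i ∈ qlist r T (π⁻¹ i) := mem_qlist.mpr ⟨0, by omega, rfl⟩
    have D1 : ∀ m, m ≤ qdist r T (π⁻¹ i) - 1 →
        (qpar r (qtr r i π T).2)^[m] (((qlist r T (π⁻¹ i)).formPerm)⁻¹ r)
          = (qpar r T)^[qdist r T (π⁻¹ i) - 1 - m] (π⁻¹ i) := by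
      intro m
      induction m with
      | zero =>
        intro _
        rw [Function.iterate_zero_apply, Nat.sub_zero]
        exact hs'
      | succ m ih =>
        intro hm
        rw [Function.iterate_succ_apply', ih (by omega)]
        have hne : (qpar r T)^[qdist r T (π⁻¹ i) - 1 - m] (π⁻¹ i) ≠ r :=
          qdist_min hT (by omega)
        rw [hf2 _ hne, qg_mem_eq (mem_qlist.mpr ⟨_, by omega, rfl⟩) hne]
        have h2 : ((qlist r T (π⁻¹ i)).formPerm)
            ((qpar r T)^[qdist r T (π⁻¹ i) - 1 - (m + 1)] (π⁻¹ i))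
            = (qpar r T)^[qdist r T (π⁻¹ i) - 1 - m] (π⁻¹ i) := by
          rw [qform_step hT (by omega)]
          congr 1
          omega
        rw [← h2, perm_inv_apply_self]
    have D2 : (qpar r (qtr r i π T).2)^[qdist r T (π⁻¹ i)]
        (((qlist r T (π⁻¹ i)).formPerm)⁻¹ r) = r := by
      have he : qdist r T (π⁻¹ i) = (qdist r T (π⁻¹ i) - 1) + 1 := by omega
      rw [he, Function.iterate_succ_apply', D1 _ le_rfl]
      have he2 : qdist r T (π⁻¹ i) - 1 - (qdist r T (π⁻¹ i) - 1) = 0 := by omega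
      rw [he2, Function.iterate_zero_apply, hf2 _ hsne,
        qg_mem_eq hmem0 hsne, hinvs]
    have D3 : qdist r (qtr r i π T).2 (((qlist r T (π⁻¹ i)).formPerm)⁻¹ r)
        = qdist r T (π⁻¹ i) := by
      refine le_antisymm (qdist_le hT' D2) ?_
      by_contra hlt
      push_neg at hlt
      have hsp := qdist_spec hT' (((qlist r T (π⁻¹ i)).formPerm)⁻¹ r)
      rw [D1 _ (by omega)] at hsp
      exact qdist_min hT (show qdist r T (π⁻¹ i) - 1 -
        qdist r (qtr r i π T).2 (((qlist r T (π⁻¹ i)).formPerm)⁻¹ r)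
          < qdist r T (π⁻¹ i) by omega) hsp
    have D4 : ∀ x : Fin n,
        x ∈ qlist r (qtr r i π T).2 (((qlist r T (π⁻¹ i)).formPerm)⁻¹ r)
          ↔ x ∈ qlist r T (π⁻¹ i) := by
      intro x
      rw [mem_qlist, mem_qlist, D3]
      constructor
      · rintro ⟨m, hm, rfl⟩
        by_cases hmk : m = qdist r T (π⁻¹ i)
        · subst hmk
          rw [D2]
          exact ⟨qdist r T (π⁻¹ i), le_rfl, qdist_spec hT (π⁻¹ i)⟩
        · rw [D1 m (by omega)]
          exact ⟨_, by omega, rfl⟩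
      · rintro ⟨j, hj, rfl⟩
        by_cases hjk : j = qdist r T (π⁻¹ i)
        · subst hjk
          exact ⟨qdist r T (π⁻¹ i), le_rfl, D2.trans (qdist_spec hT (π⁻¹ i)).symm⟩
        · refine ⟨qdist r T (π⁻¹ i) - 1 - j, by omega, ?_⟩
          rw [D1 _ (by omega)]
          congr 1
          omega
    have D5 : (qlist r (qtr r i π T).2 (((qlist r T (π⁻¹ i)).formPerm)⁻¹ r)).formPerm
        = ((qlist r T (π⁻¹ i)).formPerm)⁻¹ := by
      apply Equiv.ext
      intro x
      by_cases hx : x ∈ qlist r T (π⁻¹ i)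
      · obtain ⟨j, hj, rfl⟩ := mem_qlist.mp hx
        by_cases hjk : j = qdist r T (π⁻¹ i)
        · subst hjk
          rw [show (qpar r T)^[qdist r T (π⁻¹ i)] (π⁻¹ i) = r from qdist_spec hT (π⁻¹ i)]
          exact qform_last hT' _
        · have hj1 : j ≤ qdist r T (π⁻¹ i) - 1 := by omega
          have hrep : (qpar r T)^[j] (π⁻¹ i)
              = (qpar r (qtr r i π T).2)^[qdist r T (π⁻¹ i) - 1 - j]
                (((qlist r T (π⁻¹ i)).formPerm)⁻¹ r) := by
            rw [D1 _ (by omega)]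
            congr 1
            omega
          conv_lhs => rw [hrep]
          rw [qform_step hT' (by rw [D3]; omega)]
          by_cases hj0 : j = 0
          · subst hj0
            have he : qdist r T (π⁻¹ i) - 1 - 0 + 1 = qdist r T (π⁻¹ i) := by omega
            rw [he, D2]
            rw [Function.iterate_zero_apply, hinvs]
          · have he : qdist r T (π⁻¹ i) - 1 - j + 1
                = qdist r T (π⁻¹ i) - 1 - (j - 1) := by omega
            rw [he, D1 _ (by omega)]
            have he2 : qdist r T (π⁻¹ i) - 1 - (qdist r T (π⁻¹ i) - 1 - (j - 1))
                = j - 1 := by omega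
            rw [he2]
            have h2 : ((qlist r T (π⁻¹ i)).formPerm)
                ((qpar r T)^[j - 1] (π⁻¹ i)) = (qpar r T)^[j] (π⁻¹ i) := by
              rw [qform_step hT (by omega)]
              congr 1
              omega
            rw [← h2, perm_inv_apply_self]
      · have hx' : x ∉ qlist r (qtr r i π T).2 (((qlist r T (π⁻¹ i)).formPerm)⁻¹ r) :=
          fun h => hx ((D4 x).mp h)
        rw [List.formPerm_apply_of_notMem hx', qform_inv_not_mem hx]
    have harg : (qtr r i π T).1⁻¹ (π r) = ((qlist r T (π⁻¹ i)).formPerm)⁻¹ r := by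
      rw [qtr_fst]
      simp [mul_inv_rev]
    refine Prod.ext ?_ ?_
    · rw [qtr_fst, harg, D5, qtr_fst, mul_inv_cancel_right]
    · rw [qtr_snd, harg]
      conv_rhs => rw [arb_eq_image hT]
      apply Finset.image_congr
      intro u hu
      simp only [Finset.coe_erase, Set.mem_diff, Set.mem_singleton_iff] at hu
      have hune : u ≠ r := hu.2
      show (u, qg r (qtr r i π T).2 (((qlist r T (π⁻¹ i)).formPerm)⁻¹ r) u)
        = (u, qpar r T u)
      by_cases hul : u ∈ qlist r T (π⁻¹ i)
      · have hul' : u ∈ qlist r (qtr r i π T).2 (((qlist r T (π⁻¹ i)).formPerm)⁻¹ r) :=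
          (D4 u).mpr hul
        rw [qg_mem_eq hul' hune, D5, inv_inv]
        obtain ⟨j, hj, rfl⟩ := mem_qlist.mp hul
        have hjk : j < qdist r T (π⁻¹ i) :=
          lt_of_le_of_ne hj (fun h => hune (h ▸ qdist_spec hT (π⁻¹ i)))
        rw [qform_step hT hjk, Function.iterate_succ_apply']
      · have hul' : u ∉ qlist r (qtr r i π T).2 (((qlist r T (π⁻¹ i)).formPerm)⁻¹ r) :=
          fun h => hul ((D4 u).mp h)
        rw [qg_not_mem_eq (by tauto), D5, inv_inv, hf2 u hune,
          qg_not_mem_eq (by tauto), perm_apply_inv_self]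

end Transform

end QPI

/-- Fix a root `r` and for each permutation `π` define the polynomial
`Q π = (∏_{i ≠ r} X (i, π i)) · ∑_{T ∈ 𝒯_r(n)} ∏_{(u,v)∈T} X (u, π v)`
in the `n²` variables `X (u,v)`. Then for all `c, i`, the polynomial identity
`∑_{π : π r = c} Q π = ∑_{π : π r = i} Q π` holds in `ℝ[X (u,v) : u,v]`. -/
theorem q_polynomial_identity (n : ℕ) (hn : 2 ≤ n) (r : Fin n)
    (Q : Equiv.Perm (Fin n) → MvPolynomial (Fin n × Fin n) ℝ)
    (hQ : ∀ π : Equiv.Perm (Fin n),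
      Q π = (∏ i ∈ univ.erase r, MvPolynomial.X (i, π i)) *
        ∑ T ∈ univ.filter (fun T => IsArborescence n r T),
          ∏ e ∈ T, MvPolynomial.X (e.1, π e.2))
    (c i : Fin n) :
    ∑ π ∈ univ.filter (fun π : Equiv.Perm (Fin n) => π r = c), Q π
      = ∑ π ∈ univ.filter (fun π : Equiv.Perm (Fin n) => π r = i), Q π := by
  have hstep : ∀ c : Fin n,
      ∑ π ∈ univ.filter (fun π : Equiv.Perm (Fin n) => π r = c), Q π
      = ∑ p ∈ (univ.filter (fun π : Equiv.Perm (Fin n) => π r = c)) ×ˢ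
          (univ.filter (fun T => IsArborescence n r T)),
          ∏ u ∈ univ.erase r,
            (MvPolynomial.X (u, p.1 u) * MvPolynomial.X (u, p.1 (QPI.qpar r p.2 u))
              : MvPolynomial (Fin n × Fin n) ℝ) := by
    intro c
    rw [Finset.sum_product]
    refine Finset.sum_congr rfl ?_
    intro π _
    rw [hQ, Finset.mul_sum]
    refine Finset.sum_congr rfl ?_
    intro T hT
    rw [Finset.mem_filter] at hT
    have hT := hT.2
    rw [Finset.prod_mul_distrib]
    congr 1
    conv_lhs => rw [QPI.arb_eq_image hT]
    rw [Finset.prod_image]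
    intro x _ y _ hxy
    exact (Prod.mk.injEq .. ▸ hxy).1
  rw [hstep c, hstep i]
  refine Finset.sum_nbij' (fun p => QPI.qtr r i p.1 p.2) (fun p => QPI.qtr r c p.1 p.2)
    ?_ ?_ ?_ ?_ ?_
  · intro p hp
    rw [Finset.mem_product, Finset.mem_filter, Finset.mem_filter] at hp ⊢
    exact ⟨⟨Finset.mem_univ _, QPI.qtr_root hp.2.2 i p.1⟩,
      Finset.mem_univ _, QPI.qtr_arb hp.2.2 i p.1⟩
  · intro p hp
    rw [Finset.mem_product, Finset.mem_filter, Finset.mem_filter] at hp ⊢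
    exact ⟨⟨Finset.mem_univ _, QPI.qtr_root hp.2.2 c p.1⟩,
      Finset.mem_univ _, QPI.qtr_arb hp.2.2 c p.1⟩
  · intro p hp
    rw [Finset.mem_product, Finset.mem_filter, Finset.mem_filter] at hp
    have h := QPI.qtr_qtr hp.2.2 i p.1
    rw [hp.1.2] at h
    exact h
  · intro p hp
    rw [Finset.mem_product, Finset.mem_filter, Finset.mem_filter] at hp
    have h := QPI.qtr_qtr hp.2.2 c p.1
    rw [hp.1.2] at h
    exact h
  · intro p hp
    rw [Finset.mem_product, Finset.mem_filter, Finset.mem_filter] at hp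
    refine Finset.prod_congr rfl ?_
    intro u hu
    exact QPI.qtr_factor hp.2.2 i p.1 u (Finset.mem_erase.mp hu).1
end

section
/- Let n ≥ 2, r ∈ [n], let G be an r-bi-tree, and fix j ∈ [n]. Then there exists a unique matching in G of size n−1 in which the vertex j_R is unmatched; that is, a unique set of n−1 pairwise vertex-disjoint edges of G none of which is incident to j_R. -/
open Finset

/-- The adjacency relation of the bipartite graph on `Fin n ⊕ Fin n` whose edge set
is `E`: a pair `(u, v) ∈ E` represents the undirected edge between the left vertex
`u_L = Sum.inl u` and the right vertex `v_R = Sum.inr v`. -/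
def BiAdj (n : ℕ) (E : Finset (Fin n × Fin n)) :
    (Fin n ⊕ Fin n) → (Fin n ⊕ Fin n) → Prop :=
  fun p q =>
    (∃ u v, (u, v) ∈ E ∧ p = Sum.inl u ∧ q = Sum.inr v) ∨
    (∃ u v, (u, v) ∈ E ∧ p = Sum.inr v ∧ q = Sum.inl u)

/-- `E` is an `r`-bi-tree: a bipartite graph on left vertices `1_L, …, n_L` and
right vertices `1_R, …, n_R` (an edge `(u,v) ∈ E` joins `u_L` to `v_R`) such that
(i) `r_L` is isolated, (ii) all the remaining `2n − 1` vertices lie in a single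
connected component, and (iii) every left vertex `u_L` with `u ≠ r` has degree
exactly `2`. -/
def IsRBiTree (n : ℕ) (r : Fin n) (E : Finset (Fin n × Fin n)) : Prop :=
  (∀ v, (r, v) ∉ E) ∧
  (∀ a b : Fin n ⊕ Fin n, a ≠ Sum.inl r → b ≠ Sum.inl r →
    Relation.ReflTransGen (BiAdj n E) a b) ∧
  (∀ u : Fin n, u ≠ r → (E.filter (fun e => e.1 = u)).card = 2)

namespace BiTreeAux

variable {n : ℕ} {r : Fin n} {E : Finset (Fin n × Fin n)}

/-- The vertex type: everything except `r_L`. -/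
abbrev BV (n : ℕ) (r : Fin n) := {x : Fin n ⊕ Fin n // x ≠ Sum.inl r}

/-- The simple graph on `BV n r` induced by `E`. -/
def BG (n : ℕ) (r : Fin n) (E : Finset (Fin n × Fin n)) : SimpleGraph (BV n r) where
  Adj a b := BiAdj n E a.1 b.1
  symm := by
    refine ⟨?_⟩; rintro a b (⟨u, v, he, h1, h2⟩ | ⟨u, v, he, h1, h2⟩)
    · exact Or.inr ⟨u, v, he, h2, h1⟩
    · exact Or.inl ⟨u, v, he, h2, h1⟩
  loopless := by
    refine ⟨?_⟩; rintro a (⟨u, v, he, h1, h2⟩ | ⟨u, v, he, h1, h2⟩) <;> simp_all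

lemma bg_adj {a b : BV n r} : (BG n r E).Adj a b ↔ BiAdj n E a.1 b.1 := Iff.rfl

lemma biAdj_ne (hiso : ∀ v, (r, v) ∉ E) {x y : Fin n ⊕ Fin n} (h : BiAdj n E x y) :
    x ≠ Sum.inl r ∧ y ≠ Sum.inl r := by
  rcases h with ⟨u, v, he, h1, h2⟩ | ⟨u, v, he, h1, h2⟩
  · refine ⟨?_, by simp [h2]⟩
    rintro rfl
    rw [Sum.inl.injEq] at h1; subst h1
    exact hiso v he
  · refine ⟨by simp [h1], ?_⟩
    rintro rfl
    rw [Sum.inl.injEq] at h2; subst h2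
    exact hiso v he

lemma reach_lift (hiso : ∀ v, (r, v) ∉ E) {a b : Fin n ⊕ Fin n}
    (h : Relation.ReflTransGen (BiAdj n E) a b) :
    ∀ (ha : a ≠ Sum.inl r) (hb : b ≠ Sum.inl r),
      (BG n r E).Reachable ⟨a, ha⟩ ⟨b, hb⟩ := by
  induction h with
  | refl => intro ha hb; exact SimpleGraph.Reachable.refl _
  | @tail c b h1 h2 ih =>
    intro ha hb
    have hc := (biAdj_ne hiso h2).1
    exact (ih ha hc).trans (SimpleGraph.Adj.reachable (by exact h2))

/-- side indicator: 0 for left vertices, 1 for right vertices. -/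
def sid (x : BV n r) : ℕ := Sum.elim (fun _ => 0) (fun _ => 1) x.1

lemma adj_sid {x y : BV n r} (h : (BG n r E).Adj x y) : sid x + sid y = 1 := by
  rcases h with ⟨u, v, he, h1, h2⟩ | ⟨u, v, he, h1, h2⟩ <;>
    simp [sid, h1, h2]

lemma walk_parity {x y : BV n r} (w : (BG n r E).Walk x y) :
    (sid x + w.length) % 2 = sid y % 2 := by
  induction w with
  | nil => simp
  | @cons a c d h p ih =>
    have h1 : sid a + sid c = 1 := adj_sid h
    rw [SimpleGraph.Walk.length_cons]
    omega

end BiTreeAux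

open Finset BiTreeAux


open Finset BiTreeAux in
/-- In an `r`-bi-tree `G` and for any `j`, there is a unique matching of size
`n − 1` in `G` in which the right vertex `j_R` is unmatched: a unique set of
`n − 1` pairwise vertex-disjoint edges of `G`, none incident to `j_R`. -/
theorem unique_near_perfect_matching (n : ℕ) (hn : 2 ≤ n) (r : Fin n)
    (E : Finset (Fin n × Fin n)) (hE : IsRBiTree n r E) (j : Fin n) :
    ∃! M : Finset (Fin n × Fin n),
      M ⊆ E ∧ M.card = n - 1 ∧ (∀ e ∈ M, e.2 ≠ j) ∧
      (∀ e ∈ M, ∀ e' ∈ M, e ≠ e' → e.1 ≠ e'.1 ∧ e.2 ≠ e'.2) := by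
  classical
  obtain ⟨hiso, hconn0, hdeg⟩ := hE
  set T := BG n r E with hT
  set ρ : BV n r := ⟨Sum.inr j, by simp⟩ with hρdef
  -- every edge has first coordinate ≠ r
  have hne1 : ∀ e ∈ E, e.1 ≠ r := by
    rintro ⟨a, b⟩ he h
    dsimp at h
    subst h
    exact hiso b he
  -- connectivity
  have hreach : ∀ x y : BV n r, T.Reachable x y := by
    intro x y
    have := reach_lift hiso (hconn0 x.1 y.1 x.2 y.2) x.2 y.2
    simpa using this
  have hconn : T.Connected := by
    have : Nonempty (BV n r) := ⟨ρ⟩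
    exact ⟨fun x y => hreach x y⟩
  -- distance to the root
  set d : BV n r → ℕ := fun x => T.dist x ρ with hd
  have hdρ : d ρ = 0 := SimpleGraph.dist_self
  have hd0 : ∀ x : BV n r, x ≠ ρ → d x ≠ 0 := by
    intro x hx h
    exact hx ((hconn.dist_eq_zero_iff).mp h)
  have hpar : ∀ x : BV n r, (sid x + d x) % 2 = 1 % 2 := by
    intro x
    obtain ⟨w, hw⟩ := (hreach x ρ).exists_walk_length_eq_dist
    have := walk_parity w
    rw [hw] at this
    simpa [sid, ρ] using this
  -- distances of adjacent vertices differ by exactly one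
  have hadj_le : ∀ x y : BV n r, T.Adj x y → d x ≤ d y + 1 := by
    intro x y h
    obtain ⟨w, hw⟩ := (hreach y ρ).exists_walk_length_eq_dist
    have := SimpleGraph.dist_le (SimpleGraph.Walk.cons h w)
    rw [SimpleGraph.Walk.length_cons, hw] at this
    exact this
  have hadj_d : ∀ x y : BV n r, T.Adj x y → (d y + 1 = d x ∨ d x + 1 = d y) := by
    intro x y h
    have h1 := hadj_le x y h
    have h2 := hadj_le y x h.symm
    have h3 := hpar x
    have h4 := hpar y
    have h5 := adj_sid h
    omega
  -- endpoints of edges as vertices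
  set xl : Fin n × Fin n → BV n r :=
    fun e => if h : e.1 = r then ρ else ⟨Sum.inl e.1, by simp [h]⟩ with hxl
  set xr : Fin n × Fin n → BV n r := fun e => ⟨Sum.inr e.2, by simp⟩ with hxr
  have hxl_val : ∀ e ∈ E, (xl e).1 = Sum.inl e.1 := by
    intro e he
    rw [hxl]
    simp [hne1 e he]
  have hxr_val : ∀ e : Fin n × Fin n, (xr e).1 = Sum.inr e.2 := fun e => rfl
  have hadj_lr : ∀ e ∈ E, T.Adj (xl e) (xr e) := by
    intro e he
    rw [bg_adj]
    exact Or.inl ⟨e.1, e.2, he, hxl_val e he, rfl⟩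
  -- for each edge, its endpoint farther from the root
  set c : Fin n × Fin n → BV n r :=
    fun e => if d (xl e) < d (xr e) then xr e else xl e with hc
  set o : Fin n × Fin n → BV n r :=
    fun e => if d (xl e) < d (xr e) then xl e else xr e with ho
  have hc_def : ∀ e, c e = if d (xl e) < d (xr e) then xr e else xl e := fun _ => rfl
  have ho_def : ∀ e, o e = if d (xl e) < d (xr e) then xl e else xr e := fun _ => rfl
  have hco : ∀ e ∈ E, d (o e) + 1 = d (c e) ∧ T.Adj (c e) (o e) ∧
      ((c e = xl e ∧ o e = xr e) ∨ (c e = xr e ∧ o e = xl e)) := by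
    intro e he
    have h1 := hadj_d _ _ (hadj_lr e he)
    rw [hc_def, ho_def]
    by_cases h : d (xl e) < d (xr e)
    · rw [if_pos h, if_pos h]
      exact ⟨by omega, (hadj_lr e he).symm, Or.inr ⟨rfl, rfl⟩⟩
    · rw [if_neg h, if_neg h]
      exact ⟨by omega, hadj_lr e he, Or.inl ⟨rfl, rfl⟩⟩
  have hcρ : ∀ e ∈ E, c e ≠ ρ := by
    intro e he h
    have := (hco e he).1
    rw [h, hdρ] at this
    omega
  -- adjacency gives an edge
  have hadj_edge : ∀ x y : BV n r, T.Adj x y →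
      ∃ e ∈ E, (xl e = x ∧ xr e = y) ∨ (xl e = y ∧ xr e = x) := by
    intro x y h
    rcases h with ⟨u, v, he, h1, h2⟩ | ⟨u, v, he, h1, h2⟩
    · refine ⟨(u, v), he, Or.inl ⟨?_, ?_⟩⟩
      · exact Subtype.ext (by rw [hxl_val (u,v) he, ← h1])
      · exact Subtype.ext h2.symm
    · refine ⟨(u, v), he, Or.inr ⟨?_, ?_⟩⟩
      · exact Subtype.ext (by rw [hxl_val (u,v) he, ← h2])
      · exact Subtype.ext h1.symm
  -- c is determined on adjacent pairs
  have hc_of_adj : ∀ x y : BV n r, T.Adj x y → d y < d x →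
      ∀ e ∈ E, ((xl e = x ∧ xr e = y) ∨ (xl e = y ∧ xr e = x)) →
        c e = x ∧ o e = y := by
    intro x y hadj hdlt e he hxy
    rcases hxy with ⟨ha, hb⟩ | ⟨ha, hb⟩
    · have hcond : ¬ (d (xl e) < d (xr e)) := by rw [ha, hb]; omega
      rw [hc_def, ho_def, if_neg hcond, if_neg hcond, ha, hb]
      exact ⟨rfl, rfl⟩
    · have hcond : d (xl e) < d (xr e) := by rw [ha, hb]; omega
      rw [hc_def, ho_def, if_pos hcond, if_pos hcond, ha, hb]
      exact ⟨rfl, rfl⟩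
  -- surjectivity of c onto non-root vertices
  have hsurj : ∀ x : BV n r, x ≠ ρ →
      ∃ e ∈ E, c e = x ∧ T.Adj x (o e) ∧ d (o e) + 1 = d x := by
    intro x hx
    obtain ⟨w, hw⟩ := (hreach x ρ).exists_walk_length_eq_dist
    have hxne : d x ≠ 0 := hd0 x hx
    cases w with
    | nil => rw [SimpleGraph.Walk.length_nil] at hw; exact absurd hw.symm hxne
    | @cons _ z _ hadj p =>
      rw [SimpleGraph.Walk.length_cons] at hw
      have hw' : p.length + 1 = d x := hw
      have hz1 : d z ≤ p.length := SimpleGraph.dist_le p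
      have hz2 : d x ≤ d z + 1 := hadj_le x z hadj
      have hzlt : d z < d x := by omega
      obtain ⟨e, he, hxy⟩ := hadj_edge x z hadj
      obtain ⟨hce, hoe⟩ := hc_of_adj x z hadj hzlt e he hxy
      exact ⟨e, he, hce, by rw [hoe]; exact hadj, by rw [hoe]; omega⟩
  -- cardinalities
  have hcardE : E.card = 2 * n - 2 := by
    have h1 : E.card = ∑ u ∈ (univ : Finset (Fin n)), (E.filter fun e => e.1 = u).card :=
      Finset.card_eq_sum_card_fiberwise (fun e _ => mem_univ e.1)
    have h2 : (E.filter fun e => e.1 = r).card = 0 := by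
      rw [Finset.card_eq_zero, Finset.filter_eq_empty_iff]
      exact fun {e} he => hne1 e he
    have h3 : ∑ u ∈ (univ : Finset (Fin n)).erase r, (E.filter fun e => e.1 = u).card
        = ∑ u ∈ (univ : Finset (Fin n)).erase r, 2 :=
      Finset.sum_congr rfl (fun u hu => hdeg u (Finset.ne_of_mem_erase hu))
    have h4 : ((univ : Finset (Fin n)).erase r).card = n - 1 := by
      rw [Finset.card_erase_of_mem (mem_univ r), Finset.card_univ, Fintype.card_fin]
    have h5 : (E.filter fun e => e.1 = r).card
        + ∑ u ∈ (univ : Finset (Fin n)).erase r, (E.filter fun e => e.1 = u).card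
        = ∑ u ∈ (univ : Finset (Fin n)), (E.filter fun e => e.1 = u).card :=
      Finset.add_sum_erase (univ : Finset (Fin n))
        (fun u => (E.filter fun e => e.1 = u).card) (mem_univ r)
    rw [Finset.sum_const, smul_eq_mul, h4] at h3
    omega
  have hcardV : Fintype.card (BV n r) = 2 * n - 1 := by
    have : Fintype.card (BV n r)
        = Fintype.card (Fin n ⊕ Fin n) - Fintype.card {x : Fin n ⊕ Fin n // x = Sum.inl r} :=
      Fintype.card_subtype_compl _
    rw [this, Fintype.card_subtype_eq, Fintype.card_sum, Fintype.card_fin]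
    omega
  have hcardS : Fintype.card {x : BV n r // x ≠ ρ} = 2 * n - 2 := by
    have : Fintype.card {x : BV n r // x ≠ ρ}
        = Fintype.card (BV n r) - Fintype.card {x : BV n r // x = ρ} :=
      Fintype.card_subtype_compl _
    rw [this, Fintype.card_subtype_eq, hcardV]
    omega
  -- the map from edges to non-root vertices is bijective
  have hinj : ∀ e ∈ E, ∀ e' ∈ E, c e = c e' → e = e' := by
    have hF : Function.Surjective
        (fun e : {e : Fin n × Fin n // e ∈ E} => (⟨c e.1, hcρ e.1 e.2⟩ : {x : BV n r // x ≠ ρ})) := by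
      rintro ⟨x, hx⟩
      obtain ⟨e, he, hce, -, -⟩ := hsurj x hx
      exact ⟨⟨e, he⟩, Subtype.ext hce⟩
    have hcard : Fintype.card {e : Fin n × Fin n // e ∈ E}
        = Fintype.card {x : BV n r // x ≠ ρ} := by
      rw [Fintype.card_coe, hcardE, hcardS]
    have hbij := (Fintype.bijective_iff_surjective_and_card _).mpr ⟨hF, hcard⟩
    intro e he e' he' hcc
    have := hbij.1 (a₁ := ⟨e, he⟩) (a₂ := ⟨e', he'⟩) (by exact Subtype.ext (Subtype.ext (congrArg Subtype.val hcc)))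
    exact Subtype.ext_iff.mp this
  -- the parent function
  have hsurj' : ∀ x : BV n r, ∃ e : Fin n × Fin n, x ≠ ρ →
      (e ∈ E ∧ c e = x ∧ T.Adj x (o e) ∧ d (o e) + 1 = d x) := by
    intro x
    by_cases hx : x = ρ
    · exact ⟨(r, j), fun h => absurd hx h⟩
    · obtain ⟨e, he, h1, h2, h3⟩ := hsurj x hx
      exact ⟨e, fun _ => ⟨he, h1, h2, h3⟩⟩
  choose pe hpe using hsurj'
  set par : BV n r → BV n r := fun x => o (pe x) with hpar_def
  have hpar_adj : ∀ x : BV n r, x ≠ ρ → T.Adj x (par x) := fun x hx => (hpe x hx).2.2.1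
  have hpar_d : ∀ x : BV n r, x ≠ ρ → d (par x) + 1 = d x := fun x hx => (hpe x hx).2.2.2
  have hpar_uniq : ∀ x : BV n r, x ≠ ρ → ∀ y : BV n r, T.Adj x y → d y < d x → par x = y := by
    intro x hx y hadj hdlt
    obtain ⟨e, he, hxy⟩ := hadj_edge x y hadj
    obtain ⟨hce, hoe⟩ := hc_of_adj x y hadj hdlt e he hxy
    have he' : e = pe x := hinj e he (pe x) (hpe x hx).1 (by rw [hce, (hpe x hx).2.1])
    show o (pe x) = y
    rw [← he']
    exact hoe
  have hpar_excl : ∀ x y : BV n r, x ≠ ρ → y ≠ ρ → par x = y → par y ≠ x := by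
    intro x y hx hy hxy hyx
    have h1 := hpar_d x hx
    have h2 := hpar_d y hy
    rw [hxy] at h1
    rw [hyx] at h2
    omega
  have hdich : ∀ x y : BV n r, T.Adj x y → (x ≠ ρ ∧ par x = y) ∨ (y ≠ ρ ∧ par y = x) := by
    intro x y hadj
    rcases hadj_d x y hadj with h | h
    · have hx : x ≠ ρ := by
        intro h'
        rw [h', hdρ] at h
        omega
      exact Or.inl ⟨hx, hpar_uniq x hx y hadj (by omega)⟩
    · have hy : y ≠ ρ := by
        intro h'
        rw [h', hdρ] at h
        omega
      exact Or.inr ⟨hy, hpar_uniq y hy x hadj.symm (by omega)⟩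
  -- left and right vertex embeddings
  set lx : Fin n → BV n r := fun u => if h : u = r then ρ else ⟨Sum.inl u, by simp [h]⟩ with hlx
  set rx : Fin n → BV n r := fun v => ⟨Sum.inr v, by simp⟩ with hrx
  have hlx_val : ∀ u : Fin n, u ≠ r → (lx u).1 = Sum.inl u := by
    intro u hu
    rw [hlx]
    simp [hu]
  have hrx_val : ∀ v : Fin n, (rx v).1 = Sum.inr v := fun v => rfl
  have hxr_rx : ∀ e : Fin n × Fin n, xr e = rx e.2 := fun e => rfl
  have hρ_rx : ρ = rx j := rfl
  have hlx_ne : ∀ u : Fin n, u ≠ r → lx u ≠ ρ := by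
    intro u hu h
    have h2 := congrArg Subtype.val h
    rw [hlx_val u hu] at h2
    exact Sum.inl_ne_inr h2
  have hrx_ne : ∀ v : Fin n, v ≠ j → rx v ≠ ρ := by
    intro v hv h
    have h2 := congrArg Subtype.val h
    rw [hrx_val] at h2
    exact hv (Sum.inr.inj h2)
  have hrx_inj : ∀ v v' : Fin n, rx v = rx v' → v = v' := by
    intro v v' h
    have h2 := congrArg Subtype.val h
    rw [hrx_val, hrx_val] at h2
    exact Sum.inr.inj h2
  have hlx_inj : ∀ u u' : Fin n, u ≠ r → u' ≠ r → lx u = lx u' → u = u' := by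
    intro u u' hu hu' h
    have h2 := congrArg Subtype.val h
    rw [hlx_val u hu, hlx_val u' hu'] at h2
    exact Sum.inl.inj h2
  -- parent of a left vertex
  have hparL : ∀ u : Fin n, u ≠ r → (pe (lx u)).1 = u ∧ par (lx u) = rx ((pe (lx u)).2) := by
    intro u hu
    have hne := hlx_ne u hu
    obtain ⟨he, hce, -, -⟩ := hpe (lx u) hne
    obtain ⟨-, -, hcase⟩ := hco (pe (lx u)) he
    rcases hcase with ⟨h1, h2⟩ | ⟨h1, h2⟩
    · have hv : (xl (pe (lx u))).1 = (lx u).1 := by rw [← h1, hce]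
      rw [hxl_val _ he, hlx_val u hu] at hv
      refine ⟨Sum.inl.inj hv, ?_⟩
      show o (pe (lx u)) = _
      rw [h2, hxr_rx]
    · exfalso
      have hv : (xr (pe (lx u))).1 = (lx u).1 := by rw [← h1, hce]
      rw [hxr_val, hlx_val u hu] at hv
      exact Sum.inr_ne_inl hv
  set pv : Fin n → Fin n := fun u => (pe (lx u)).2 with hpv
  have hpv_mem : ∀ u : Fin n, u ≠ r → (u, pv u) ∈ E := by
    intro u hu
    have he : pe (lx u) ∈ E := (hpe (lx u) (hlx_ne u hu)).1
    have h1 : pe (lx u) = (u, pv u) := Prod.ext (hparL u hu).1 rfl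
    rwa [h1] at he
  have hpv_par : ∀ u : Fin n, u ≠ r → par (lx u) = rx (pv u) := fun u hu => (hparL u hu).2
  -- the two neighbours of a left vertex
  have hpairE : ∀ u : Fin n, ∃ v1 v2 : Fin n, u ≠ r →
      (v1 ≠ v2 ∧ ∀ v, ((u, v) ∈ E ↔ v = v1 ∨ v = v2)) := by
    intro u
    by_cases hu : u = r
    · exact ⟨j, j, fun h => absurd hu h⟩
    obtain ⟨a, b, hab, hfil⟩ := Finset.card_eq_two.mp (hdeg u hu)
    have ha : a ∈ E.filter (fun e => e.1 = u) := by rw [hfil]; simp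
    have hb : b ∈ E.filter (fun e => e.1 = u) := by rw [hfil]; simp
    rw [Finset.mem_filter] at ha hb
    refine ⟨a.2, b.2, fun _ => ⟨?_, ?_⟩⟩
    · intro h
      exact hab (Prod.ext (ha.2.trans hb.2.symm) h)
    · intro v
      constructor
      · intro hv
        have hmem : (u, v) ∈ E.filter (fun e => e.1 = u) :=
          Finset.mem_filter.mpr ⟨hv, rfl⟩
        rw [hfil, Finset.mem_insert, Finset.mem_singleton] at hmem
        rcases hmem with h | h
        · exact Or.inl (congrArg Prod.snd h)
        · exact Or.inr (congrArg Prod.snd h)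
      · rintro (rfl | rfl)
        · have : a = (u, a.2) := Prod.ext ha.2 rfl
          rw [← this]; exact ha.1
        · have : b = (u, b.2) := Prod.ext hb.2 rfl
          rw [← this]; exact hb.1
  choose nb1 nb2 hnb using hpairE
  set m : Fin n → Fin n := fun u => if pv u = nb1 u then nb2 u else nb1 u with hm
  have hm_def : ∀ u, m u = if pv u = nb1 u then nb2 u else nb1 u := fun _ => rfl
  have hpv_pair : ∀ u : Fin n, u ≠ r → pv u = nb1 u ∨ pv u = nb2 u := by
    intro u hu
    exact ((hnb u hu).2 (pv u)).mp (hpv_mem u hu)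
  have hm_ne_pv : ∀ u : Fin n, u ≠ r → m u ≠ pv u := by
    intro u hu
    rw [hm_def]
    by_cases h : pv u = nb1 u
    · rw [if_pos h, h]
      exact fun hh => (hnb u hu).1 hh.symm
    · rw [if_neg h]
      rcases hpv_pair u hu with h1 | h1
      · exact absurd h1 h
      · rw [h1]
        exact (hnb u hu).1
  have hm_mem : ∀ u : Fin n, u ≠ r → (u, m u) ∈ E := by
    intro u hu
    apply ((hnb u hu).2 (m u)).mpr
    rw [hm_def]
    by_cases h : pv u = nb1 u
    · rw [if_pos h]; exact Or.inr rfl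
    · rw [if_neg h]; exact Or.inl rfl
  have hpair2 : ∀ u : Fin n, u ≠ r → ∀ v : Fin n, ((u, v) ∈ E ↔ v = pv u ∨ v = m u) := by
    intro u hu v
    constructor
    · intro hv
      rcases ((hnb u hu).2 v).mp hv with rfl | rfl
      · by_cases h : pv u = nb1 u
        · exact Or.inl h.symm
        · right; rw [hm_def, if_neg h]
      · rcases hpv_pair u hu with h1 | h1
        · right; rw [hm_def, if_pos h1]
        · exact Or.inl h1.symm
    · rintro (rfl | rfl)
      · exact hpv_mem u hu
      · exact hm_mem u hu
  -- adjacency helpers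
  have hadjE : ∀ u v : Fin n, u ≠ r → (u, v) ∈ E → T.Adj (lx u) (rx v) := by
    intro u v hu hv
    rw [bg_adj]
    exact Or.inl ⟨u, v, hv, hlx_val u hu, rfl⟩
  have hadj_rx : ∀ (v : Fin n) (y : BV n r), T.Adj (rx v) y →
      ∃ u : Fin n, u ≠ r ∧ y = lx u ∧ (u, v) ∈ E := by
    intro v y h
    rw [bg_adj] at h
    rcases h with ⟨u', v', he, h1, h2⟩ | ⟨u', v', he, h1, h2⟩
    · rw [hrx_val] at h1
      exact absurd h1 Sum.inr_ne_inl
    · rw [hrx_val] at h1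
      have hv' : v' = v := (Sum.inr.inj h1).symm
      subst hv'
      have hu' : u' ≠ r := by
        intro hh
        exact y.2 (by rw [h2, hh])
      refine ⟨u', hu', Subtype.ext (by rw [h2, hlx_val u' hu']), he⟩
  have hm_ne_j : ∀ u : Fin n, u ≠ r → m u ≠ j := by
    intro u hu h
    have hadj1 : T.Adj (lx u) ρ := by
      rw [hρ_rx]
      exact hadjE u j hu (h ▸ hm_mem u hu)
    have hpu : par (lx u) = ρ := by
      apply hpar_uniq (lx u) (hlx_ne u hu) ρ hadj1
      rw [hdρ]
      exact Nat.pos_of_ne_zero (hd0 _ (hlx_ne u hu))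
    rw [hpv_par u hu, hρ_rx] at hpu
    exact hm_ne_pv u hu (h.trans (hrx_inj _ _ hpu).symm)
  have hm_parent : ∀ u : Fin n, u ≠ r → par (rx (m u)) = lx u := by
    intro u hu
    have hrne : rx (m u) ≠ ρ := hrx_ne _ (hm_ne_j u hu)
    have hadj1 : T.Adj (lx u) (rx (m u)) := hadjE u (m u) hu (hm_mem u hu)
    rcases hdich _ _ hadj1 with ⟨hx, hp⟩ | ⟨hy, hp⟩
    · exfalso
      rw [hpv_par u hu] at hp
      exact hm_ne_pv u hu (hrx_inj _ _ hp).symm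
    · exact hp
  have hm_unique : ∀ u : Fin n, u ≠ r → ∀ v : Fin n, v ≠ j → par (rx v) = lx u → v = m u := by
    intro u hu v hv hp
    have hrne := hrx_ne v hv
    have hadj1 : T.Adj (rx v) (lx u) := by
      rw [← hp]
      exact hpar_adj _ hrne
    obtain ⟨u', hu', hyeq, hmemE⟩ := hadj_rx v (lx u) hadj1
    have huu : u = u' := hlx_inj u u' hu hu' hyeq
    subst huu
    have hvpv : v ≠ pv u := by
      intro h
      rw [h] at hp hrne
      exact hpar_excl (lx u) (rx (pv u)) (hlx_ne u hu) hrne (hpv_par u hu) hp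
    rcases (hpair2 u hu v).mp hmemE with h | h
    · exact absurd h hvpv
    · exact h
  have hm_inj : ∀ u u' : Fin n, u ≠ r → u' ≠ r → m u = m u' → u = u' := by
    intro u u' hu hu' h
    have h1 := hm_parent u hu
    have h2 := hm_parent u' hu'
    rw [h] at h1
    exact hlx_inj u u' hu hu' (h1.symm.trans h2)
  -- the matching
  set M₀ : Finset (Fin n × Fin n) := (univ.erase r).image (fun u => (u, m u)) with hM₀
  have hM₀_mem : ∀ p : Fin n × Fin n, p ∈ M₀ ↔ ∃ u : Fin n, u ≠ r ∧ p = (u, m u) := by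
    intro p
    rw [hM₀, Finset.mem_image]
    constructor
    · rintro ⟨u, hu, rfl⟩
      exact ⟨u, (Finset.mem_erase.mp hu).1, rfl⟩
    · rintro ⟨u, hu, rfl⟩
      exact ⟨u, Finset.mem_erase.mpr ⟨hu, mem_univ u⟩, rfl⟩
  have hM₀_prop : M₀ ⊆ E ∧ M₀.card = n - 1 ∧ (∀ e ∈ M₀, e.2 ≠ j) ∧
      (∀ e ∈ M₀, ∀ e' ∈ M₀, e ≠ e' → e.1 ≠ e'.1 ∧ e.2 ≠ e'.2) := by
    refine ⟨?_, ?_, ?_, ?_⟩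
    · intro p hp
      obtain ⟨u, hu, rfl⟩ := (hM₀_mem p).mp hp
      exact hm_mem u hu
    · rw [hM₀, Finset.card_image_of_injOn (fun u _ u' _ h => congrArg Prod.fst h),
        Finset.card_erase_of_mem (mem_univ r), Finset.card_univ, Fintype.card_fin]
    · intro p hp
      obtain ⟨u, hu, rfl⟩ := (hM₀_mem p).mp hp
      exact hm_ne_j u hu
    · intro p hp p' hp' hne
      obtain ⟨u, hu, rfl⟩ := (hM₀_mem p).mp hp
      obtain ⟨u', hu', rfl⟩ := (hM₀_mem p').mp hp'
      have huu : u ≠ u' := by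
        intro h
        exact hne (by rw [h])
      exact ⟨huu, fun h => huu (hm_inj u u' hu hu' h)⟩
  refine ⟨M₀, hM₀_prop, ?_⟩
  rintro M' ⟨hsub, hcard, hj2, hmatch⟩
  have hfst_ne : ∀ e ∈ M', e.1 ≠ r := fun e he => hne1 e (hsub he)
  have himg : M'.image Prod.fst = univ.erase r := by
    apply Finset.eq_of_subset_of_card_le
    · intro u hu
      obtain ⟨e, he, rfl⟩ := Finset.mem_image.mp hu
      exact Finset.mem_erase.mpr ⟨hfst_ne e he, mem_univ _⟩
    · rw [Finset.card_erase_of_mem (mem_univ r), Finset.card_univ, Fintype.card_fin]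
      rw [Finset.card_image_of_injOn]
      · omega
      · intro e he e' he' h
        by_contra hne
        exact (hmatch e he e' he' hne).1 h
  have hex : ∀ u : Fin n, ∃ e : Fin n × Fin n, u ≠ r → (e ∈ M' ∧ e.1 = u) := by
    intro u
    by_cases hu : u = r
    · exact ⟨(r, j), fun h => absurd hu h⟩
    · have : u ∈ M'.image Prod.fst := by
        rw [himg]
        exact Finset.mem_erase.mpr ⟨hu, mem_univ u⟩
      obtain ⟨e, he, hfe⟩ := Finset.mem_image.mp this
      exact ⟨e, fun _ => ⟨he, hfe⟩⟩
  choose fe hfe using hex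
  set f : Fin n → Fin n := fun u => (fe u).2 with hfdef
  have hfmem : ∀ u : Fin n, u ≠ r → (u, f u) ∈ M' := by
    intro u hu
    have h1 := hfe u hu
    have h2 : fe u = (u, f u) := Prod.ext h1.2 rfl
    rw [← h2]
    exact h1.1
  have hsnd : ∀ e ∈ M', e = (e.1, f e.1) := by
    intro e he
    have hu := hfst_ne e he
    have h2 : (e.1, f e.1) ∈ M' := hfmem e.1 hu
    by_contra hne
    exact (hmatch e he _ h2 hne).1 rfl
  have hf_inj : ∀ u u' : Fin n, u ≠ r → u' ≠ r → f u = f u' → u = u' := by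
    intro u u' hu hu' h
    by_contra hne
    have h1 := hfmem u hu
    have h2 := hfmem u' hu'
    have hne2 : (u, f u) ≠ (u', f u') := by
      intro hh
      exact hne (congrArg Prod.fst hh)
    exact (hmatch _ h1 _ h2 hne2).2 h
  have hf_ne_j : ∀ u : Fin n, u ≠ r → f u ≠ j := fun u hu => hj2 (u, f u) (hfmem u hu)
  have hf_pair : ∀ u : Fin n, u ≠ r → f u = pv u ∨ f u = m u := by
    intro u hu
    exact (hpair2 u hu (f u)).mp (hsub (hfmem u hu))
  -- key claim : f = m
  have hfm : ∀ u : Fin n, u ≠ r → f u = m u := by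
    by_contra hcon
    push_neg at hcon
    obtain ⟨u₀, hu₀, hfu₀⟩ := hcon
    set S : Finset (Fin n) := (univ.erase r).filter (fun u => f u ≠ m u) with hS
    have hSne : S.Nonempty :=
      ⟨u₀, Finset.mem_filter.mpr ⟨Finset.mem_erase.mpr ⟨hu₀, mem_univ _⟩, hfu₀⟩⟩
    obtain ⟨u, huS, hmin⟩ := S.exists_min_image (fun u => d (rx (f u))) hSne
    have hu : u ≠ r := (Finset.mem_erase.mp (Finset.mem_filter.mp huS).1).1
    have hfu : f u ≠ m u := (Finset.mem_filter.mp huS).2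
    have hfpv : f u = pv u := (hf_pair u hu).resolve_right hfu
    have h1 : par (lx u) = rx (f u) := by rw [hfpv]; exact hpv_par u hu
    have hd1 : d (rx (f u)) + 1 = d (lx u) := by
      rw [← h1]
      exact hpar_d _ (hlx_ne u hu)
    have hvj : f u ≠ j := hf_ne_j u hu
    have hrne : rx (f u) ≠ ρ := hrx_ne _ hvj
    have hadjp : T.Adj (rx (f u)) (par (rx (f u))) := hpar_adj _ hrne
    obtain ⟨u', hu', hyeq, hmemE⟩ := hadj_rx (f u) _ hadjp
    have hne_u : u' ≠ u := by
      rintro rfl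
      exact hpar_excl (lx u') (rx (f u')) (hlx_ne u' hu') hrne h1 hyeq
    have hmu' : f u = m u' := hm_unique u' hu' (f u) hvj hyeq
    have hfu' : f u' ≠ m u' := by
      intro h
      exact hne_u (hf_inj u' u hu' hu (h.trans hmu'.symm))
    have hu'S : u' ∈ S :=
      Finset.mem_filter.mpr ⟨Finset.mem_erase.mpr ⟨hu', mem_univ u'⟩, hfu'⟩
    have hfpv' : f u' = pv u' := (hf_pair u' hu').resolve_right hfu'
    have h1' : par (lx u') = rx (f u') := by rw [hfpv']; exact hpv_par u' hu'
    have hd2 : d (rx (f u')) + 1 = d (lx u') := by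
      rw [← h1']
      exact hpar_d _ (hlx_ne u' hu')
    have hd3 : d (lx u') + 1 = d (rx (f u)) := by
      rw [← hyeq]
      exact hpar_d _ hrne
    have := hmin u' hu'S
    omega
  -- conclude
  apply Finset.Subset.antisymm
  · intro e he
    rw [hsnd e he]
    apply (hM₀_mem _).mpr
    exact ⟨e.1, hfst_ne e he, by rw [hfm e.1 (hfst_ne e he)]⟩
  · intro e he
    obtain ⟨u, hu, rfl⟩ := (hM₀_mem e).mp he
    rw [← hfm u hu]
    exact hfmem u hu
end

section
/- Let n ≥ 2 and fix r, c ∈ [n]. For a permutation π of [n] with π(r) = c and an arborescence T ∈ 𝒯_r(n), let G(π,T) be the bipartite graph on vertices 1_L,…,n_L and 1_R,…,n_R whose edge set is {(u_L, π(u)_R) : u ∈ [n], u ≠ r} ∪ {(u_L, π(v)_R) : (u,v) ∈ T}. Then the map (π,T) ↦ G(π,T) is a bijection from the set of pairs {(π,T) : π ∈ S_n, π(r) = c, T ∈ 𝒯_r(n)} onto the set of all r-bi-trees. -/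
open Finset

/-- The bipartite graph `G(π, T)` associated with a permutation `π` and an
arborescence `T`: its edges are `(u_L, π(u)_R)` for `u ≠ r` together with
`(u_L, π(v)_R)` for each directed edge `(u, v) ∈ T`. -/
def bipGraph (n : ℕ) (r : Fin n) (π : Equiv.Perm (Fin n))
    (T : Finset (Fin n × Fin n)) : Finset (Fin n × Fin n) :=
  ((univ.filter (fun u : Fin n => u ≠ r)).image (fun u => (u, π u))) ∪
    (T.image (fun e => (e.1, π e.2)))

section AuxABT

lemma biAdj_symm (n : ℕ) (E : Finset (Fin n × Fin n)) : Symmetric (BiAdj n E) := by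
  rintro p q (⟨u, v, h, rfl, rfl⟩ | ⟨u, v, h, rfl, rfl⟩)
  · exact Or.inr ⟨u, v, h, rfl, rfl⟩
  · exact Or.inl ⟨u, v, h, rfl, rfl⟩

def ABG (n : ℕ) (E : Finset (Fin n × Fin n)) : SimpleGraph (Fin n ⊕ Fin n) where
  Adj := BiAdj n E
  symm := ⟨fun _ _ h => biAdj_symm n E h⟩
  loopless := ⟨by rintro p (⟨u, v, h, rfl, h2⟩ | ⟨u, v, h, rfl, h2⟩) <;> simp at h2⟩

def sideN {n : ℕ} : Fin n ⊕ Fin n → ℕ := Sum.elim (fun _ => 1) (fun _ => 0)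

lemma adj_side {n E} {x y : Fin n ⊕ Fin n} (h : (ABG n E).Adj x y) :
    sideN x + sideN y = 1 := by
  rcases h with ⟨u, v, h, rfl, rfl⟩ | ⟨u, v, h, rfl, rfl⟩ <;> rfl

lemma walk_parity {n E} {x y : Fin n ⊕ Fin n} (w : (ABG n E).Walk x y) :
    (w.length + sideN x + sideN y) % 2 = 0 := by
  induction w with
  | nil => simp only [SimpleGraph.Walk.length_nil]; omega
  | cons h p ih =>
    have hs := adj_side h
    rw [SimpleGraph.Walk.length_cons]
    omega

lemma dist_le_succ_of_adj {n E c} {x y : Fin n ⊕ Fin n}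
    (hr : (ABG n E).Reachable c x) (h : (ABG n E).Adj x y) :
    (ABG n E).dist c y ≤ (ABG n E).dist c x + 1 := by
  obtain ⟨p, hp⟩ := hr.exists_walk_length_eq_dist
  calc (ABG n E).dist c y ≤ (p.concat h).length := SimpleGraph.dist_le _
    _ = (ABG n E).dist c x + 1 := by rw [SimpleGraph.Walk.length_concat, hp]

lemma exists_closer {n E} {c x : Fin n ⊕ Fin n}
    (hr : (ABG n E).Reachable c x) (hne : x ≠ c) :
    ∃ y, (ABG n E).Adj y x ∧ (ABG n E).dist c y + 1 = (ABG n E).dist c x := by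
  obtain ⟨p, hp⟩ := hr.symm.exists_walk_length_eq_dist
  cases p with
  | nil => exact absurd rfl hne
  | cons h q =>
    rename_i y
    refine ⟨y, h.symm, ?_⟩
    rw [SimpleGraph.Walk.length_cons] at hp
    have h1 : (ABG n E).dist c y ≤ q.length := by
      rw [SimpleGraph.dist_comm]; exact SimpleGraph.dist_le q
    have h2 : (ABG n E).dist c x ≤ (ABG n E).dist c y + 1 :=
      dist_le_succ_of_adj ⟨q.reverse⟩ h.symm
    rw [SimpleGraph.dist_comm (u := x) (v := c)] at hp
    omega

noncomputable def abd {n : ℕ} (c : Fin n) (E : Finset (Fin n × Fin n)) (x : Fin n ⊕ Fin n) : ℕ :=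
  (ABG n E).dist (Sum.inr c) x

variable {n : ℕ} {r c : Fin n} {E : Finset (Fin n × Fin n)}

lemma reach (hE : IsRBiTree n r E) {x : Fin n ⊕ Fin n} (hx : x ≠ Sum.inl r) :
    (ABG n E).Reachable (Sum.inr c) x :=
  (SimpleGraph.reachable_iff_reflTransGen _ _).2 (hE.2.1 _ _ (by simp) hx)

lemma d_left_odd (hE : IsRBiTree n r E) {u : Fin n} (hu : u ≠ r) :
    abd c E (Sum.inl u) % 2 = 1 := by
  obtain ⟨p, hp⟩ := (reach (c := c) hE (x := Sum.inl u) (by simp [hu])).exists_walk_length_eq_dist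
  have := walk_parity p
  simp only [sideN, Sum.elim_inl, Sum.elim_inr] at this
  unfold abd; omega

lemma d_right_even (hE : IsRBiTree n r E) (w : Fin n) :
    abd c E (Sum.inr w) % 2 = 0 := by
  obtain ⟨p, hp⟩ := (reach (c := c) hE (x := Sum.inr w) (by simp)).exists_walk_length_eq_dist
  have := walk_parity p
  simp only [sideN, Sum.elim_inl, Sum.elim_inr] at this
  unfold abd; omega

lemma adj_of_mem {u w : Fin n} (h : (u, w) ∈ E) :
    (ABG n E).Adj (Sum.inl u) (Sum.inr w) := Or.inl ⟨u, w, h, rfl, rfl⟩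

lemma card_E (hE : IsRBiTree n r E) : E.card = 2 * (n - 1) := by
  have h0 : ∀ e ∈ E, e.1 ∈ (univ : Finset (Fin n)) := by simp
  rw [Finset.card_eq_sum_card_fiberwise h0, ← Finset.sum_erase_add _ _ (mem_univ r)]
  have hr0 : (E.filter fun e => e.1 = r) = ∅ := by
    refine eq_empty_of_forall_notMem ?_
    rintro ⟨a, b⟩ hm
    rw [mem_filter] at hm
    have ha : a = r := hm.2
    subst ha
    exact hE.1 b hm.1
  rw [hr0]
  rw [Finset.sum_congr rfl (fun u hu => hE.2.2 u (Finset.ne_of_mem_erase hu))]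
  simp [Finset.card_erase_of_mem, mul_comm]

def Pc (c : Fin n) (E : Finset (Fin n × Fin n)) (x : Fin n ⊕ Fin n)
    (e : Fin n × Fin n) : Prop :=
  e ∈ E ∧ ((x = Sum.inl e.1 ∧ abd c E (Sum.inr e.2) + 1 = abd c E x) ∨
           (x = Sum.inr e.2 ∧ abd c E (Sum.inl e.1) + 1 = abd c E x))

lemma Pc_same {x x' : Fin n ⊕ Fin n} {e : Fin n × Fin n}
    (h : Pc c E x e) (h' : Pc c E x' e) : x = x' := by
  rcases h.2 with ⟨rfl, hd⟩ | ⟨rfl, hd⟩ <;> rcases h'.2 with ⟨rfl, hd'⟩ | ⟨rfl, hd'⟩ <;>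
    first | rfl | omega

lemma Pc_exists (hE : IsRBiTree n r E) {x : Fin n ⊕ Fin n}
    (hx1 : x ≠ Sum.inl r) (hx2 : x ≠ Sum.inr c) : ∃ e, Pc c E x e := by
  obtain ⟨y, hadj, hd⟩ := exists_closer (reach hE hx1) (by exact hx2)
  rcases hadj with ⟨u, v, he, hy, hx⟩ | ⟨u, v, he, hy, hx⟩
  · exact ⟨(u, v), he, Or.inr ⟨hx, by rw [← hy]; exact hd⟩⟩
  · exact ⟨(u, v), he, Or.inl ⟨hx, by rw [← hy]; exact hd⟩⟩

lemma Pc_unique (hE : IsRBiTree n r E) {x : Fin n ⊕ Fin n}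
    (hx1 : x ≠ Sum.inl r) (hx2 : x ≠ Sum.inr c) {e e' : Fin n × Fin n}
    (he : Pc c E x e) (he' : Pc c E x e') : e = e' := by
  classical
  set D : Finset (Fin n ⊕ Fin n) := univ \ {Sum.inl r, Sum.inr c} with hD
  have hmem : ∀ a ∈ D, a ≠ Sum.inl r ∧ a ≠ Sum.inr c := by
    intro a ha
    simp only [hD, mem_sdiff, mem_univ, true_and, mem_insert, mem_singleton] at ha
    exact ⟨fun h => ha (Or.inl h), fun h => ha (Or.inr h)⟩
  have hex : ∀ a ∈ D, ∃ e, Pc c E a e := fun a ha =>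
    Pc_exists hE (hmem a ha).1 (hmem a ha).2
  have hcard : E.card ≤ D.card := by
    have h1 : D.card = n + n - 2 := by
      rw [hD, Finset.card_sdiff_of_subset (subset_univ _)]
      simp [Finset.card_insert_of_notMem]
    have h2 := card_E hE
    have h3 : 0 < n := r.pos
    omega
  have hsurj := Finset.surj_on_of_inj_on_of_card_le (fun a ha => (hex a ha).choose)
    (fun a ha => (hex a ha).choose_spec.1)
    (fun a1 a2 ha1 ha2 heq => by
      exact Pc_same (hex a1 ha1).choose_spec (heq ▸ (hex a2 ha2).choose_spec)) hcard
  have hxD : x ∈ D := by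
    simp only [hD, mem_sdiff, mem_univ, true_and, mem_insert, mem_singleton]
    rintro (h | h) <;> [exact hx1 h; exact hx2 h]
  obtain ⟨a, ha, hae⟩ := hsurj e he.1
  obtain ⟨a', ha', hae'⟩ := hsurj e' he'.1
  have h1 : a = x := Pc_same (hae ▸ (hex a ha).choose_spec) he
  have h2 : a' = x := Pc_same (hae' ▸ (hex a' ha').choose_spec) he'
  subst h1; subst h2
  rw [hae, hae']

lemma two_nbrs (hE : IsRBiTree n r E) {u : Fin n} (hu : u ≠ r) :
    ∃ w1 w2 : Fin n, w1 ≠ w2 ∧ ∀ w, ((u, w) ∈ E ↔ (w = w1 ∨ w = w2)) := by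
  have h2 := hE.2.2 u hu
  rw [Finset.card_eq_two] at h2
  obtain ⟨e1, e2, hne, heq⟩ := h2
  have he1 : e1 ∈ E.filter (fun e => e.1 = u) := by rw [heq]; simp
  have he2 : e2 ∈ E.filter (fun e => e.1 = u) := by rw [heq]; simp
  rw [mem_filter] at he1 he2
  refine ⟨e1.2, e2.2, ?_, ?_⟩
  · intro h
    exact hne (Prod.ext (he1.2.trans he2.2.symm) h)
  · intro w
    constructor
    · intro hw
      have : (u, w) ∈ E.filter (fun e => e.1 = u) := by rw [mem_filter]; exact ⟨hw, rfl⟩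
      rw [heq, mem_insert, mem_singleton] at this
      rcases this with h | h
      · exact Or.inl (congrArg Prod.snd h)
      · exact Or.inr (congrArg Prod.snd h)
    · rintro (rfl | rfl)
      · have : (u, e1.2) = e1 := Prod.ext he1.2.symm rfl
        rw [this]; exact he1.1
      · have : (u, e2.2) = e2 := Prod.ext he2.2.symm rfl
        rw [this]; exact he2.1

open Classical in
noncomputable def parF (c : Fin n) (E : Finset (Fin n × Fin n)) (u : Fin n) : Fin n :=
  if h : ∃ w, (u, w) ∈ E ∧ abd c E (Sum.inr w) + 1 = abd c E (Sum.inl u) then h.choose else c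

open Classical in
noncomputable def chiF (c : Fin n) (E : Finset (Fin n × Fin n)) (u : Fin n) : Fin n :=
  if h : ∃ w, (u, w) ∈ E ∧ abd c E (Sum.inr w) = abd c E (Sum.inl u) + 1 then h.choose else c

lemma parF_ex (hE : IsRBiTree n r E) {u : Fin n} (hu : u ≠ r) :
    ∃ w, (u, w) ∈ E ∧ abd c E (Sum.inr w) + 1 = abd c E (Sum.inl u) := by
  obtain ⟨e, he, hcase⟩ := Pc_exists (c := c) hE (x := Sum.inl u) (by simp [hu]) (by simp)
  rcases hcase with ⟨hx, hd⟩ | ⟨hx, hd⟩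
  · have : e.1 = u := (Sum.inl.injEq _ _ ▸ hx).symm
    subst this
    exact ⟨e.2, he, hd⟩
  · exact absurd hx (by simp)

lemma parF_spec (hE : IsRBiTree n r E) {u : Fin n} (hu : u ≠ r) :
    (u, parF c E u) ∈ E ∧ abd c E (Sum.inr (parF c E u)) + 1 = abd c E (Sum.inl u) := by
  rw [parF, dif_pos (parF_ex hE hu)]
  exact (parF_ex hE hu).choose_spec

lemma parF_unique (hE : IsRBiTree n r E) {u : Fin n} (hu : u ≠ r) {w : Fin n}
    (hw : (u, w) ∈ E) (hd : abd c E (Sum.inr w) + 1 = abd c E (Sum.inl u)) :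
    w = parF c E u := by
  have h1 : Pc c E (Sum.inl u) (u, w) := ⟨hw, Or.inl ⟨rfl, hd⟩⟩
  have h2 : Pc c E (Sum.inl u) (u, parF c E u) :=
    ⟨(parF_spec hE hu).1, Or.inl ⟨rfl, (parF_spec hE hu).2⟩⟩
  exact congrArg Prod.snd (Pc_unique hE (by simp [hu]) (by simp) h1 h2)

lemma other_nbr (hE : IsRBiTree n r E) {u w : Fin n} (hu : u ≠ r)
    (hwE : (u, w) ∈ E) (hwne : w ≠ parF c E u) :
    abd c E (Sum.inr w) = abd c E (Sum.inl u) + 1 := by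
  have t1 : abd c E (Sum.inr w) ≤ abd c E (Sum.inl u) + 1 :=
    dist_le_succ_of_adj (reach hE (by simp [hu])) (adj_of_mem hwE)
  have t2 : abd c E (Sum.inl u) ≤ abd c E (Sum.inr w) + 1 :=
    dist_le_succ_of_adj (reach hE (by simp)) (adj_of_mem hwE).symm
  have t3 := d_left_odd (c := c) hE hu
  have t4 := d_right_even (c := c) hE w
  have t5 : ¬ (abd c E (Sum.inr w) + 1 = abd c E (Sum.inl u)) := fun h =>
    hwne (parF_unique hE hu hwE h)
  omega

lemma chiF_ex (hE : IsRBiTree n r E) {u : Fin n} (hu : u ≠ r) :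
    ∃ w, (u, w) ∈ E ∧ abd c E (Sum.inr w) = abd c E (Sum.inl u) + 1 := by
  obtain ⟨w1, w2, h12, hiff⟩ := two_nbrs hE hu
  have hp := parF_spec (c := c) hE hu
  rcases (hiff _).1 hp.1 with h | h
  · refine ⟨w2, (hiff w2).2 (Or.inr rfl), other_nbr hE hu ((hiff w2).2 (Or.inr rfl)) ?_⟩
    rw [h]; exact fun hh => h12 hh.symm
  · refine ⟨w1, (hiff w1).2 (Or.inl rfl), other_nbr hE hu ((hiff w1).2 (Or.inl rfl)) ?_⟩
    rw [h]; exact h12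

lemma chiF_spec (hE : IsRBiTree n r E) {u : Fin n} (hu : u ≠ r) :
    (u, chiF c E u) ∈ E ∧ abd c E (Sum.inr (chiF c E u)) = abd c E (Sum.inl u) + 1 := by
  rw [chiF, dif_pos (chiF_ex hE hu)]
  exact (chiF_ex hE hu).choose_spec

lemma chiF_unique (hE : IsRBiTree n r E) {u : Fin n} (hu : u ≠ r) {w : Fin n}
    (hw : (u, w) ∈ E) (hd : abd c E (Sum.inr w) = abd c E (Sum.inl u) + 1) :
    w = chiF c E u := by
  obtain ⟨w1, w2, h12, hiff⟩ := two_nbrs hE hu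
  have hp := parF_spec (c := c) hE hu
  have hc := chiF_spec (c := c) hE hu
  have hwp : w ≠ parF c E u := fun h => by rw [h] at hd; omega
  have hcp : chiF c E u ≠ parF c E u := fun h => by rw [h] at hc; omega
  rcases (hiff _).1 hw with rfl | rfl <;> rcases (hiff _).1 hc.1 with h1 | h1 <;>
    rcases (hiff _).1 hp.1 with h2 | h2 <;> first
      | (exact h1.symm) | (exact absurd (h1.trans h2.symm) hcp.symm ) | omega

lemma chiF_ne_c (hE : IsRBiTree n r E) {u : Fin n} (hu : u ≠ r) : chiF c E u ≠ c := by
  intro h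
  have hc := (chiF_spec (c := c) hE hu).2
  rw [h] at hc
  have : abd c E (Sum.inr c) = 0 := SimpleGraph.dist_self
  omega

lemma chiF_inj (hE : IsRBiTree n r E) {u1 u2 : Fin n} (h1 : u1 ≠ r) (h2 : u2 ≠ r)
    (heq : chiF c E u1 = chiF c E u2) : u1 = u2 := by
  have s1 := chiF_spec (c := c) hE h1
  have s2 := chiF_spec (c := c) hE h2
  rw [← heq] at s2
  have hwc : chiF c E u1 ≠ c := chiF_ne_c hE h1
  have p1 : Pc c E (Sum.inr (chiF c E u1)) (u1, chiF c E u1) := ⟨s1.1, Or.inr ⟨rfl,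
    by show abd c E (Sum.inl u1) + 1 = abd c E (Sum.inr (chiF c E u1)); omega⟩⟩
  have p2 : Pc c E (Sum.inr (chiF c E u1)) (u2, chiF c E u1) := ⟨s2.1, Or.inr ⟨rfl,
    by show abd c E (Sum.inl u2) + 1 = abd c E (Sum.inr (chiF c E u1)); omega⟩⟩
  have := Pc_unique hE (x := Sum.inr (chiF c E u1)) (by simp) (by simp [hwc]) p1 p2
  exact congrArg Prod.fst this

lemma mem_iff_parF_chiF (hE : IsRBiTree n r E) {u w : Fin n} (hu : u ≠ r) :
    (u, w) ∈ E ↔ (w = parF c E u ∨ w = chiF c E u) := by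
  constructor
  · intro hw
    by_cases h : w = parF c E u
    · exact Or.inl h
    · exact Or.inr (chiF_unique hE hu hw (other_nbr hE hu hw h))
  · rintro (rfl | rfl)
    · exact (parF_spec hE hu).1
    · exact (chiF_spec hE hu).1

lemma surj_aux (hE : IsRBiTree n r E) :
    ∃ (π : Equiv.Perm (Fin n)) (T : Finset (Fin n × Fin n)),
      π r = c ∧ IsArborescence n r T ∧ bipGraph n r π T = E := by
  classical
  set g : Fin n → Fin n := fun u => if u = r then c else chiF c E u with hg
  have hginj : Function.Injective g := by
    intro u1 u2 h
    by_cases h1 : u1 = r <;> by_cases h2 : u2 = r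
    · rw [h1, h2]
    · rw [hg] at h; simp only [h1, h2, if_pos, if_neg, if_true] at h
      exact absurd h.symm (chiF_ne_c hE h2)
    · rw [hg] at h; simp only [h1, h2, if_neg, if_true] at h
      exact absurd h (chiF_ne_c hE h1)
    · rw [hg] at h; simp only [h1, h2, if_neg] at h
      exact chiF_inj hE h1 h2 h
  have hgbij := Finite.injective_iff_bijective.mp hginj
  refine ⟨Equiv.ofBijective g hgbij, ?_⟩
  set σ := Equiv.ofBijective g hgbij with hσdef
  have hσ : ∀ u, σ u = g u := fun u => rfl
  have hσr : σ r = c := by rw [hσ, hg]; simp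
  set T := (univ.filter (fun u : Fin n => u ≠ r)).image
    (fun u => (u, σ.symm (parF c E u))) with hT
  have memT : ∀ p : Fin n × Fin n, p ∈ T ↔ p.1 ≠ r ∧ p.2 = σ.symm (parF c E p.1) := by
    rintro ⟨a, b⟩
    simp only [hT, mem_image, mem_filter, mem_univ, true_and, Prod.mk.injEq]
    constructor
    · rintro ⟨x, hx, rfl, rfl⟩; exact ⟨hx, rfl⟩
    · rintro ⟨ha, rfl⟩; exact ⟨a, ha, rfl, rfl⟩
  have reachT : ∀ k u, abd c E (Sum.inl u) = k →
      Relation.ReflTransGen (fun a b => (a, b) ∈ T) u r := by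
    intro k
    induction k using Nat.strong_induction_on with
    | _ k ih =>
      intro u hd
      by_cases hu : u = r
      · exact hu ▸ Relation.ReflTransGen.refl
      · have hvT : (u, σ.symm (parF c E u)) ∈ T := (memT _).2 ⟨hu, rfl⟩
        by_cases hv : σ.symm (parF c E u) = r
        · exact Relation.ReflTransGen.head (hv ▸ hvT) Relation.ReflTransGen.refl
        · have hσv : σ (σ.symm (parF c E u)) = chiF c E (σ.symm (parF c E u)) := by
            rw [hσ, hg]; simp [hv]
          have hpar : parF c E u = chiF c E (σ.symm (parF c E u)) := by
            rw [← hσv, σ.apply_symm_apply]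
          have h1 := (parF_spec (c := c) hE hu).2
          have h2 := (chiF_spec (c := c) hE hv).2
          rw [hpar] at h1
          have hlt : abd c E (Sum.inl (σ.symm (parF c E u))) < k := by omega
          exact Relation.ReflTransGen.head hvT (ih _ hlt _ rfl)
  refine ⟨T, hσr, ⟨?_, ?_, ?_⟩, ?_⟩
  · rintro ⟨a, b⟩ hab
    exact ((memT _).1 hab).1
  · intro u hu
    refine ⟨σ.symm (parF c E u), (memT _).2 ⟨hu, rfl⟩, ?_⟩
    intro v hv
    exact ((memT _).1 hv).2
  · intro u
    exact reachT _ u rfl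
  · ext ⟨a, b⟩
    simp only [bipGraph, mem_union, mem_image, mem_filter, mem_univ, true_and,
      Prod.mk.injEq]
    constructor
    · rintro (⟨x, hx, rfl, rfl⟩ | ⟨e, he, rfl, rfl⟩)
      · have : σ x = chiF c E x := by rw [hσ, hg]; simp [hx]
        rw [this]
        exact (chiF_spec hE hx).1
      · obtain ⟨he1, he2⟩ := (memT _).1 he
        rw [he2, σ.apply_symm_apply]
        exact (parF_spec hE he1).1
    · intro hab
      have ha : a ≠ r := by
        rintro rfl
        exact hE.1 b hab
      rcases (mem_iff_parF_chiF (c := c) hE ha).1 hab with rfl | rfl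
      · refine Or.inr ⟨(a, σ.symm (parF c E a)), (memT _).2 ⟨ha, rfl⟩, rfl, ?_⟩
        rw [σ.apply_symm_apply]
      · exact Or.inl ⟨a, ha, rfl, by rw [hσ, hg]; simp [ha]⟩

open Classical in
noncomputable def tsucc (r : Fin n) (T : Finset (Fin n × Fin n)) (u : Fin n) : Fin n :=
  if h : ∃ v, (u, v) ∈ T then h.choose else r

variable {T : Finset (Fin n × Fin n)} {π : Equiv.Perm (Fin n)}

lemma tsucc_eq (hA : IsArborescence n r T) {u v : Fin n} (h : (u, v) ∈ T) :
    v = tsucc r T u := by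
  have hu : u ≠ r := hA.1 _ h
  have hex : ∃ v, (u, v) ∈ T := ⟨v, h⟩
  rw [tsucc, dif_pos hex]
  exact (hA.2.1 u hu).unique h hex.choose_spec

lemma tsucc_mem (hA : IsArborescence n r T) {u : Fin n} (hu : u ≠ r) :
    (u, tsucc r T u) ∈ T := by
  obtain ⟨v, hv, -⟩ := hA.2.1 u hu
  exact (tsucc_eq hA hv) ▸ hv

lemma tsucc_ne_self (hA : IsArborescence n r T) {u : Fin n} (hu : u ≠ r) :
    tsucc r T u ≠ u := by
  intro h
  have key : ∀ x, Relation.ReflTransGen (fun a b => (a, b) ∈ T) x r → x ≠ u := by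
    intro x hx
    induction hx using Relation.ReflTransGen.head_induction_on with
    | refl => exact Ne.symm hu
    | head hab hbr ih =>
      rintro rfl
      exact ih (by rw [← tsucc_eq hA hab] at h; exact h ▸ rfl)
  exact key u (hA.2.2 u) rfl

lemma mem_bip (hA : IsArborescence n r T) {e : Fin n × Fin n} :
    e ∈ bipGraph n r π T ↔
      (∃ u, u ≠ r ∧ e = (u, π u)) ∨ (∃ u, u ≠ r ∧ e = (u, π (tsucc r T u))) := by
  rw [bipGraph, mem_union, mem_image, mem_image]
  constructor
  · rintro (⟨x, hx, rfl⟩ | ⟨p, hp, rfl⟩)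
    · rw [mem_filter] at hx
      exact Or.inl ⟨x, hx.2, rfl⟩
    · refine Or.inr ⟨p.1, hA.1 _ hp, ?_⟩
      rw [← tsucc_eq hA (show (p.1, p.2) ∈ T from hp)]
  · rintro (⟨u, hu, rfl⟩ | ⟨u, hu, rfl⟩)
    · exact Or.inl ⟨u, by rw [mem_filter]; exact ⟨mem_univ u, hu⟩, rfl⟩
    · exact Or.inr ⟨(u, tsucc r T u), tsucc_mem hA hu, rfl⟩

lemma edge_m (hA : IsArborescence n r T) {u : Fin n} (hu : u ≠ r) :
    (u, π u) ∈ bipGraph n r π T := (mem_bip hA).2 (Or.inl ⟨u, hu, rfl⟩)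

lemma edge_t (hA : IsArborescence n r T) {u : Fin n} (hu : u ≠ r) :
    (u, π (tsucc r T u)) ∈ bipGraph n r π T := (mem_bip hA).2 (Or.inr ⟨u, hu, rfl⟩)

lemma maps_aux (hπ : π r = c) (hA : IsArborescence n r T) :
    IsRBiTree n r (bipGraph n r π T) := by
  set E' := bipGraph n r π T with hE'
  have hc1 : ∀ v, (r, v) ∉ E' := by
    intro v hv
    rcases (mem_bip hA).1 hv with ⟨u, hu, he⟩ | ⟨u, hu, he⟩ <;>
      exact hu (congrArg Prod.fst he).symm
  have left_reach : ∀ u, Relation.ReflTransGen (fun a b => (a, b) ∈ T) u r →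
      u ≠ r → Relation.ReflTransGen (BiAdj n E') (Sum.inl u) (Sum.inr c) := by
    intro u h
    induction h using Relation.ReflTransGen.head_induction_on with
    | refl => exact fun h => absurd rfl h
    | @head a b hab hbr ih =>
      intro _
      have e1 : (a, π b) ∈ E' := mem_union_right _ (mem_image_of_mem _ hab)
      have s1 : BiAdj n E' (Sum.inl a) (Sum.inr (π b)) := Or.inl ⟨a, π b, e1, rfl, rfl⟩
      by_cases hb : b = r
      · subst hb
        rw [hπ] at s1
        exact Relation.ReflTransGen.single s1
      · have e2 : (b, π b) ∈ E' := edge_m hA hb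
        have s2 : BiAdj n E' (Sum.inr (π b)) (Sum.inl b) := Or.inr ⟨b, π b, e2, rfl, rfl⟩
        exact Relation.ReflTransGen.head s1 (Relation.ReflTransGen.head s2 (ih hb))
  have reach_c : ∀ x : Fin n ⊕ Fin n, x ≠ Sum.inl r →
      Relation.ReflTransGen (BiAdj n E') x (Sum.inr c) := by
    rintro (u | w) hx
    · exact left_reach u (hA.2.2 u) (fun h => hx (congrArg Sum.inl h))
    · by_cases hw : π.symm w = r
      · have : w = c := by rw [← hπ, ← hw, Equiv.apply_symm_apply]
        rw [this]
      · have e2 : (π.symm w, w) ∈ E' := by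
          have := edge_m (π := π) hA hw
          rwa [Equiv.apply_symm_apply] at this
        have s2 : BiAdj n E' (Sum.inr w) (Sum.inl (π.symm w)) :=
          Or.inr ⟨π.symm w, w, e2, rfl, rfl⟩
        exact Relation.ReflTransGen.head s2
          (left_reach _ (hA.2.2 _) hw)
  refine ⟨hc1, ?_, ?_⟩
  · intro a b ha hb
    exact Relation.ReflTransGen.trans (reach_c a ha)
      ((@Relation.ReflTransGen.symmetric _ (BiAdj n E') ⟨fun _ _ h => biAdj_symm n E' h⟩).symm _ _ (reach_c b hb))
  · intro u hu
    have hfe : E'.filter (fun e => e.1 = u) = {(u, π u), (u, π (tsucc r T u))} := by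
      ext e
      simp only [mem_filter, mem_insert, mem_singleton]
      constructor
      · rintro ⟨hm, h1⟩
        rcases (mem_bip hA).1 hm with ⟨v, hv, rfl⟩ | ⟨v, hv, rfl⟩
        · simp only at h1; subst h1; exact Or.inl rfl
        · simp only at h1; subst h1; exact Or.inr rfl
      · rintro (rfl | rfl)
        · exact ⟨edge_m hA hu, rfl⟩
        · exact ⟨edge_t hA hu, rfl⟩
    rw [hfe, card_insert_of_notMem, card_singleton]
    simp only [mem_singleton, Prod.mk.injEq, true_and]
    intro h
    exact tsucc_ne_self hA hu (π.injective h.symm)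

open Classical in
noncomputable def dep (r : Fin n) (T : Finset (Fin n × Fin n)) (u : Fin n) : ℕ :=
  if h : ∃ k, (tsucc r T)^[k] u = r then Nat.find h else 0

lemma dep_ex (hA : IsArborescence n r T) (u : Fin n) :
    ∃ k, (tsucc r T)^[k] u = r := by
  have h := hA.2.2 u
  induction h using Relation.ReflTransGen.head_induction_on with
  | refl => exact ⟨0, rfl⟩
  | @head a b hab hbr ih =>
    obtain ⟨k, hk⟩ := ih
    exact ⟨k + 1, by rw [Function.iterate_succ_apply, ← tsucc_eq hA hab]; exact hk⟩

lemma dep_spec (hA : IsArborescence n r T) (u : Fin n) :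
    (tsucc r T)^[dep r T u] u = r := by
  rw [dep, dif_pos (dep_ex hA u)]
  exact Nat.find_spec (dep_ex hA u)

lemma dep_r (hA : IsArborescence n r T) : dep r T r = 0 := by
  rw [dep, dif_pos ⟨0, rfl⟩]
  exact (Nat.find_eq_zero _).2 rfl

lemma dep_pos (hA : IsArborescence n r T) {u : Fin n} (hu : u ≠ r) :
    dep r T u ≠ 0 := by
  intro h0
  have := dep_spec hA u
  rw [h0] at this
  exact hu this

lemma dep_t (hA : IsArborescence n r T) {u : Fin n} (hu : u ≠ r) :
    dep r T (tsucc r T u) + 1 = dep r T u := by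
  have hp := dep_pos hA hu
  have hkey : (tsucc r T)^[dep r T u - 1] (tsucc r T u) = r := by
    rw [← Function.iterate_succ_apply]
    rw [show Nat.succ (dep r T u - 1) = dep r T u from by omega]
    exact dep_spec hA u
  have h1 : dep r T (tsucc r T u) ≤ dep r T u - 1 := by
    rw [dep, dif_pos ⟨dep r T u - 1, hkey⟩]
    exact Nat.find_le hkey
  have h2 : dep r T u ≤ dep r T (tsucc r T u) + 1 := by
    rw [dep, dif_pos (dep_ex hA u)]
    apply Nat.find_le
    rw [Function.iterate_succ_apply]
    exact dep_spec hA (tsucc r T u)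
  omega

noncomputable def pot (r c : Fin n) (T : Finset (Fin n × Fin n)) (π : Equiv.Perm (Fin n)) :
    Fin n ⊕ Fin n → ℕ :=
  Sum.elim (fun u => 2 * dep r T u - 1) (fun w => 2 * dep r T (π.symm w))

lemma ub_dist (hπ : π r = c) (hA : IsArborescence n r T) :
    ∀ k u, dep r T u = k →
      (u ≠ r → abd c (bipGraph n r π T) (Sum.inl u) + 1 ≤ 2 * k) ∧
      abd c (bipGraph n r π T) (Sum.inr (π u)) ≤ 2 * k := by
  have hE' := maps_aux hπ hA
  intro k
  induction k using Nat.strong_induction_on with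
  | _ k ih =>
    intro u hdep
    by_cases hu : u = r
    · refine ⟨fun h => absurd hu h, ?_⟩
      rw [hu, hπ]
      have : abd c (bipGraph n r π T) (Sum.inr c) = 0 := SimpleGraph.dist_self
      omega
    · have ht := dep_t hA hu
      have hp := dep_pos hA hu
      have ihs := ih (k - 1) (by omega) (tsucc r T u) (by omega)
      have hA1 : abd c (bipGraph n r π T) (Sum.inl u) ≤
          abd c (bipGraph n r π T) (Sum.inr (π (tsucc r T u))) + 1 :=
        dist_le_succ_of_adj (reach hE' (by simp)) (adj_of_mem (edge_t hA hu)).symm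
      have hA2 : abd c (bipGraph n r π T) (Sum.inr (π u)) ≤
          abd c (bipGraph n r π T) (Sum.inl u) + 1 :=
        dist_le_succ_of_adj (reach hE' (by simp [hu])) (adj_of_mem (edge_m hA hu))
      exact ⟨fun _ => by omega, by omega⟩

lemma lip (hπ : π r = c) (hA : IsArborescence n r T) {x y : Fin n ⊕ Fin n}
    (hadj : (ABG n (bipGraph n r π T)).Adj x y) :
    pot r c T π x ≤ pot r c T π y + 1 := by
  rcases hadj with ⟨u, w, he, rfl, rfl⟩ | ⟨u, w, he, rfl, rfl⟩ <;>
  · rcases (mem_bip hA).1 he with ⟨u', hu', heq⟩ | ⟨u', hu', heq⟩ <;>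
    · rw [Prod.mk.injEq] at heq
      obtain ⟨rfl, rfl⟩ := heq
      have hp := dep_pos hA hu'
      simp only [pot, Sum.elim_inl, Sum.elim_inr, Equiv.symm_apply_apply]
      first
        | omega
        | (have ht := dep_t hA hu'; omega)

lemma lb_dist (hπ : π r = c) (hA : IsArborescence n r T) :
    ∀ {x y : Fin n ⊕ Fin n} (w : (ABG n (bipGraph n r π T)).Walk x y),
      y = Sum.inr c → pot r c T π x ≤ w.length := by
  intro x y w
  induction w with
  | nil =>
    rintro rfl
    have : π.symm c = r := by rw [← hπ, Equiv.symm_apply_apply]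
    simp [pot, this, dep_r hA]
  | cons h p ih =>
    intro hy
    have := lip hπ hA h
    rw [SimpleGraph.Walk.length_cons]
    have := ih hy
    omega

lemma d_eq (hπ : π r = c) (hA : IsArborescence n r T) {u : Fin n} (hu : u ≠ r) :
    abd c (bipGraph n r π T) (Sum.inl u) + 1 = 2 * dep r T u ∧
    abd c (bipGraph n r π T) (Sum.inr (π u)) = 2 * dep r T u := by
  have hE' := maps_aux hπ hA
  have hub := ub_dist hπ hA (dep r T u) u rfl
  have hp := dep_pos hA hu
  obtain ⟨p1, hp1⟩ := (reach (c := c) hE' (x := Sum.inl u) (by simp [hu])).symm.exists_walk_length_eq_dist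
  obtain ⟨p2, hp2⟩ := (reach (c := c) hE' (x := Sum.inr (π u)) (by simp)).symm.exists_walk_length_eq_dist
  have hl1 := lb_dist hπ hA p1 rfl
  have hl2 := lb_dist hπ hA p2 rfl
  rw [hp1, SimpleGraph.dist_comm] at hl1
  rw [hp2, SimpleGraph.dist_comm] at hl2
  simp only [pot, Sum.elim_inl, Sum.elim_inr, Equiv.symm_apply_apply] at hl1 hl2
  unfold abd at *
  exact ⟨by omega, by omega⟩

lemma par_eq (hπ : π r = c) (hA : IsArborescence n r T) {u : Fin n} (hu : u ≠ r) :
    parF c (bipGraph n r π T) u = π (tsucc r T u) := by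
  have hE' := maps_aux hπ hA
  refine (parF_unique hE' hu (edge_t hA hu) ?_).symm
  have h1 := (d_eq hπ hA hu).1
  by_cases htr : tsucc r T u = r
  · rw [htr, hπ]
    have h0 : abd c (bipGraph n r π T) (Sum.inr c) = 0 := SimpleGraph.dist_self
    have hd1 : dep r T u = 1 := by
      have := dep_t hA hu
      rw [htr, dep_r hA] at this
      omega
    omega
  · have h2 := (d_eq hπ hA htr).2
    have ht := dep_t hA hu
    omega

lemma chi_eq (hπ : π r = c) (hA : IsArborescence n r T) {u : Fin n} (hu : u ≠ r) :
    chiF c (bipGraph n r π T) u = π u := by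
  have hE' := maps_aux hπ hA
  refine (chiF_unique hE' hu (edge_m hA hu) ?_).symm
  have h1 := (d_eq hπ hA hu).1
  have h2 := (d_eq hπ hA hu).2
  omega

lemma mem_T_iff (hA : IsArborescence n r T) {a b : Fin n} :
    (a, b) ∈ T ↔ a ≠ r ∧ b = tsucc r T a := by
  constructor
  · intro h
    exact ⟨hA.1 _ h, tsucc_eq hA h⟩
  · rintro ⟨ha, rfl⟩
    exact tsucc_mem hA ha


end AuxABT

/-- **The bijection between (matching, arborescence) pairs and `r`-bi-trees.**
The map `(π, T) ↦ G(π, T)` is a bijection from the set of pairs consisting of a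
permutation `π` with `π r = c` and an arborescence `T` rooted at `r`, onto the set
of all `r`-bi-trees. -/
theorem arborescence_bitree_bijection (n : ℕ) (hn : 2 ≤ n) (r c : Fin n) :
    Set.BijOn
      (fun p : Equiv.Perm (Fin n) × Finset (Fin n × Fin n) => bipGraph n r p.1 p.2)
      {p | p.1 r = c ∧ IsArborescence n r p.2}
      {E | IsRBiTree n r E} := by
  refine ⟨?_, ?_, ?_⟩
  · rintro ⟨π, T⟩ ⟨hπ, hA⟩
    exact maps_aux hπ hA
  · rintro ⟨π1, T1⟩ ⟨hπ1, hA1⟩ ⟨π2, T2⟩ ⟨hπ2, hA2⟩ heq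
    simp only at heq hπ1 hπ2 hA1 hA2
    have hπeq : π1 = π2 := by
      ext u
      by_cases hu : u = r
      · rw [hu, hπ1, hπ2]
      · rw [← chi_eq hπ1 hA1 hu, ← chi_eq hπ2 hA2 hu, heq]
    have htq : ∀ u, u ≠ r → tsucc r T1 u = tsucc r T2 u := by
      intro u hu
      apply π1.injective
      rw [← par_eq hπ1 hA1 hu, heq, par_eq hπ2 hA2 hu, hπeq]
    have hTeq : T1 = T2 := by
      ext ⟨a, b⟩
      rw [mem_T_iff hA1, mem_T_iff hA2]
      constructor
      · rintro ⟨ha, rfl⟩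
        exact ⟨ha, htq a ha⟩
      · rintro ⟨ha, rfl⟩
        exact ⟨ha, (htq a ha).symm⟩
    exact Prod.ext hπeq hTeq
  · rintro E hE
    obtain ⟨π, T, hπ, hA, hbip⟩ := surj_aux hE
    exact ⟨(π, T), ⟨hπ, hA⟩, hbip⟩
end

section
/- Let P ⊆ [0,1]^n be a polytope (the convex hull of a nonempty finite set) with P ∩ (0,1)^n ≠ ∅. Suppose that every point of P lying in the relative frontier of P (that is, in P but not in the relative interior of P within its affine span) has at least one coordinate equal to 0 or to 1. Then P equals the intersection of its affine span with the cube: P = affineSpan(P) ∩ [0,1]^n. -/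
open Finset

/-- Let `P ⊆ [0,1]ⁿ` be a polytope meeting the open cube `(0,1)ⁿ`. If every point
of the relative frontier of `P` (a point of `P` not in its relative interior) has
some coordinate equal to `0` or `1`, then `P` is the intersection of its affine
span with the cube `[0,1]ⁿ`. -/
theorem polytope_eq_affine_inter_cube (n : ℕ) (V : Finset (Fin n → ℝ)) (hV : V.Nonempty)
    (P : Set (Fin n → ℝ)) (hP : P = convexHull ℝ (V : Set (Fin n → ℝ)))
    (hcube : ∀ x ∈ P, ∀ i, x i ∈ Set.Icc (0 : ℝ) 1)
    (hint : ∃ x ∈ P, ∀ i, x i ∈ Set.Ioo (0 : ℝ) 1)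
    (hfrontier : ∀ x ∈ P, x ∉ intrinsicInterior ℝ P → ∃ i, x i = 0 ∨ x i = 1) :
    P = (affineSpan ℝ P : Set (Fin n → ℝ)) ∩ {x | ∀ i, x i ∈ Set.Icc (0 : ℝ) 1} := by
  have hPclosed : IsClosed P := by
    rw [hP]
    exact (V.finite_toSet.isCompact_convexHull (𝕜 := ℝ)).isClosed
  apply Set.Subset.antisymm
  · intro p hp
    exact ⟨subset_affineSpan ℝ P hp, hcube p hp⟩
  · rintro y ⟨hyspan, hycube⟩
    by_contra hyP
    obtain ⟨x, hxP, hxopen⟩ := hint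
    set f : ℝ → (Fin n → ℝ) := fun t => t • (y - x) + x with hf
    have hfmem : ∀ t, f t ∈ affineSpan ℝ P := by
      intro t
      have := AffineSubspace.smul_vsub_vadd_mem (affineSpan ℝ P) t hyspan
        (subset_affineSpan ℝ P hxP) (subset_affineSpan ℝ P hxP)
      simpa [vsub_eq_sub] using this
    have hfcont : Continuous f := by
      exact (continuous_id.smul continuous_const).add continuous_const
    set S : Set ℝ := Set.Icc (0:ℝ) 1 ∩ f ⁻¹' P with hSdef
    have hS0 : (0:ℝ) ∈ S := by
      constructor
      · exact ⟨le_refl 0, zero_le_one⟩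
      · simp [f, hxP]
    have hSbdd : BddAbove S := BddAbove.mono (Set.inter_subset_left) bddAbove_Icc
    have hSclosed : IsClosed S := isClosed_Icc.inter (hPclosed.preimage hfcont)
    set T : ℝ := sSup S with hTdef
    have hTS : T ∈ S := hSclosed.csSup_mem ⟨0, hS0⟩ hSbdd
    have hT0 : 0 ≤ T := hTS.1.1
    have hT1le : T ≤ 1 := hTS.1.2
    have hfTP : f T ∈ P := hTS.2
    have hT1 : T < 1 := by
      rcases lt_or_eq_of_le hT1le with h | h
      · exact h
      · exfalso
        apply hyP
        have : f 1 = y := by simp [f]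
        rw [h] at hfTP
        rwa [this] at hfTP
    have hnotint : f T ∉ intrinsicInterior ℝ P := by
      intro hmem
      obtain ⟨w, hw, hwz⟩ := hmem
      set g : ℝ → (affineSpan ℝ P : Set (Fin n → ℝ)) := fun t => ⟨f t, hfmem t⟩ with hg
      have hgcont : Continuous g := hfcont.subtype_mk _
      have hgT : g T = w := Subtype.ext hwz.symm
      have hU : IsOpen (g ⁻¹' interior ((Subtype.val : (affineSpan ℝ P : Set (Fin n → ℝ)) → _) ⁻¹' P)) :=
        isOpen_interior.preimage hgcont
      have hTU : T ∈ g ⁻¹' interior ((Subtype.val : (affineSpan ℝ P : Set (Fin n → ℝ)) → _) ⁻¹' P) := by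
        simp only [Set.mem_preimage, hgT]; exact hw
      obtain ⟨ε, hε, hball⟩ := Metric.isOpen_iff.mp hU T hTU
      set t : ℝ := min (T + ε/2) 1 with ht
      have htT : T < t := lt_min (by linarith) hT1
      have htball : t ∈ Metric.ball T ε := by
        rw [Metric.mem_ball, Real.dist_eq, abs_of_nonneg (by linarith)]
        have : t ≤ T + ε/2 := min_le_left _ _
        linarith
      have htP : f t ∈ P := by
        have := hball htball
        simpa using interior_subset this
      have htS : t ∈ S := ⟨⟨by linarith, min_le_right _ _⟩, htP⟩
      have : t ≤ T := le_csSup hSbdd htS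
      linarith
    obtain ⟨i, hi⟩ := hfrontier (f T) hfTP hnotint
    have hfTi : f T i = T * (y i - x i) + x i := by simp [f]
    obtain ⟨hx0, hx1⟩ := hxopen i
    obtain ⟨hy0, hy1⟩ := hycube i
    rcases hi with h | h <;> rw [hfTi] at h <;> nlinarith
end
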